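/- arXiv:2305.11043 — 4 statements merged into one kernel-verified Lean document; each statement's English description precedes it below -/
import Mathlib

section
/- Let F be a graph without isolated vertices with v vertices, ℓ edges, and minimum degree δ ≥ 2. Then for every integer n ≥ v, wsat(n,F) ≥ (δ/2 − 1/(δ+1))·(n − v) + ℓ − 1. -/
open SimpleGraph

/-- One step of `F`-bootstrap percolation: `G'` is obtained from `G` by adding a single
missing edge that lies in a copy of `F` in `G'`. -/
def BootStep {α β : Type*} (F : SimpleGraph α) (G G' : SimpleGraph β) : Prop :=
  ∃ x y : β, x ≠ y ∧ ¬ G.Adj x y ∧ G' = G ⊔ SimpleGraph.fromEdgeSet {s(x, y)} ∧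
    ∃ φ : F →g G', Function.Injective φ ∧ ∃ u w : α, F.Adj u w ∧ φ u = x ∧ φ w = y

/-- `H` is weakly `F`-saturated: some `F`-bootstrap percolation process leads from `H`
to the complete graph. -/
def WeaklySat {α β : Type*} (F : SimpleGraph α) (H : SimpleGraph β) : Prop :=
  Relation.ReflTransGen (BootStep F) H ⊤

/-- The weak saturation number: minimum number of edges of a weakly `F`-saturated
graph on `n` vertices. -/
noncomputable def wsat {α : Type*} (F : SimpleGraph α) (n : ℕ) : ℕ :=
  sInf { m | ∃ H : SimpleGraph (Fin n), WeaklySat F H ∧ H.edgeSet.ncard = m }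

/-- `eMin F i` : the minimum, over `i`-element vertex subsets `S`, of the number of edges of
`F` with at least one endpoint in `S`, minus 1 (and `0` for `i = 0`). -/
noncomputable def eMin {α : Type*} (F : SimpleGraph α) (i : ℕ) : ℕ :=
  if i = 0 then 0
  else sInf { m | ∃ S : Set α, S.ncard = i ∧ {e ∈ F.edgeSet | ∃ x ∈ S, x ∈ e}.ncard = m } - 1

/-- `gstar F r i` : minimum of `e_{i₁} + … + e_{i_s}` over all decompositions
`i = i₁ + … + i_s` with `1 ≤ i_j ≤ v - r`. -/
noncomputable def gstar {α : Type*} [Fintype α] (F : SimpleGraph α) (r i : ℕ) : ℕ :=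
  if i = 0 then 0
  else sInf { m | ∃ L : List ℕ, (∀ j ∈ L, 1 ≤ j ∧ j ≤ Fintype.card α - r) ∧
    L.sum = i ∧ (L.map (eMin F)).sum = m }

/-- The set `𝒦` of indices `i ∈ {1,…,v}` admitting no nontrivial decomposition
`i = i₁ + … + i_s` (`s ≥ 2`) with `e_i ≥ e_{i₁} + … + e_{i_s}`. -/
noncomputable def Kset {α : Type*} [Fintype α] (F : SimpleGraph α) : Set ℕ :=
  { i | 1 ≤ i ∧ i ≤ Fintype.card α ∧
    ¬ ∃ L : List ℕ, 2 ≤ L.length ∧ (∀ j ∈ L, 1 ≤ j) ∧ L.sum = i ∧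
      (L.map (eMin F)).sum ≤ eMin F i }

/-- `betaF F` : minimum number of vertices whose deletion leaves a graph with a cut-edge. -/
noncomputable def betaF {α : Type*} [Fintype α] (F : SimpleGraph α) : ℕ :=
  sInf { k | ∃ S : Set α, S.ncard = k ∧ ∃ e, (F.induce Sᶜ).IsBridge e }

/-- A graph is 2-edge-connected if it stays connected after deleting at most one edge. -/
def TwoEdgeConnected {α : Type*} (F : SimpleGraph α) : Prop :=
  ∀ s : Set (Sym2 α), s.ncard ≤ 1 → (F.deleteEdges s).Connected


open SimpleGraph Finset
set_option linter.unusedSectionVars false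

section Aux

variable {γ : Type*} [Fintype γ] [DecidableEq γ] (K : SimpleGraph γ) [DecidableRel K.Adj]

lemma sum_degree_eq (A : Finset γ) :
    ∑ x ∈ A, K.degree x = ∑ e ∈ K.edgeFinset, (A.filter (· ∈ e)).card := by
  calc ∑ x ∈ A, K.degree x
      = ∑ x ∈ A, ∑ e ∈ K.edgeFinset, if x ∈ e then 1 else 0 := by
        refine Finset.sum_congr rfl fun x _ => ?_
        rw [← card_incidenceFinset_eq_degree, incidenceFinset_eq_filter,
          Finset.card_filter]
    _ = ∑ e ∈ K.edgeFinset, ∑ x ∈ A, if x ∈ e then 1 else 0 := Finset.sum_comm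
    _ = _ := by
        refine Finset.sum_congr rfl fun e _ => ?_
        rw [Finset.card_filter]

lemma cnt_le_two (A : Finset γ) (e : Sym2 γ) : (A.filter (· ∈ e)).card ≤ 2 := by
  induction e using Sym2.ind with
  | _ a b =>
    refine le_trans (Finset.card_le_card fun z hz => ?_)
      ((Finset.card_insert_le a {b}).trans (by simp))
    simp only [Finset.mem_filter, Sym2.mem_iff] at hz
    rcases hz.2 with rfl | rfl <;> simp

lemma cnt_eq_zero (A : Finset γ) (e : Sym2 γ) (h : ¬ ∃ z ∈ e, z ∈ A) :
    (A.filter (· ∈ e)).card = 0 := by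
  rw [Finset.card_eq_zero]
  ext z
  simp only [Finset.mem_filter, Finset.notMem_empty, iff_false, not_and]
  intro hz hze
  exact h ⟨z, hze, hz⟩

lemma cnt_le_one (A : Finset γ) (e : Sym2 γ) (h : ¬ ∀ z ∈ e, z ∈ A) :
    (A.filter (· ∈ e)).card ≤ 1 := by
  induction e using Sym2.ind with
  | _ a b =>
    push_neg at h
    obtain ⟨z, hze, hzA⟩ := h
    rw [Sym2.mem_iff] at hze
    rw [Finset.card_le_one]
    intro p hp q hq
    simp only [Finset.mem_filter, Sym2.mem_iff] at hp hq
    rcases hze with rfl | rfl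
    · rcases hp.2 with rfl | rfl
      · exact absurd hp.1 hzA
      · rcases hq.2 with rfl | rfl
        · exact absurd hq.1 hzA
        · rfl
    · rcases hp.2 with rfl | rfl
      · rcases hq.2 with rfl | rfl
        · rfl
        · exact absurd hq.1 hzA
      · exact absurd hp.1 hzA

end Aux
set_option linter.unusedSectionVars false

section Aux2

variable {γ : Type*} [Fintype γ] [DecidableEq γ] (K : SimpleGraph γ) [DecidableRel K.Adj]

lemma count_Ca (A : Finset γ) :
    ∑ x ∈ A, K.degree x ≤ 2 * (K.edgeFinset.filter (fun e => ∃ z ∈ e, z ∈ A)).card := by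
  rw [sum_degree_eq]
  rw [← Finset.sum_filter_add_sum_filter_not K.edgeFinset (fun e => ∃ z ∈ e, z ∈ A)]
  have h2 : ∑ e ∈ K.edgeFinset.filter (fun e => ¬ ∃ z ∈ e, z ∈ A),
      (A.filter (· ∈ e)).card = 0 := by
    refine Finset.sum_eq_zero fun e he => ?_
    exact cnt_eq_zero A e (Finset.mem_filter.mp he).2
  rw [h2, add_zero, two_mul]
  calc ∑ e ∈ K.edgeFinset.filter (fun e => ∃ z ∈ e, z ∈ A), (A.filter (· ∈ e)).card
      ≤ ∑ _e ∈ K.edgeFinset.filter (fun e => ∃ z ∈ e, z ∈ A), 2 :=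
        Finset.sum_le_sum fun e _ => cnt_le_two A e
    _ = _ := by rw [Finset.sum_const, smul_eq_mul, mul_comm, two_mul]

lemma count_Cb (A : Finset γ) :
    ∑ x ∈ A, K.degree x ≤ (K.edgeFinset.filter (fun e => ∃ z ∈ e, z ∈ A)).card
      + (K.edgeFinset.filter (fun e => ∀ z ∈ e, z ∈ A)).card := by
  rw [sum_degree_eq]
  rw [← Finset.sum_filter_add_sum_filter_not K.edgeFinset (fun e => ∃ z ∈ e, z ∈ A)]
  have h2 : ∑ e ∈ K.edgeFinset.filter (fun e => ¬ ∃ z ∈ e, z ∈ A),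
      (A.filter (· ∈ e)).card = 0 := by
    refine Finset.sum_eq_zero fun e he => ?_
    exact cnt_eq_zero A e (Finset.mem_filter.mp he).2
  rw [h2, add_zero]
  set ET := K.edgeFinset.filter (fun e => ∃ z ∈ e, z ∈ A) with hET
  rw [← Finset.sum_filter_add_sum_filter_not ET (fun e => ∀ z ∈ e, z ∈ A)]
  have hb1 : ∑ e ∈ ET.filter (fun e => ∀ z ∈ e, z ∈ A), (A.filter (· ∈ e)).card
      ≤ 2 * (ET.filter (fun e => ∀ z ∈ e, z ∈ A)).card := by
    calc ∑ e ∈ ET.filter (fun e => ∀ z ∈ e, z ∈ A), (A.filter (· ∈ e)).card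
        ≤ ∑ _e ∈ ET.filter (fun e => ∀ z ∈ e, z ∈ A), 2 :=
          Finset.sum_le_sum fun e _ => cnt_le_two A e
      _ = _ := by rw [Finset.sum_const, smul_eq_mul, mul_comm]
  have hb2 : ∑ e ∈ ET.filter (fun e => ¬ ∀ z ∈ e, z ∈ A), (A.filter (· ∈ e)).card
      ≤ (ET.filter (fun e => ¬ ∀ z ∈ e, z ∈ A)).card := by
    calc ∑ e ∈ ET.filter (fun e => ¬ ∀ z ∈ e, z ∈ A), (A.filter (· ∈ e)).card
        ≤ ∑ _e ∈ ET.filter (fun e => ¬ ∀ z ∈ e, z ∈ A), 1 :=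
          Finset.sum_le_sum fun e he => cnt_le_one A e (Finset.mem_filter.mp he).2
      _ = _ := by rw [Finset.sum_const, smul_eq_mul, mul_one]
  have hsplit : (ET.filter (fun e => ∀ z ∈ e, z ∈ A)).card
      + (ET.filter (fun e => ¬ ∀ z ∈ e, z ∈ A)).card = ET.card :=
    Finset.card_filter_add_card_filter_not _
  have hsub : (ET.filter (fun e => ∀ z ∈ e, z ∈ A)).card
      ≤ (K.edgeFinset.filter (fun e => ∀ z ∈ e, z ∈ A)).card := by
    refine Finset.card_le_card ?_
    intro e he
    simp only [hET, Finset.mem_filter] at he ⊢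
    exact ⟨he.1.1, he.2⟩
  omega

lemma count_Cc (A : Finset γ) :
    ((K.edgeFinset.filter (fun e => ∀ z ∈ e, z ∈ A)).card : ℝ)
      ≤ (A.card : ℝ) * ((A.card : ℝ) - 1) / 2 := by
  set ins := K.edgeFinset.filter (fun e => ∀ z ∈ e, z ∈ A) with hins
  have hsub : ins ∪ A.image Sym2.diag ⊆ A.sym2 := by
    intro e he
    rcases Finset.mem_union.mp he with he | he
    · simp only [hins, Finset.mem_filter] at he
      obtain ⟨he1, he2⟩ := he
      induction e using Sym2.ind with
      | _ a b =>
        rw [Finset.mk_mem_sym2_iff]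
        exact ⟨he2 a (Sym2.mem_mk_left a b), he2 b (Sym2.mem_mk_right a b)⟩
    · obtain ⟨a, ha, rfl⟩ := Finset.mem_image.mp he
      rw [Sym2.diag, Finset.mk_mem_sym2_iff]
      exact ⟨ha, ha⟩
  have hdisj : Disjoint ins (A.image Sym2.diag) := by
    rw [Finset.disjoint_left]
    intro e he he'
    simp only [hins, Finset.mem_filter] at he
    obtain ⟨a, _, rfl⟩ := Finset.mem_image.mp he'
    have : (Sym2.diag a) ∈ K.edgeSet := by
      rw [← SimpleGraph.mem_edgeFinset]; exact he.1
    rw [Sym2.diag] at this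
    exact K.irrefl this
  have hcard : ins.card + A.card ≤ A.sym2.card := by
    have := Finset.card_le_card hsub
    rwa [Finset.card_union_of_disjoint hdisj,
      Finset.card_image_of_injective _ Sym2.diag_injective] at this
  have hsym2 : (A.sym2.card : ℝ) = ((A.card : ℝ) + 1) * (A.card : ℝ) / 2 := by
    rw [Finset.card_sym2, Nat.cast_choose_two]
    push_cast
    ring
  have hc := (Nat.cast_le (α := ℝ)).mpr hcard
  push_cast at hc
  rw [hsym2] at hc
  linarith

lemma edges_touching_lb {δ : ℕ} (hδ2 : 2 ≤ δ) (hdeg : ∀ x : γ, δ ≤ K.degree x)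
    {T : Finset γ} (hT : T.Nonempty) :
    ((δ : ℝ)/2 - 1/((δ : ℝ)+1)) * (T.card : ℝ) + 1
      ≤ ((K.edgeFinset.filter (fun e => ∃ z ∈ e, z ∈ T)).card : ℝ) := by
  have hi1 : 1 ≤ T.card := Finset.card_pos.mpr hT
  have hP : δ * T.card ≤ ∑ x ∈ T, K.degree x := by
    calc δ * T.card = ∑ _x ∈ T, δ := by rw [Finset.sum_const, smul_eq_mul, mul_comm]
      _ ≤ _ := Finset.sum_le_sum fun x _ => hdeg x
  set i : ℝ := (T.card : ℝ) with hidef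
  set E : ℝ := ((K.edgeFinset.filter (fun e => ∃ z ∈ e, z ∈ T)).card : ℝ) with hEdef
  have hi1' : (1 : ℝ) ≤ i := by rw [hidef]; exact_mod_cast hi1
  have hδ2' : (2 : ℝ) ≤ (δ : ℝ) := by exact_mod_cast hδ2
  have hδpos : (0 : ℝ) < (δ : ℝ) + 1 := by linarith
  rcases le_total T.card (δ + 1) with hc | hc
  · -- small T : use Cb and Cc
    have hCb := count_Cb K T
    have hCc := count_Cc K T
    have hE1 : (δ : ℝ) * i ≤ E + ((K.edgeFinset.filter (fun e => ∀ z ∈ e, z ∈ T)).card : ℝ) := by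
      have := hP.trans hCb
      rw [hidef, hEdef]
      exact_mod_cast this
    have hEc : (δ : ℝ) * i - i * (i - 1) / 2 ≤ E := by linarith
    have hc' : i ≤ (δ : ℝ) + 1 := by rw [hidef]; exact_mod_cast hc
    have hprod : (0 : ℝ) ≤ ((δ : ℝ) + 1 - i) * (i * ((δ : ℝ) + 1) - 2) := by
      apply mul_nonneg
      · linarith
      · nlinarith
    rw [← mul_le_mul_iff_of_pos_right (show (0:ℝ) < 2 * ((δ:ℝ)+1) by linarith)]
    have hexp : (((δ : ℝ)/2 - 1/((δ : ℝ)+1)) * i + 1) * (2 * ((δ : ℝ)+1))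
        = (δ : ℝ) * i * ((δ : ℝ)+1) - 2*i + 2*((δ : ℝ)+1) := by
      field_simp
    rw [hexp]
    nlinarith [mul_le_mul_of_nonneg_left hEc (show (0:ℝ) ≤ 2*((δ:ℝ)+1) by linarith)]
  · -- large T : use Ca
    have hCa := count_Ca K T
    have hE2 : (δ : ℝ) * i ≤ 2 * E := by
      have := hP.trans hCa
      rw [hidef, hEdef]
      exact_mod_cast this
    have hc' : (δ : ℝ) + 1 ≤ i := by rw [hidef]; exact_mod_cast hc
    have h1 : (1 : ℝ) ≤ i / ((δ : ℝ) + 1) := by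
      rw [le_div_iff₀ hδpos]; linarith
    have e1 : ((δ : ℝ)/2 - 1/((δ : ℝ)+1)) * i = (δ : ℝ)*i/2 - i/((δ : ℝ)+1) := by
      ring
    rw [e1]
    linarith

end Aux2

section MainInd

open SimpleGraph Finset

variable {α : Type*} [Fintype α] [DecidableEq α]

lemma sym2_exists_mem (e : Sym2 α) : ∃ z, z ∈ e := by
  induction e using Sym2.ind with
  | _ a b => exact ⟨a, Sym2.mem_mk_left a b⟩

set_option maxHeartbeats 1000000 in
lemma main_ind {n : ℕ} (F : SimpleGraph α) [DecidableRel F.Adj]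
    (H : SimpleGraph (Fin n)) [DecidableRel H.Adj]
    (v ℓ δ : ℕ) (hv : v = Fintype.card α) (hℓ : ℓ = F.edgeFinset.card)
    (hδ2 : 2 ≤ δ) (hdeg : ∀ x : α, δ ≤ F.degree x) (hvδ : δ + 1 ≤ v) (hn : v ≤ n)
    (G : SimpleGraph (Fin n)) (hG : Relation.ReflTransGen (BootStep F) G ⊤) :
    ∀ U : Finset (Fin n),
      (∀ a b : Fin n, G.Adj a b → ¬ H.Adj a b → a ∈ U ∧ b ∈ U) →
      (if U = ∅ then ((δ:ℝ)/2 - 1/((δ:ℝ)+1)) * ((n:ℝ) - (v:ℝ)) + (ℓ:ℝ) - 1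
       else ((δ:ℝ)/2 - 1/((δ:ℝ)+1)) * (Uᶜ.card : ℝ))
      ≤ ((H.edgeFinset.filter (fun e => ∃ z ∈ e, z ∉ U)).card : ℝ) := by
  have hα : Nonempty α := by
    by_contra hne
    rw [not_nonempty_iff] at hne
    have : Fintype.card α = 0 := Fintype.card_eq_zero
    omega
  have hδ2' : (2:ℝ) ≤ (δ:ℝ) := by exact_mod_cast hδ2
  have hδpos : (0:ℝ) < (δ:ℝ) + 1 := by linarith
  have hcpos : (0:ℝ) ≤ (δ:ℝ)/2 - 1/((δ:ℝ)+1) := by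
    have h1 : 1/((δ:ℝ)+1) ≤ 1/3 := by
      apply div_le_div_of_nonneg_left <;> linarith
    linarith
  induction hG using Relation.ReflTransGen.head_induction_on with
  | refl =>
    intro U hU
    by_cases hUe : U = ∅
    · -- then H = ⊤
      subst hUe
      rw [if_pos rfl]
      have hHtop : H = ⊤ := by
        apply top_unique
        intro a b hab
        by_contra hnab
        exact Finset.notMem_empty a (hU a b hab hnab).1
      have hfilt : H.edgeFinset.filter (fun e => ∃ z ∈ e, z ∉ (∅ : Finset (Fin n)))
          = H.edgeFinset := by
        apply Finset.filter_true_of_mem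
        intro e _
        obtain ⟨z, hz⟩ := sym2_exists_mem e
        exact ⟨z, hz, Finset.notMem_empty z⟩
      rw [hfilt]
      have hcard : (H.edgeFinset.card : ℝ) = ((n.choose 2 : ℕ) : ℝ) := by
        have h0 : H.edgeFinset.card = H.edgeSet.ncard := by
          rw [← SimpleGraph.coe_edgeFinset, Set.ncard_coe_finset]
        have h1 : H.edgeSet.ncard = (⊤ : SimpleGraph (Fin n)).edgeSet.ncard := by
          rw [hHtop]
        have h2 : (⊤ : SimpleGraph (Fin n)).edgeSet.ncard = n.choose 2 := by
          rw [← SimpleGraph.coe_edgeFinset, Set.ncard_coe_finset,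
            SimpleGraph.card_edgeFinset_top_eq_card_choose_two, Fintype.card_fin]
        rw [h0, h1, h2]
      rw [hcard]
      have hℓle : (ℓ:ℝ) ≤ (v:ℝ) * ((v:ℝ) - 1) / 2 := by
        have h1 : F.edgeFinset.card ≤ (Fintype.card α).choose 2 :=
          SimpleGraph.card_edgeFinset_le_card_choose_two
        have h2 : (ℓ:ℝ) ≤ ((Fintype.card α).choose 2 : ℝ) := by
          rw [hℓ]; exact_mod_cast h1
        rwa [Nat.cast_choose_two, ← hv] at h2
      rw [Nat.cast_choose_two]
      have hnv : (v:ℝ) ≤ (n:ℝ) := by exact_mod_cast hn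
      have hδv : (δ:ℝ) + 1 ≤ (v:ℝ) := by exact_mod_cast hvδ
      have hcle : ((δ:ℝ)/2 - 1/((δ:ℝ)+1)) ≤ ((v:ℝ) - 1)/2 := by
        have : (0:ℝ) < 1/((δ:ℝ)+1) := by positivity
        linarith
      have hmul : ((δ:ℝ)/2 - 1/((δ:ℝ)+1)) * ((n:ℝ) - (v:ℝ))
          ≤ ((v:ℝ) - 1)/2 * ((n:ℝ) - (v:ℝ)) :=
        mul_le_mul_of_nonneg_right hcle (by linarith)
      nlinarith [mul_le_mul_of_nonneg_left hnv (show (0:ℝ) ≤ (n:ℝ) by positivity)]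
    · -- every vertex outside U has full degree
      rw [if_neg hUe]
      have hdegfull : ∀ u : Fin n, u ∉ U → H.degree u = n - 1 := by
        intro u hu
        have hnb : H.neighborFinset u = Finset.univ.erase u := by
          ext w
          simp only [SimpleGraph.mem_neighborFinset, Finset.mem_erase, Finset.mem_univ,
            and_true]
          constructor
          · intro h; exact (H.ne_of_adj h).symm
          · intro h
            by_contra hnadj
            have : (⊤ : SimpleGraph (Fin n)).Adj u w := by
              rw [SimpleGraph.top_adj]; exact fun hh => h (hh.symm)
            exact hu (hU u w this hnadj).1
        rw [← SimpleGraph.card_neighborFinset_eq_degree, hnb,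
          Finset.card_erase_of_mem (Finset.mem_univ u), Finset.card_univ,
          Fintype.card_fin]
      have hsum : ∑ x ∈ Uᶜ, H.degree x = (n - 1) * Uᶜ.card := by
        rw [Finset.sum_congr rfl (fun x hx => hdegfull x (Finset.mem_compl.mp hx)),
          Finset.sum_const, smul_eq_mul, mul_comm]
      have hCa := count_Ca H Uᶜ
      rw [hsum] at hCa
      have hfilteq : H.edgeFinset.filter (fun e => ∃ z ∈ e, z ∈ Uᶜ)
          = H.edgeFinset.filter (fun e => ∃ z ∈ e, z ∉ U) := by
        apply Finset.filter_congr
        intro e _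
        simp only [Finset.mem_compl]
      simp only [Finset.mem_compl] at hCa
      have hCa' : ((n:ℝ) - 1) * (Uᶜ.card : ℝ)
          ≤ 2 * ((H.edgeFinset.filter (fun e => ∃ z ∈ e, z ∉ U)).card : ℝ) := by
        have hn1 : 1 ≤ n := by omega
        have := (Nat.cast_le (α := ℝ)).mpr hCa
        push_cast at this
        rw [Nat.cast_sub hn1] at this
        push_cast at this
        linarith
      have hδn : (δ:ℝ) ≤ (n:ℝ) - 1 := by
        have : δ + 1 ≤ n := by omega
        have := (Nat.cast_le (α := ℝ)).mpr this
        push_cast at this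
        linarith
      have hcle : ((δ:ℝ)/2 - 1/((δ:ℝ)+1)) ≤ ((n:ℝ) - 1)/2 := by
        have : (0:ℝ) < 1/((δ:ℝ)+1) := by positivity
        linarith
      have := mul_le_mul_of_nonneg_right hcle (show (0:ℝ) ≤ (Uᶜ.card : ℝ) by positivity)
      linarith
  | @head Gs Gmid hstep hrest IH =>
    intro U hU
    obtain ⟨x, y, hxy, hGnadj, hG', φ, hφ, u, w, huw, hux, hwy⟩ := hstep
    subst hG'
    have hadj : ∀ a b : Fin n, (Gs ⊔ fromEdgeSet {s(x,y)}).Adj a b ↔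
        Gs.Adj a b ∨ (s(a,b) = s(x,y) ∧ a ≠ b) := by
      intro a b
      simp [SimpleGraph.sup_adj, SimpleGraph.fromEdgeSet_adj]
    by_cases hxyU : x ∈ U ∧ y ∈ U
    · refine IH U ?_
      intro a b hab hnH
      rcases (hadj a b).mp hab with h | ⟨he, _⟩
      · exact hU a b h hnH
      · rw [Sym2.eq_iff] at he
        rcases he with ⟨rfl, rfl⟩ | ⟨rfl, rfl⟩
        · exact hxyU
        · exact ⟨hxyU.2, hxyU.1⟩
    · -- expansion step
      set R : Finset (Fin n) := Finset.univ.image φ with hR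
      set U' : Finset (Fin n) := U ∪ R with hU'
      have hxR : x ∈ R := by
        rw [hR]; exact Finset.mem_image.mpr ⟨u, Finset.mem_univ u, hux⟩
      have hyR : y ∈ R := by
        rw [hR]; exact Finset.mem_image.mpr ⟨w, Finset.mem_univ w, hwy⟩
      have hRne : R.Nonempty := ⟨x, hxR⟩
      have hU'ne : U' ≠ ∅ := by
        intro h
        have : x ∈ U' := Finset.mem_union_right U hxR
        rw [h] at this
        exact Finset.notMem_empty x this
      have hcond' : ∀ a b : Fin n, (Gs ⊔ fromEdgeSet {s(x,y)}).Adj a b →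
          ¬ H.Adj a b → a ∈ U' ∧ b ∈ U' := by
        intro a b hab hnH
        rcases (hadj a b).mp hab with h | ⟨he, _⟩
        · obtain ⟨h1, h2⟩ := hU a b h hnH
          exact ⟨Finset.mem_union_left _ h1, Finset.mem_union_left _ h2⟩
        · rw [Sym2.eq_iff] at he
          rcases he with ⟨rfl, rfl⟩ | ⟨rfl, rfl⟩
          · exact ⟨Finset.mem_union_right _ hxR, Finset.mem_union_right _ hyR⟩
          · exact ⟨Finset.mem_union_right _ hyR, Finset.mem_union_right _ hxR⟩
      have hIH := IH U' hcond'
      rw [if_neg hU'ne] at hIH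
      set T : Finset α := Finset.univ.filter (fun t => φ t ∉ U) with hT
      set E1 : Finset (Sym2 (Fin n)) :=
        H.edgeFinset.filter (fun e => ∃ z ∈ e, z ∉ U') with hE1
      set E2 : Finset (Sym2 (Fin n)) :=
        H.edgeFinset.filter (fun e => (∃ z ∈ e, z ∉ U) ∧ ∀ z ∈ e, z ∈ U') with hE2
      set NF : Finset (Sym2 α) :=
        F.edgeFinset.filter (fun f => ∃ t ∈ f, t ∈ T) with hNF
      -- disjoint union bound
      have hdisj : Disjoint E1 E2 := by
        rw [Finset.disjoint_left]
        intro e he1 he2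
        rw [hE1, Finset.mem_filter] at he1
        rw [hE2, Finset.mem_filter] at he2
        obtain ⟨z, hz, hzU'⟩ := he1.2
        exact hzU' (he2.2.2 z hz)
      have hsub : E1 ∪ E2 ⊆ H.edgeFinset.filter (fun e => ∃ z ∈ e, z ∉ U) := by
        intro e he
        rcases Finset.mem_union.mp he with he | he
        · rw [hE1, Finset.mem_filter] at he
          rw [Finset.mem_filter]
          obtain ⟨z, hz, hzU'⟩ := he.2
          exact ⟨he.1, z, hz, fun hzU => hzU' (Finset.mem_union_left _ hzU)⟩
        · rw [hE2, Finset.mem_filter] at he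
          rw [Finset.mem_filter]
          exact ⟨he.1, he.2.1⟩
      have hcards : E1.card + E2.card
          ≤ (H.edgeFinset.filter (fun e => ∃ z ∈ e, z ∉ U)).card := by
        rw [← Finset.card_union_of_disjoint hdisj]
        exact Finset.card_le_card hsub
      -- the copy gives many H-edges in E2
      have himg : NF.image (Sym2.map φ) ⊆ insert s(x,y) E2 := by
        intro e he
        obtain ⟨f, hf, rfl⟩ := Finset.mem_image.mp he
        rw [hNF, Finset.mem_filter] at hf
        obtain ⟨hfE, t, htf, htT⟩ := hf
        rw [hT, Finset.mem_filter] at htT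
        have hφtU : φ t ∉ U := htT.2
        induction f using Sym2.ind with
        | _ p q =>
          have hpq : F.Adj p q := SimpleGraph.mem_edgeFinset.mp hfE
          have hmap : Sym2.map φ s(p, q) = s(φ p, φ q) := Sym2.map_pair_eq φ p q
          rw [hmap]
          by_cases hnew : s(φ p, φ q) = s(x, y)
          · rw [hnew]; exact Finset.mem_insert_self _ _
          · apply Finset.mem_insert_of_mem
            have hG'adj : (Gs ⊔ fromEdgeSet {s(x,y)}).Adj (φ p) (φ q) :=
              φ.map_adj hpq
            have hGadj : Gs.Adj (φ p) (φ q) := by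
              rcases (hadj (φ p) (φ q)).mp hG'adj with h | ⟨he', _⟩
              · exact h
              · exact absurd he' hnew
            have hHadj : H.Adj (φ p) (φ q) := by
              by_contra hnH
              obtain ⟨h1, h2⟩ := hU (φ p) (φ q) hGadj hnH
              rcases Sym2.mem_iff.mp htf with rfl | rfl
              · exact hφtU h1
              · exact hφtU h2
            rw [hE2, Finset.mem_filter]
            refine ⟨SimpleGraph.mem_edgeFinset.mpr hHadj, ⟨φ t, ?_, hφtU⟩, ?_⟩
            · rcases Sym2.mem_iff.mp htf with rfl | rfl
              · exact Sym2.mem_mk_left _ _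
              · exact Sym2.mem_mk_right _ _
            · intro z hz
              rcases Sym2.mem_iff.mp hz with rfl | rfl
              · exact Finset.mem_union_right _
                  (Finset.mem_image.mpr ⟨p, Finset.mem_univ p, rfl⟩)
              · exact Finset.mem_union_right _
                  (Finset.mem_image.mpr ⟨q, Finset.mem_univ q, rfl⟩)
      have hNcard : NF.card ≤ E2.card + 1 := by
        rw [← Finset.card_image_of_injective NF (Sym2.map.injective hφ)]
        exact (Finset.card_le_card himg).trans (Finset.card_insert_le _ _)
      -- cardinal bookkeeping
      have hTR : Finset.image φ T = R \ U := by
        ext z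
        constructor
        · intro hz
          obtain ⟨t, ht, rfl⟩ := Finset.mem_image.mp hz
          have htU : φ t ∉ U := by
            have := Finset.mem_filter.mp (hT ▸ ht)
            exact this.2
          refine Finset.mem_sdiff.mpr ⟨?_, htU⟩
          rw [hR]
          exact Finset.mem_image.mpr ⟨t, Finset.mem_univ t, rfl⟩
        · intro hz
          obtain ⟨hzR, hzU⟩ := Finset.mem_sdiff.mp hz
          rw [hR] at hzR
          obtain ⟨t, _, rfl⟩ := Finset.mem_image.mp hzR
          refine Finset.mem_image.mpr ⟨t, ?_, rfl⟩
          rw [hT]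
          exact Finset.mem_filter.mpr ⟨Finset.mem_univ t, hzU⟩
      have hTRcard : (R \ U).card = T.card := by
        rw [← hTR, Finset.card_image_of_injective T hφ]
      have hcompl : Uᶜ.card = U'ᶜ.card + (R \ U).card := by
        have hsub2 : R \ U ⊆ Uᶜ := by
          intro z hz
          rw [Finset.mem_sdiff] at hz
          exact Finset.mem_compl.mpr hz.2
        have heq : Uᶜ \ (R \ U) = U'ᶜ := by
          ext z
          rw [Finset.mem_sdiff, Finset.mem_compl, Finset.mem_compl, hU',
            Finset.mem_union, Finset.mem_sdiff]
          constructor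
          · rintro ⟨hz1, hz2⟩ (hz3 | hz3)
            · exact hz1 hz3
            · exact hz2 ⟨hz3, hz1⟩
          · intro hz
            refine ⟨fun h => hz (Or.inl h), fun h => hz (Or.inr h.1)⟩
        have := Finset.card_sdiff_add_card_eq_card hsub2
        rw [heq] at this
        omega
      by_cases hUe : U = ∅
      · -- first expansion : full copy
        subst hUe
        rw [if_pos rfl]
        have hTuniv : T = Finset.univ := by
          rw [hT]
          apply Finset.filter_true_of_mem
          intro t _
          exact Finset.notMem_empty (φ t)
        have hNFall : NF = F.edgeFinset := by
          rw [hNF]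
          apply Finset.filter_true_of_mem
          intro f _
          obtain ⟨z, hz⟩ := sym2_exists_mem f
          exact ⟨z, hz, hTuniv ▸ Finset.mem_univ z⟩
        have hNFcard : NF.card = ℓ := by rw [hNFall, hℓ]
        have hRcard : R.card = v := by
          rw [hR, Finset.card_image_of_injective _ hφ, Finset.card_univ, hv]
        have hcompl0 : n = U'ᶜ.card + v := by
          have h3 := hcompl
          rw [Finset.compl_empty, Finset.card_univ, Fintype.card_fin,
            Finset.sdiff_empty, hRcard] at h3
          omega
        have hU'c : (U'ᶜ.card : ℝ) = (n:ℝ) - (v:ℝ) := by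
          have : (n:ℝ) = (U'ᶜ.card : ℝ) + (v:ℝ) := by exact_mod_cast hcompl0
          linarith
        rw [hU'c] at hIH
        have hNc : (ℓ:ℝ) ≤ (E2.card : ℝ) + 1 := by
          rw [← hNFcard]; exact_mod_cast hNcard
        have hcc : (E1.card : ℝ) + (E2.card : ℝ)
            ≤ ((H.edgeFinset.filter (fun e => ∃ z ∈ e, z ∉ (∅ : Finset (Fin n)))).card : ℝ) := by
          exact_mod_cast hcards
        linarith
      · rw [if_neg hUe]
        -- T nonempty
        have hTne : T.Nonempty := by
          rcases not_and_or.mp hxyU with h | h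
          · refine ⟨u, ?_⟩
            rw [hT, Finset.mem_filter]
            exact ⟨Finset.mem_univ u, by rw [hux]; exact h⟩
          · refine ⟨w, ?_⟩
            rw [hT, Finset.mem_filter]
            exact ⟨Finset.mem_univ w, by rw [hwy]; exact h⟩
        have hB := edges_touching_lb F hδ2 hdeg hTne
        have hBc : ((δ:ℝ)/2 - 1/((δ:ℝ)+1)) * (T.card : ℝ) + 1 ≤ (NF.card : ℝ) := by
          rw [hNF]
          exact hB
        have hNc : (NF.card : ℝ) ≤ (E2.card : ℝ) + 1 := by exact_mod_cast hNcard
        have hcc : (E1.card : ℝ) + (E2.card : ℝ)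
            ≤ ((H.edgeFinset.filter (fun e => ∃ z ∈ e, z ∉ U)).card : ℝ) := by
          exact_mod_cast hcards
        have hcompl' : (Uᶜ.card : ℝ) = (U'ᶜ.card : ℝ) + (T.card : ℝ) := by
          rw [← hTRcard]; exact_mod_cast hcompl
        rw [hcompl', mul_add]
        linarith

end MainInd

/-- For a graph `F` without isolated vertices, with `v` vertices, `ℓ` edges
and minimum degree `δ ≥ 2`, for every `n ≥ v`,
`wsat(n,F) ≥ (δ/2 − 1/(δ+1))·(n − v) + ℓ − 1`. -/
theorem wsat_lower_bound_general {α : Type*} [Fintype α] (F : SimpleGraph α)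
    (v ℓ δ : ℕ) (hv : v = Fintype.card α) (hℓ : ℓ = F.edgeSet.ncard)
    (hiso : ∀ x : α, ∃ y, F.Adj x y)
    (hδ2 : 2 ≤ δ)
    (hmindeg : ∀ x : α, δ ≤ (F.neighborSet x).ncard)
    (hmineq : ∃ x : α, (F.neighborSet x).ncard = δ)
    (n : ℕ) (hn : v ≤ n) :
    ((δ : ℝ) / 2 - 1 / ((δ : ℝ) + 1)) * ((n : ℝ) - (v : ℝ)) + (ℓ : ℝ) - 1
      ≤ (wsat F n : ℝ) := by
  classical
  obtain ⟨x0, hx0⟩ := hmineq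
  letI : DecidableRel F.Adj := Classical.decRel _
  have hncard_deg : ∀ x : α, (F.neighborSet x).ncard = F.degree x := by
    intro x
    rw [Set.ncard_eq_toFinset_card', ← SimpleGraph.neighborFinset_def,
      SimpleGraph.card_neighborFinset_eq_degree]
  have hdeg : ∀ x : α, δ ≤ F.degree x := fun x => by
    rw [← hncard_deg]; exact hmindeg x
  have hδv : δ + 1 ≤ v := by
    have h1 : F.degree x0 < Fintype.card α := F.degree_lt_card_verts x0
    have h2 : F.degree x0 = δ := by rw [← hncard_deg]; exact hx0
    omega
  have hℓ' : ℓ = F.edgeFinset.card := by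
    rw [hℓ, ← SimpleGraph.coe_edgeFinset, Set.ncard_coe_finset]
  have hSne : {m | ∃ H : SimpleGraph (Fin n), WeaklySat F H ∧ H.edgeSet.ncard = m}.Nonempty :=
    ⟨(⊤ : SimpleGraph (Fin n)).edgeSet.ncard, ⊤, Relation.ReflTransGen.refl, rfl⟩
  have hmem := Nat.sInf_mem hSne
  obtain ⟨H, hWS, hHcard⟩ := hmem
  letI : DecidableRel H.Adj := Classical.decRel _
  have hmain := main_ind F H v ℓ δ hv hℓ' hδ2 hdeg hδv hn H hWS ∅
    (fun a b hab hnab => False.elim (hnab hab))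
  rw [if_pos rfl] at hmain
  have hfilt : H.edgeFinset.filter (fun e => ∃ z ∈ e, z ∉ (∅ : Finset (Fin n)))
      = H.edgeFinset := by
    apply Finset.filter_true_of_mem
    intro e _
    obtain ⟨z, hz⟩ := sym2_exists_mem e
    exact ⟨z, hz, Finset.notMem_empty z⟩
  rw [hfilt] at hmain
  have hfin : H.edgeFinset.card = wsat F n := by
    rw [← Set.ncard_coe_finset, SimpleGraph.coe_edgeFinset]
    exact hHcard
  rw [hfin] at hmain
  linarith
end

section
/- Let F be a graph without isolated vertices with v vertices, ℓ edges, and minimum degree δ ≥ 2. Suppose that either δ is even and F is connected, or F is 2-edge-connected (i.e., F remains connected after the removal of any single edge). Then for every integer n ≥ v, wsat(n,F) ≥ (δ/2)·(n − v) + ℓ − 1. -/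
open SimpleGraph

open Finset

namespace WS2
set_option linter.unusedSectionVars false

attribute [local instance] Classical.propDecidable

variable {β : Type*} [Fintype β] [DecidableEq β]

/-- the unordered pair `p` has both endpoints in `X` -/
def inside (p : Sym2 β) (X : Finset β) : Prop := ∀ a ∈ p, a ∈ X

lemma inside_mono {p : Sym2 β} {X Y : Finset β} (h : X ⊆ Y) (hp : inside p X) :
    inside p Y := fun a ha => h (hp a ha)

lemma inside_inter {p : Sym2 β} {X Y : Finset β} :
    inside p (X ∩ Y) ↔ inside p X ∧ inside p Y := by
  constructor
  · intro h
    exact ⟨fun a ha => (Finset.mem_inter.1 (h a ha)).1,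
           fun a ha => (Finset.mem_inter.1 (h a ha)).2⟩
  · rintro ⟨h1, h2⟩ a ha
    exact Finset.mem_inter.2 ⟨h1 a ha, h2 a ha⟩

lemma two_le_card_of_inside {p : Sym2 β} {X : Finset β} (hd : ¬ p.IsDiag)
    (h : inside p X) : 2 ≤ X.card := by
  induction p using Sym2.inductionOn with
  | hf a b =>
    have hab : a ≠ b := by simpa [Sym2.isDiag_iff_proj_eq] using hd
    have ha : a ∈ X := h a (by simp)
    have hb : b ∈ X := h b (by simp)
    exact Finset.one_lt_card.2 ⟨a, ha, b, hb, hab⟩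

/-- number of slots of `W` inside `X` -/
noncomputable def cnt (W : Finset (Sym2 β × Bool)) (X : Finset β) : ℕ :=
  #(W.filter (fun g => inside g.1 X))

lemma cnt_le_card (W : Finset (Sym2 β × Bool)) (X : Finset β) : cnt W X ≤ W.card :=
  Finset.card_filter_le _ _

lemma cnt_mono_left {W' W : Finset (Sym2 β × Bool)} (h : W' ⊆ W) (X : Finset β) :
    cnt W' X ≤ cnt W X :=
  Finset.card_le_card (Finset.filter_subset_filter _ h)

lemma cnt_mono_right (W : Finset (Sym2 β × Bool)) {X Y : Finset β} (h : X ⊆ Y) :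
    cnt W X ≤ cnt W Y := by
  apply Finset.card_le_card
  intro g hg
  rw [Finset.mem_filter] at hg ⊢
  exact ⟨hg.1, inside_mono h hg.2⟩

lemma cnt_union_inter (W : Finset (Sym2 β × Bool)) (X Y : Finset β) :
    cnt W X + cnt W Y ≤ cnt W (X ∪ Y) + cnt W (X ∩ Y) := by
  classical
  have h1 : (W.filter (fun g => inside g.1 X)) ∪ (W.filter (fun g => inside g.1 Y))
      ⊆ W.filter (fun g => inside g.1 (X ∪ Y)) := by
    intro g hg
    rw [Finset.mem_union, Finset.mem_filter, Finset.mem_filter] at hg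
    rw [Finset.mem_filter]
    rcases hg with ⟨hw, h⟩ | ⟨hw, h⟩
    · exact ⟨hw, inside_mono (Finset.subset_union_left) h⟩
    · exact ⟨hw, inside_mono (Finset.subset_union_right) h⟩
  have h2 : (W.filter (fun g => inside g.1 X)) ∩ (W.filter (fun g => inside g.1 Y))
      = W.filter (fun g => inside g.1 (X ∩ Y)) := by
    ext g
    simp only [Finset.mem_inter, Finset.mem_filter, inside_inter]
    tauto
  calc cnt W X + cnt W Y
      = #((W.filter (fun g => inside g.1 X)) ∪ (W.filter (fun g => inside g.1 Y)))
        + #((W.filter (fun g => inside g.1 X)) ∩ (W.filter (fun g => inside g.1 Y))) :=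
        (Finset.card_union_add_card_inter _ _).symm
    _ ≤ cnt W (X ∪ Y) + cnt W (X ∩ Y) := by
        rw [h2]; exact Nat.add_le_add_right (Finset.card_le_card h1) _

lemma cnt_eq_zero_of_small {W : Finset (Sym2 β × Bool)}
    (hnd : ∀ g ∈ W, ¬ (g.1 : Sym2 β).IsDiag) {X : Finset β} (hX : X.card ≤ 1) :
    cnt W X = 0 := by
  rw [cnt, Finset.card_eq_zero, Finset.filter_eq_empty_iff]
  intro g hg hins
  exact absurd (two_le_card_of_inside (hnd g hg) hins) (by omega)

/-- sparsity/independence -/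
def Ind (δ σ : ℕ) (W : Finset (Sym2 β × Bool)) : Prop :=
  (∀ g ∈ W, ¬ (g.1 : Sym2 β).IsDiag) ∧
  ∀ X : Finset β, 2 ≤ X.card → cnt W X + 2 ≤ δ * X.card + σ

lemma Ind.subset {δ σ : ℕ} {W' W : Finset (Sym2 β × Bool)} (hW : Ind δ σ W)
    (h : W' ⊆ W) : Ind δ σ W' :=
  ⟨fun g hg => hW.1 g (h hg), fun X hX => le_trans
    (Nat.add_le_add_right (cnt_mono_left h X) 2) (hW.2 X hX)⟩

lemma Ind.empty {δ σ : ℕ} (hδ : 1 ≤ δ) : Ind δ σ (∅ : Finset (Sym2 β × Bool)) := by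
  refine ⟨by simp, fun X hX => ?_⟩
  have : cnt (∅ : Finset (Sym2 β × Bool)) X = 0 := by simp [cnt]
  have : 2 ≤ δ * X.card := le_trans hX (Nat.le_mul_of_pos_left _ hδ)
  omega

/-- rank = maximum size of an independent subset -/
noncomputable def rk (δ σ : ℕ) (S : Finset (Sym2 β × Bool)) : ℕ :=
  ((S.powerset).filter (Ind δ σ)).sup Finset.card

lemma Ind.card_le_rk {δ σ : ℕ} {W S : Finset (Sym2 β × Bool)} (hW : Ind δ σ W)
    (h : W ⊆ S) : W.card ≤ rk δ σ S :=
  Finset.le_sup (Finset.mem_filter.2 ⟨Finset.mem_powerset.2 h, hW⟩)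

lemma rk_le_card (δ σ : ℕ) (S : Finset (Sym2 β × Bool)) : rk δ σ S ≤ S.card := by
  apply Finset.sup_le
  intro W hW
  exact Finset.card_le_card (Finset.mem_powerset.1 (Finset.mem_filter.1 hW).1)

/-- there is a maximum-size independent subset, and it is maximal -/
lemma exists_max_indep (δ σ : ℕ) (hδ : 1 ≤ δ) (S : Finset (Sym2 β × Bool)) :
    ∃ J, J ⊆ S ∧ Ind δ σ J ∧ J.card = rk δ σ S ∧
      ∀ g ∈ S, g ∉ J → ¬ Ind δ σ (insert g J) := by
  classical
  have hne : ((S.powerset).filter (Ind δ σ)).Nonempty :=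
    ⟨∅, Finset.mem_filter.2 ⟨Finset.mem_powerset.2 (Finset.empty_subset _), Ind.empty hδ⟩⟩
  obtain ⟨J, hJmem, hJcard⟩ := Finset.exists_mem_eq_sup _ hne Finset.card
  rw [Finset.mem_filter, Finset.mem_powerset] at hJmem
  refine ⟨J, hJmem.1, hJmem.2, hJcard.symm, ?_⟩
  intro g hgS hgJ hind
  have : (insert g J).card ≤ rk δ σ S :=
    hind.card_le_rk (Finset.insert_subset hgS hJmem.1)
  rw [Finset.card_insert_of_notMem hgJ] at this
  simp only [rk] at this
  omega


/-! ### Tight sets -/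

section Tight

variable (δ σ : ℕ) (J : Finset (Sym2 β × Bool))

def TightFor (X : Finset β) : Prop :=
  2 ≤ X.card ∧ δ * X.card + σ = cnt J X + 2

def MaxTight (X : Finset β) : Prop :=
  TightFor δ σ J X ∧ ∀ Y, TightFor δ σ J Y → X ⊆ Y → Y = X

variable {δ σ J}

lemma tight_union (hJ : Ind δ σ J) {X Y : Finset β}
    (hX : TightFor δ σ J X) (hY : TightFor δ σ J Y) (h2 : 2 ≤ (X ∩ Y).card) :
    TightFor δ σ J (X ∪ Y) := by
  have hcu : 2 ≤ (X ∪ Y).card :=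
    le_trans hX.1 (Finset.card_le_card Finset.subset_union_left)
  have hsu := hJ.2 (X ∪ Y) hcu
  have hsi := hJ.2 (X ∩ Y) h2
  have hadd := cnt_union_inter J X Y
  have hprod : δ * (X ∪ Y).card + δ * (X ∩ Y).card = δ * X.card + δ * Y.card := by
    rw [← Nat.mul_add, ← Nat.mul_add, Finset.card_union_add_card_inter]
  have e1 := hX.2
  have e2 := hY.2
  exact ⟨hcu, by omega⟩

lemma maxTight_disjoint (hJ : Ind δ σ J) (hδ : 2 ≤ δ) {T T' : Finset β}
    (hT : MaxTight δ σ J T) (hT' : MaxTight δ σ J T') (hne : T ≠ T') :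
    Disjoint T T' := by
  by_contra hnd
  -- first, derive that T ∪ T' is tight
  have hUt : TightFor δ σ J (T ∪ T') := by
    rcases Nat.lt_or_ge (T ∩ T').card 2 with hlt | hge
    · -- small intersection: forces δ = 2, σ = 0 and equality
      have hcnt0 : cnt J (T ∩ T') = 0 := cnt_eq_zero_of_small hJ.1 (by omega)
      have hcu : 2 ≤ (T ∪ T').card :=
        le_trans hT.1.1 (Finset.card_le_card Finset.subset_union_left)
      have hsu := hJ.2 (T ∪ T') hcu
      have hadd := cnt_union_inter J T T'
      have hprod : δ * (T ∪ T').card + δ * (T ∩ T').card = δ * T.card + δ * T'.card := by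
        rw [← Nat.mul_add, ← Nat.mul_add, Finset.card_union_add_card_inter]
      have hc1 : (T ∩ T').card = 1 ∨ (T ∩ T').card = 0 := by omega
      have e1 := hT.1.2
      have e2 := hT'.1.2
      rcases hc1 with hc1 | hc1
      · rw [hc1, Nat.mul_one] at hprod
        exact ⟨hcu, by omega⟩
      ·
        exact (hnd (Finset.disjoint_iff_inter_eq_empty.2 (Finset.card_eq_zero.1 hc1))).elim
    · exact tight_union hJ hT.1 hT'.1 hge
  have h1 : T ∪ T' = T := hT.2 _ hUt Finset.subset_union_left
  have h2 : T' ⊆ T := by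
    intro a ha; rw [← h1]; exact Finset.mem_union_right _ ha
  exact hne (hT'.2 T hT.1 h2)

variable (δ σ J)

noncomputable def MTs : Finset (Finset β) :=
  (Finset.univ : Finset (Finset β)).filter (MaxTight δ σ J)

variable {δ σ J}

lemma mem_MTs {T : Finset β} : T ∈ MTs δ σ J ↔ MaxTight δ σ J T := by
  simp [MTs]

lemma exists_maxTight (hX : TightFor δ σ J X) :
    ∃ T ∈ MTs δ σ J, X ⊆ T := by
  classical
  set s : Finset (Finset β) :=
    (Finset.univ : Finset (Finset β)).filter (fun T => TightFor δ σ J T ∧ X ⊆ T) with hs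
  have hne : s.Nonempty := ⟨X, by simp [hs, hX]⟩
  obtain ⟨T, hTmem, hTmax⟩ := Finset.exists_max_image s Finset.card hne
  rw [hs, Finset.mem_filter] at hTmem
  refine ⟨T, mem_MTs.2 ⟨hTmem.2.1, ?_⟩, hTmem.2.2⟩
  intro Y hY hTY
  have hYs : Y ∈ s := by
    rw [hs, Finset.mem_filter]
    exact ⟨Finset.mem_univ _, hY, hTmem.2.2.trans hTY⟩
  exact Finset.eq_of_subset_of_card_le hTY (hTmax Y hYs) |>.symm

/-- a nondiagonal slot cannot be inside two distinct maximal tight sets -/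
lemma slot_unique (hJ : Ind δ σ J) (hδ : 2 ≤ δ) {T T' : Finset β}
    (hT : T ∈ MTs δ σ J) (hT' : T' ∈ MTs δ σ J) (hne : T ≠ T')
    {p : Sym2 β} (hd : ¬ p.IsDiag) (h1 : inside p T) (h2 : inside p T') : False := by
  have hdis := maxTight_disjoint hJ hδ (mem_MTs.1 hT) (mem_MTs.1 hT') hne
  have hin : inside p (T ∩ T') := inside_inter.2 ⟨h1, h2⟩
  have := two_le_card_of_inside hd hin
  rw [Finset.disjoint_iff_inter_eq_empty.1 hdis] at this
  simp at this

/-- partition counting: any nondiagonal slot family splits into those inside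
some maximal tight set, and the rest -/
lemma card_eq_sum_MTs (hJ : Ind δ σ J) (hδ : 2 ≤ δ) {W : Finset (Sym2 β × Bool)}
    (hnd : ∀ g ∈ W, ¬ (g.1 : Sym2 β).IsDiag) :
    W.card = (∑ T ∈ MTs δ σ J, cnt W T)
      + #(W.filter (fun g => ∀ T ∈ MTs δ σ J, ¬ inside g.1 T)) := by
  classical
  have hsplit := Finset.card_filter_add_card_filter_not
    (s := W) (p := fun g => ∃ T ∈ MTs δ σ J, inside g.1 T)
  have hbi : W.filter (fun g => ∃ T ∈ MTs δ σ J, inside g.1 T)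
      = (MTs δ σ J).biUnion (fun T => W.filter (fun g => inside g.1 T)) := by
    ext g
    simp only [Finset.mem_filter, Finset.mem_biUnion]
    tauto
  have hdisj : ∀ T ∈ MTs δ σ J, ∀ T' ∈ MTs δ σ J, T ≠ T' →
      Disjoint (W.filter (fun g => inside g.1 T)) (W.filter (fun g => inside g.1 T')) := by
    intro T hT T' hT' hne
    rw [Finset.disjoint_left]
    intro g hg hg'
    rw [Finset.mem_filter] at hg hg'
    exact slot_unique hJ hδ hT hT' hne (hnd g hg.1) hg.2 hg'.2
  have hcard : #(W.filter (fun g => ∃ T ∈ MTs δ σ J, inside g.1 T))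
      = ∑ T ∈ MTs δ σ J, cnt W T := by
    rw [hbi, Finset.card_biUnion hdisj]
    rfl
  have : (W.filter (fun g => ¬ ∃ T ∈ MTs δ σ J, inside g.1 T))
      = W.filter (fun g => ∀ T ∈ MTs δ σ J, ¬ inside g.1 T) := by
    apply Finset.filter_congr
    intro g _
    simp
  rw [hcard, this] at hsplit
  omega

end Tight

/-! ### Counting slots, blocked slots, base bound -/

lemma cnt_insert {W : Finset (Sym2 β × Bool)} {g : Sym2 β × Bool} (hg : g ∉ W)
    (X : Finset β) :
    cnt (insert g W) X = cnt W X + (if inside g.1 X then 1 else 0) := by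
  classical
  rw [cnt, Finset.filter_insert]
  split
  · rw [Finset.card_insert_of_notMem (fun h => hg (Finset.mem_filter.1 h).1)]
    simp [cnt]
  · simp [cnt]

/-- if `J` is maximal independent in `S` then every nondiagonal slot of `S \ J`
lies inside a tight set for `J` -/
lemma blocked_tight {δ σ : ℕ} {S J : Finset (Sym2 β × Bool)} (hJ : Ind δ σ J)
    (hmax : ∀ g ∈ S, g ∉ J → ¬ Ind δ σ (insert g J))
    {g : Sym2 β × Bool} (hgS : g ∈ S) (hgJ : g ∉ J) (hgd : ¬ (g.1 : Sym2 β).IsDiag) :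
    ∃ X, TightFor δ σ J X ∧ inside g.1 X := by
  have hni := hmax g hgS hgJ
  rw [Ind, not_and_or] at hni
  rcases hni with hni | hni
  · exfalso
    apply hni
    intro g' hg'
    rcases Finset.mem_insert.1 hg' with h | h
    · rw [h]; exact hgd
    · exact hJ.1 g' h
  · push_neg at hni
    obtain ⟨X, hX2, hXv⟩ := hni
    rw [cnt_insert hgJ] at hXv
    by_cases hin : inside g.1 X
    · refine ⟨X, ⟨hX2, ?_⟩, hin⟩
      have := hJ.2 X hX2
      rw [if_pos hin] at hXv
      omega
    · rw [if_neg hin] at hXv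
      exact absurd (hJ.2 X hX2) (by omega)

variable (β) in
/-- all slots: doubled nondiagonal unordered pairs -/
noncomputable def fullSlots : Finset (Sym2 β × Bool) :=
  Finset.univ.filter (fun g => ¬ (g.1 : Sym2 β).IsDiag)

lemma mem_fullSlots {g : Sym2 β × Bool} : g ∈ fullSlots β ↔ ¬ (g.1 : Sym2 β).IsDiag := by
  simp [fullSlots]

lemma card_filter_not_isDiag_sym2 (X : Finset β) :
    #(X.sym2.filter (fun p => ¬ p.IsDiag)) = X.card.choose 2 := by
  classical
  have hdiag : X.sym2.filter (fun p => p.IsDiag) = X.image Sym2.diag := by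
    ext p
    simp only [Finset.mem_filter, Finset.mem_image, Finset.mem_sym2_iff]
    constructor
    · rintro ⟨hmem, hd⟩
      obtain ⟨a, rfl⟩ := (⟨_, Sym2.diag_diagElem hd⟩ : ∃ a, Sym2.diag a = p)
      exact ⟨a, hmem a (by simp [Sym2.diag]), rfl⟩
    · rintro ⟨a, ha, rfl⟩
      refine ⟨?_, Sym2.diag_isDiag a⟩
      intro b hb
      simp only [Sym2.diag, Sym2.mem_iff] at hb
      rcases hb with rfl | rfl <;> exact ha
  have h1 : #(X.sym2.filter (fun p => p.IsDiag)) = X.card := by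
    rw [hdiag, Finset.card_image_of_injective _ Sym2.diag_injective]
  have h2 := Finset.card_filter_add_card_filter_not
    (s := X.sym2) (p := fun p => p.IsDiag)
  have h3 := Finset.card_sym2 X
  have h4 : (X.card + 1).choose 2 = X.card.choose 2 + X.card := by
    rw [Nat.choose_succ_succ]
    simp [Nat.add_comm]
  omega

lemma cnt_fullSlots (X : Finset β) : cnt (fullSlots β) X = X.card * (X.card - 1) := by
  classical
  have key : (fullSlots β).filter (fun g => inside g.1 X)
      = (X.sym2.filter (fun p => ¬ p.IsDiag)) ×ˢ (Finset.univ : Finset Bool) := by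
    ext g
    simp only [Finset.mem_filter, Finset.mem_product, mem_fullSlots, fullSlots,
      Finset.mem_univ, true_and, and_true, Finset.mem_sym2_iff]
    constructor
    · rintro ⟨hd, hin⟩; exact ⟨hin, hd⟩
    · rintro ⟨hin, hd⟩; exact ⟨hd, hin⟩
  rw [cnt, key, Finset.card_product, card_filter_not_isDiag_sym2]
  have h5 : Even (X.card * (X.card - 1)) := by
    rcases Nat.eq_zero_or_pos X.card with h | h
    · simp [h]
    · obtain ⟨m, hm⟩ := Nat.exists_eq_add_of_le h
      rw [hm]
      simpa [Nat.add_comm, Nat.mul_comm] using Nat.even_mul_succ_self m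
  have h6 := Nat.choose_two_right X.card
  simp only [Finset.card_univ, Fintype.card_bool]
  obtain ⟨k, hk⟩ := h5
  omega

lemma card_fullSlots : (fullSlots β).card = Fintype.card β * (Fintype.card β - 1) := by
  classical
  have := cnt_fullSlots (Finset.univ : Finset β)
  rw [cnt] at this
  have heq : (fullSlots β).filter (fun g => inside g.1 (Finset.univ : Finset β))
      = fullSlots β := by
    apply Finset.filter_true_of_mem
    intro g _
    intro a _
    exact Finset.mem_univ a
  rw [heq] at this
  simpa using this


/-! ### The base bound: rank of all slots -/

lemma psi_superadd (δ σ : ℕ) {a b : ℤ} (ha : 2 ≤ a) (hb : 2 ≤ b) :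
    (a*(a-1) - δ*a - σ + 2) + (b*(b-1) - δ*b - σ + 2)
      ≤ (a+b)*((a+b)-1) - δ*(a+b) - σ + 2 := by
  have hσ : (0:ℤ) ≤ σ := Int.natCast_nonneg σ
  nlinarith [mul_le_mul ha hb (by omega : (0:ℤ) ≤ 2) (by omega : (0:ℤ) ≤ a)]

lemma psi_sum (δ σ : ℕ) (𝒯 : Finset (Finset β)) (hne : 𝒯.Nonempty)
    (h2 : ∀ T ∈ 𝒯, 2 ≤ T.card) :
    2 ≤ (∑ T ∈ 𝒯, (T.card:ℤ)) ∧
    ∑ T ∈ 𝒯, ((T.card:ℤ)*((T.card:ℤ)-1) - δ*(T.card:ℤ) - σ + 2)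
      ≤ (∑ T ∈ 𝒯, (T.card:ℤ))*((∑ T ∈ 𝒯, (T.card:ℤ))-1)
        - δ*(∑ T ∈ 𝒯, (T.card:ℤ)) - σ + 2 := by
  classical
  induction 𝒯 using Finset.cons_induction with
  | empty => exact absurd hne (by simp)
  | cons a s ha ih =>
    rcases s.eq_empty_or_nonempty with rfl | hs
    · rw [Finset.sum_cons, Finset.sum_cons, Finset.sum_empty, Finset.sum_empty]
      have h2a : 2 ≤ a.card := h2 a (by simp)
      have h2a' : (2:ℤ) ≤ (a.card:ℤ) := by exact_mod_cast h2a
      constructor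
      · omega
      · simp
    · have h2' : ∀ T ∈ s, 2 ≤ T.card := fun T hT => h2 T (Finset.mem_cons_of_mem hT)
      obtain ⟨hs2, hsum⟩ := ih hs h2'
      have h2a : 2 ≤ a.card := h2 a (Finset.mem_cons_self a s)
      have h2a' : (2:ℤ) ≤ (a.card:ℤ) := by exact_mod_cast h2a
      rw [Finset.sum_cons, Finset.sum_cons]
      constructor
      · omega
      · calc (a.card:ℤ)*((a.card:ℤ)-1) - δ*(a.card:ℤ) - σ + 2
              + ∑ T ∈ s, ((T.card:ℤ)*((T.card:ℤ)-1) - δ*(T.card:ℤ) - σ + 2)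
            ≤ ((a.card:ℤ)*((a.card:ℤ)-1) - δ*(a.card:ℤ) - σ + 2)
              + ((∑ T ∈ s, (T.card:ℤ))*((∑ T ∈ s, (T.card:ℤ))-1)
                - δ*(∑ T ∈ s, (T.card:ℤ)) - σ + 2) := by linarith
          _ ≤ _ := psi_superadd δ σ h2a' hs2

lemma rk_fullSlots_ge (δ σ : ℕ) (hδ : 2 ≤ δ)
    (hn : δ + 1 ≤ Fintype.card β)
    (hψ : (δ:ℤ) * Fintype.card β + σ ≤ (Fintype.card β:ℤ) * ((Fintype.card β:ℤ) - 1) + 2) :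
    δ * Fintype.card β + σ ≤ rk δ σ (fullSlots β) + 2 := by
  classical
  obtain ⟨J, hJS, hJ, hJcard, hJmax⟩ := exists_max_indep δ σ (by omega) (fullSlots β)
  set 𝒯 := MTs δ σ J with h𝒯
  have hndJ : ∀ g ∈ J, ¬ (g.1 : Sym2 β).IsDiag := hJ.1
  have hndF : ∀ g ∈ fullSlots β, ¬ (g.1 : Sym2 β).IsDiag := fun g hg => mem_fullSlots.1 hg
  -- the two partition identities
  have hA := card_eq_sum_MTs hJ hδ hndJ
  have hB := card_eq_sum_MTs (W := fullSlots β) hJ hδ hndF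
  -- outside slots of fullSlots are all in J
  have hout : (fullSlots β).filter (fun g => ∀ T ∈ MTs δ σ J, ¬ inside g.1 T)
      ⊆ J.filter (fun g => ∀ T ∈ MTs δ σ J, ¬ inside g.1 T) := by
    intro g hg
    rw [Finset.mem_filter] at hg ⊢
    refine ⟨?_, hg.2⟩
    by_contra hgJ
    obtain ⟨X, hXt, hXin⟩ := blocked_tight hJ hJmax hg.1 hgJ (hndF g hg.1)
    obtain ⟨T, hT, hXT⟩ := exists_maxTight hXt
    exact hg.2 T hT (inside_mono hXT hXin)
  have houtle := Finset.card_le_card hout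
  -- tightness values
  have htight : ∀ T ∈ 𝒯, 2 ≤ T.card ∧ δ * T.card + σ = cnt J T + 2 := by
    intro T hT
    have := (mem_MTs.1 hT).1
    exact ⟨this.1, this.2⟩
  -- sum of sizes is at most n
  have hdisj : ∀ T ∈ 𝒯, ∀ T' ∈ 𝒯, T ≠ T' → Disjoint (id T) (id T') := by
    intro T hT T' hT' hne
    exact maxTight_disjoint hJ hδ (mem_MTs.1 hT) (mem_MTs.1 hT') hne
  have hsum_le : ∑ T ∈ 𝒯, T.card ≤ Fintype.card β := by
    calc ∑ T ∈ 𝒯, T.card = ∑ T ∈ 𝒯, (id T).card := rfl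
      _ = (𝒯.biUnion id).card := (Finset.card_biUnion hdisj).symm
      _ ≤ (Finset.univ : Finset β).card := Finset.card_le_univ _
      _ = Fintype.card β := Finset.card_univ
  -- pass to integers
  set n := Fintype.card β with hn'
  have hcntF : ∀ T ∈ 𝒯, cnt (fullSlots β) T = T.card * (T.card - 1) :=
    fun T _ => cnt_fullSlots T
  -- the ψ inequality
  have hpsi : ∑ T ∈ 𝒯, ((T.card:ℤ)*((T.card:ℤ)-1) - δ*(T.card:ℤ) - σ + 2)
      ≤ (n:ℤ)*((n:ℤ)-1) - δ*(n:ℤ) - σ + 2 := by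
    rcases 𝒯.eq_empty_or_nonempty with h | hne
    · rw [h]; simp; linarith
    · obtain ⟨h2, hband⟩ := psi_sum δ σ 𝒯 hne (fun T hT => (htight T hT).1)
      refine le_trans hband ?_
      set m := ∑ T ∈ 𝒯, (T.card:ℤ) with hm
      have hmn : m ≤ (n:ℤ) := by
        rw [hm]
        calc ∑ T ∈ 𝒯, (T.card:ℤ) = ((∑ T ∈ 𝒯, T.card : ℕ) : ℤ) := by push_cast; ring
          _ ≤ (n:ℤ) := by exact_mod_cast hsum_le
      have hδn : (δ:ℤ) + 1 ≤ (n:ℤ) := by exact_mod_cast hn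
      nlinarith
  -- put everything together in ℤ
  rw [hJcard] at hA
  -- hA : rk = Σ cnt J T + outJ ; hB : n (n-1) = Σ cnt full T + outFull
  have hAz : (rk δ σ (fullSlots β) : ℤ)
      = (∑ T ∈ 𝒯, (cnt J T : ℤ))
        + (#(J.filter (fun g => ∀ T ∈ MTs δ σ J, ¬ inside g.1 T)) : ℤ) := by
    exact_mod_cast congrArg (Nat.cast (R := ℤ)) hA
  have hBz : ((n * (n - 1) : ℕ) : ℤ)
      = (∑ T ∈ 𝒯, (cnt (fullSlots β) T : ℤ))
        + (#((fullSlots β).filter (fun g => ∀ T ∈ MTs δ σ J, ¬ inside g.1 T)) : ℤ) := by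
    rw [← card_fullSlots]
    exact_mod_cast congrArg (Nat.cast (R := ℤ)) hB
  have hnz : ((n * (n - 1) : ℕ) : ℤ) = (n:ℤ) * ((n:ℤ) - 1) := by
    have : 1 ≤ n := by omega
    push_cast [this]
    ring
  -- rewrite each tight count
  have hcntJz : ∑ T ∈ 𝒯, (cnt J T : ℤ) = ∑ T ∈ 𝒯, ((δ:ℤ) * T.card + σ - 2) := by
    apply Finset.sum_congr rfl
    intro T hT
    have h0 := (htight T hT).2
    have h1 : ((δ * T.card + σ : ℕ) : ℤ) = ((cnt J T + 2 : ℕ) : ℤ) := by rw [h0]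
    push_cast at h1
    linarith
  have hcntFz : ∑ T ∈ 𝒯, (cnt (fullSlots β) T : ℤ)
      = ∑ T ∈ 𝒯, (T.card:ℤ) * ((T.card:ℤ) - 1) := by
    apply Finset.sum_congr rfl
    intro T hT
    rw [hcntF T hT]
    have h1 : 1 ≤ T.card := le_trans (by omega) (htight T hT).1
    push_cast [h1]
    ring
  -- final arithmetic
  have goal : (δ:ℤ) * n + σ ≤ (rk δ σ (fullSlots β) : ℤ) + 2 := by
    rw [hAz, hcntJz]
    rw [hnz, hcntFz] at hBz
    have houtz : (#((fullSlots β).filter (fun g => ∀ T ∈ MTs δ σ J, ¬ inside g.1 T)) : ℤ)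
        ≤ (#(J.filter (fun g => ∀ T ∈ MTs δ σ J, ¬ inside g.1 T)) : ℤ) := by
      exact_mod_cast houtle
    have hexp : ∑ T ∈ 𝒯, ((δ:ℤ) * T.card + σ - 2)
        = ∑ T ∈ 𝒯, ((T.card:ℤ)*((T.card:ℤ)-1))
          - ∑ T ∈ 𝒯, ((T.card:ℤ)*((T.card:ℤ)-1) - δ*(T.card:ℤ) - σ + 2) := by
      rw [← Finset.sum_sub_distrib]
      apply Finset.sum_congr rfl
      intro T _
      ring
    rw [hexp]
    linarith
  exact_mod_cast goal


/-! ### The step lemma -/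

lemma rk_step (δ σ : ℕ) (hδ : 2 ≤ δ)
    {S : Finset (Sym2 β × Bool)}
    (hSnd : ∀ g ∈ S, ¬ (g.1 : Sym2 β).IsDiag)
    {K : Finset (Sym2 β × Bool)} (hKS : K ⊆ S) (hK : Ind δ σ K)
    {XC : Finset β} (hXC2 : 2 ≤ XC.card)
    (hKin : ∀ g ∈ K, inside (g.1 : Sym2 β) XC)
    (hKcap : δ * XC.card + σ = K.card + 2)
    {e : Sym2 β} (hein : inside e XC) :
    rk δ σ (S ∪ {(e, false), (e, true)}) ≤ rk δ σ S := by
  classical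
  obtain ⟨J, hJS, hJ, hJcard, hJmax⟩ := exists_max_indep δ σ (by omega) S
  set 𝒯 := MTs δ σ J with h𝒯
  set 𝒯' := 𝒯.filter (fun T => 2 ≤ (T ∩ XC).card) with h𝒯'
  -- members of 𝒯' are maximal tight sets
  have h𝒯'sub : ∀ T ∈ 𝒯', T ∈ MTs δ σ J := fun T hT => (Finset.mem_filter.1 hT).1
  have h𝒯'tight : ∀ T ∈ 𝒯', TightFor δ σ J T := fun T hT => (mem_MTs.1 (h𝒯'sub T hT)).1
  -- every K-slot not inside some T ∈ 𝒯' belongs to J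
  have hKJ : ∀ g ∈ K, (∀ T ∈ 𝒯', ¬ inside g.1 T) → g ∈ J := by
    intro g hgK hgno
    by_contra hgJ
    obtain ⟨X, hXt, hXin⟩ := blocked_tight hJ hJmax (hKS hgK) hgJ (hK.1 g hgK)
    obtain ⟨T, hTm, hXT⟩ := exists_maxTight hXt
    have hgT : inside g.1 T := inside_mono hXT hXin
    have hgXC : inside g.1 XC := hKin g hgK
    have h2 : 2 ≤ (T ∩ XC).card :=
      two_le_card_of_inside (hK.1 g hgK) (inside_inter.2 ⟨hgT, hgXC⟩)
    exact hgno T (Finset.mem_filter.2 ⟨hTm, h2⟩) hgT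
  -- define X*
  set Xs : Finset β := XC ∪ 𝒯'.biUnion id with hXs
  have hXCs : XC ⊆ Xs := Finset.subset_union_left
  have hXs2 : 2 ≤ Xs.card := le_trans hXC2 (Finset.card_le_card hXCs)
  -- lower bound for cnt J Xs
  set P1 : Finset (Sym2 β × Bool) := J.filter (fun g => ∃ T ∈ 𝒯', inside g.1 T) with hP1
  set P2 : Finset (Sym2 β × Bool) :=
    K.filter (fun g => ∀ T ∈ 𝒯', ¬ inside g.1 T) with hP2
  have hP2J : P2 ⊆ J := by
    intro g hg
    rw [hP2, Finset.mem_filter] at hg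
    exact hKJ g hg.1 hg.2
  have hP1sub : P1 ⊆ J.filter (fun g => inside g.1 Xs) := by
    intro g hg
    rw [hP1, Finset.mem_filter] at hg
    obtain ⟨T, hT, hin⟩ := hg.2
    refine Finset.mem_filter.2 ⟨hg.1, inside_mono ?_ hin⟩
    intro a ha
    exact Finset.mem_union_right _ (Finset.mem_biUnion.2 ⟨T, hT, ha⟩)
  have hP2sub : P2 ⊆ J.filter (fun g => inside g.1 Xs) := by
    intro g hg
    refine Finset.mem_filter.2 ⟨hP2J hg, ?_⟩
    rw [hP2, Finset.mem_filter] at hg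
    exact inside_mono hXCs (hKin g hg.1)
  have hP12disj : Disjoint P1 P2 := by
    rw [Finset.disjoint_left]
    intro g hg1 hg2
    rw [hP1, Finset.mem_filter] at hg1
    rw [hP2, Finset.mem_filter] at hg2
    obtain ⟨T, hT, hin⟩ := hg1.2
    exact hg2.2 T hT hin
  have hcnt_ge : #P1 + #P2 ≤ cnt J Xs := by
    rw [← Finset.card_union_of_disjoint hP12disj]
    exact Finset.card_le_card (Finset.union_subset hP1sub hP2sub)
  -- compute #P1
  have hP1card : #P1 = ∑ T ∈ 𝒯', cnt J T := by
    have hbi : P1 = 𝒯'.biUnion (fun T => J.filter (fun g => inside g.1 T)) := by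
      ext g
      rw [hP1]
      simp only [Finset.mem_filter, Finset.mem_biUnion]
      tauto
    rw [hbi, Finset.card_biUnion]
    · rfl
    · intro T hT T' hT' hne
      rw [Function.onFun, Finset.disjoint_left]
      intro g hg hg'
      rw [Finset.mem_filter] at hg hg'
      exact slot_unique hJ hδ (h𝒯'sub T hT) (h𝒯'sub T' hT') hne (hJ.1 g hg.1) hg.2 hg'.2
  -- compute #P2
  have hP2card : #K = #(K.filter (fun g => ∃ T ∈ 𝒯', inside g.1 T)) + #P2 := by
    rw [hP2]
    have := Finset.card_filter_add_card_filter_not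
      (s := K) (p := fun g => ∃ T ∈ 𝒯', inside g.1 T)
    have heq : K.filter (fun g => ¬ ∃ T ∈ 𝒯', inside g.1 T)
        = K.filter (fun g => ∀ T ∈ 𝒯', ¬ inside g.1 T) := by
      apply Finset.filter_congr
      intro g _
      simp
    rw [heq] at this
    omega
  have hKfle : #(K.filter (fun g => ∃ T ∈ 𝒯', inside g.1 T)) ≤ ∑ T ∈ 𝒯', cnt K T := by
    have hsub : K.filter (fun g => ∃ T ∈ 𝒯', inside g.1 T)
        ⊆ 𝒯'.biUnion (fun T => K.filter (fun g => inside g.1 T)) := by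
      intro g hg
      rw [Finset.mem_filter] at hg
      obtain ⟨T, hT, hin⟩ := hg.2
      exact Finset.mem_biUnion.2 ⟨T, hT, Finset.mem_filter.2 ⟨hg.1, hin⟩⟩
    exact le_trans (Finset.card_le_card hsub) (Finset.card_biUnion_le)
  -- Xs is tight for J
  have hXstight : TightFor δ σ J Xs := by
    refine ⟨hXs2, ?_⟩
    have hup := hJ.2 Xs hXs2
    -- it suffices to prove the reverse inequality, in ℤ
    have hcard_le : Xs.card ≤ XC.card + ∑ T ∈ 𝒯', (T \ XC).card := by
      have hsub : Xs ⊆ XC ∪ 𝒯'.biUnion (fun T => T \ XC) := by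
        rw [hXs]
        intro a ha
        rcases Finset.mem_union.1 ha with h | h
        · exact Finset.mem_union_left _ h
        · obtain ⟨T, hT, haT⟩ := Finset.mem_biUnion.1 h
          by_cases haX : a ∈ XC
          · exact Finset.mem_union_left _ haX
          · exact Finset.mem_union_right _
              (Finset.mem_biUnion.2 ⟨T, hT, Finset.mem_sdiff.2 ⟨haT, haX⟩⟩)
      calc Xs.card ≤ (XC ∪ 𝒯'.biUnion (fun T => T \ XC)).card := Finset.card_le_card hsub
        _ ≤ XC.card + (𝒯'.biUnion (fun T => T \ XC)).card := Finset.card_union_le _ _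
        _ ≤ XC.card + ∑ T ∈ 𝒯', (T \ XC).card :=
            Nat.add_le_add_left Finset.card_biUnion_le _
    -- integer computation
    have hz : (δ:ℤ) * Xs.card + σ ≤ (cnt J Xs : ℤ) + 2 := by
      have h1 : (#P1 : ℤ) = ∑ T ∈ 𝒯', ((δ:ℤ) * T.card + σ - 2) := by
        rw [hP1card]
        push_cast
        apply Finset.sum_congr rfl
        intro T hT
        have h0 := (h𝒯'tight T hT).2
        have h1 : ((δ * T.card + σ : ℕ) : ℤ) = ((cnt J T + 2 : ℕ) : ℤ) := by rw [h0]
        push_cast at h1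
        linarith
      have h2 : (#P2 : ℤ) ≥ (#K : ℤ) - ∑ T ∈ 𝒯', ((δ:ℤ) * (T ∩ XC).card + σ - 2) := by
        have hcle : (#(K.filter (fun g => ∃ T ∈ 𝒯', inside g.1 T)) : ℤ)
            ≤ ∑ T ∈ 𝒯', ((δ:ℤ) * (T ∩ XC).card + σ - 2) := by
          calc (#(K.filter (fun g => ∃ T ∈ 𝒯', inside g.1 T)) : ℤ)
              ≤ ((∑ T ∈ 𝒯', cnt K T : ℕ) : ℤ) := by exact_mod_cast hKfle
            _ = ∑ T ∈ 𝒯', ((cnt K T : ℕ) : ℤ) := by push_cast; ring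
            _ ≤ ∑ T ∈ 𝒯', ((δ:ℤ) * (T ∩ XC).card + σ - 2) := by
                apply Finset.sum_le_sum
                intro T hT
                have h2c : 2 ≤ (T ∩ XC).card := (Finset.mem_filter.1 hT).2
                have hKTX : cnt K T = cnt K (T ∩ XC) := by
                  apply le_antisymm
                  · apply Finset.card_le_card
                    intro g hg
                    rw [Finset.mem_filter] at hg ⊢
                    exact ⟨hg.1, inside_inter.2 ⟨hg.2, hKin g hg.1⟩⟩
                  · exact cnt_mono_right K Finset.inter_subset_left
                have := hK.2 (T ∩ XC) h2c
                rw [← hKTX] at this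
                have hcast : ((cnt K T + 2 : ℕ) : ℤ) ≤ ((δ * (T ∩ XC).card + σ : ℕ) : ℤ) := by
                  exact_mod_cast this
                push_cast at hcast
                linarith
        have hKe : (#K : ℤ) = (#(K.filter (fun g => ∃ T ∈ 𝒯', inside g.1 T)) : ℤ) + (#P2 : ℤ) := by
          exact_mod_cast congrArg (Nat.cast (R := ℤ)) hP2card
        linarith
      have h3 : (#K : ℤ) = (δ:ℤ) * XC.card + σ - 2 := by
        have : ((δ * XC.card + σ : ℕ) : ℤ) = ((K.card + 2 : ℕ) : ℤ) := by rw [hKcap]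
        push_cast at this
        linarith
      have h4 : (cnt J Xs : ℤ) ≥ (#P1 : ℤ) + (#P2 : ℤ) := by exact_mod_cast hcnt_ge
      have h5 : ∑ T ∈ 𝒯', ((δ:ℤ) * T.card + σ - 2)
          - ∑ T ∈ 𝒯', ((δ:ℤ) * (T ∩ XC).card + σ - 2)
          = (δ:ℤ) * ∑ T ∈ 𝒯', ((T \ XC).card : ℤ) := by
        rw [← Finset.sum_sub_distrib, Finset.mul_sum]
        apply Finset.sum_congr rfl
        intro T hT
        have hsplit : (T ∩ XC).card + (T \ XC).card = T.card :=
          Finset.card_inter_add_card_sdiff T XC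
        have hTz : (T.card : ℤ) = ((T ∩ XC).card : ℤ) + ((T \ XC).card : ℤ) := by
          exact_mod_cast (congrArg (Nat.cast (R := ℤ)) hsplit).symm
        rw [hTz]
        ring
      have h6 : (Xs.card : ℤ) ≤ (XC.card : ℤ) + ∑ T ∈ 𝒯', ((T \ XC).card : ℤ) := by
        have : ((XC.card + ∑ T ∈ 𝒯', (T \ XC).card : ℕ) : ℤ) ≥ (Xs.card : ℤ) := by
          exact_mod_cast hcard_le
        push_cast at this
        linarith
      have hδ0 : (0:ℤ) ≤ (δ:ℤ) := Int.natCast_nonneg δ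
      have h7 : (δ:ℤ) * (Xs.card : ℤ)
          ≤ (δ:ℤ) * ((XC.card : ℤ) + ∑ T ∈ 𝒯', ((T \ XC).card : ℤ)) :=
        mul_le_mul_of_nonneg_left h6 hδ0
      rw [mul_add] at h7
      linarith
    have hupz : ((cnt J Xs + 2 : ℕ) : ℤ) ≤ ((δ * Xs.card + σ : ℕ) : ℤ) := by exact_mod_cast hup
    push_cast at hupz
    have : (δ:ℤ) * Xs.card + σ = (cnt J Xs : ℤ) + 2 := by linarith
    exact_mod_cast this
  -- maximal tight superset of Xs
  obtain ⟨Ts, hTs, hXsTs⟩ := exists_maxTight hXstight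
  have heTs : inside e Ts := inside_mono (hXCs.trans hXsTs) hein
  -- now bound any independent subset of the enlarged ground set
  have hbound : ∀ I : Finset (Sym2 β × Bool), I ⊆ S ∪ {(e, false), (e, true)} →
      Ind δ σ I → I.card ≤ J.card := by
    intro I hIsub hI
    have hIA := card_eq_sum_MTs (W := I) hJ hδ hI.1
    have hJA := card_eq_sum_MTs (W := J) hJ hδ hJ.1
    have hterm : ∀ T ∈ MTs δ σ J, cnt I T ≤ cnt J T := by
      intro T hT
      have ht := (mem_MTs.1 hT).1
      have ht2 := ht.2
      have := hI.2 T ht.1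
      omega
    have hout : I.filter (fun g => ∀ T ∈ MTs δ σ J, ¬ inside g.1 T)
        ⊆ J.filter (fun g => ∀ T ∈ MTs δ σ J, ¬ inside g.1 T) := by
      intro g hg
      rw [Finset.mem_filter] at hg ⊢
      refine ⟨?_, hg.2⟩
      have hgS : g ∈ S := by
        rcases Finset.mem_union.1 (hIsub hg.1) with h | h
        · exact h
        · exfalso
          have hg1e : (g.1 : Sym2 β) = e := by
            rcases Finset.mem_insert.1 h with h' | h'
            · rw [h']
            · rw [Finset.mem_singleton.1 h']
          exact hg.2 Ts hTs (by rw [hg1e]; exact heTs)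
      by_contra hgJ
      obtain ⟨X, hXt, hXin⟩ := blocked_tight hJ hJmax hgS hgJ (hI.1 g hg.1)
      obtain ⟨T, hTm, hXT⟩ := exists_maxTight hXt
      exact hg.2 T hTm (inside_mono hXT hXin)
    calc I.card = (∑ T ∈ MTs δ σ J, cnt I T)
          + #(I.filter (fun g => ∀ T ∈ MTs δ σ J, ¬ inside g.1 T)) := hIA
      _ ≤ (∑ T ∈ MTs δ σ J, cnt J T)
          + #(J.filter (fun g => ∀ T ∈ MTs δ σ J, ¬ inside g.1 T)) := by
          apply Nat.add_le_add
          · exact Finset.sum_le_sum hterm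
          · exact Finset.card_le_card hout
      _ = J.card := hJA.symm
  -- conclude
  obtain ⟨I, hIsub, hI, hIcard, _⟩ :=
    exists_max_indep δ σ (by omega) (S ∪ {(e, false), (e, true)})
  rw [← hIcard, ← hJcard]
  exact hbound I hIsub hI


/-! ### Graph-side counting -/

section GraphSide

variable {V : Type*} [Fintype V] [DecidableEq V]

/-- number of endpoints of `q` lying in `S` -/
noncomputable def tS (S : Finset V) (q : Sym2 V) : ℕ := #(S.filter (· ∈ q))

lemma tS_pair {a b : V} (hab : a ≠ b) (S : Finset V) :
    tS S s(a, b) = (if a ∈ S then 1 else 0) + (if b ∈ S then 1 else 0) := by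
  classical
  rw [tS]
  have : S.filter (· ∈ s(a, b)) = S.filter (fun x => x = a) ∪ S.filter (fun x => x = b) := by
    rw [← Finset.filter_or]
    apply Finset.filter_congr
    intro x _
    simp [Sym2.mem_iff]
  rw [this, Finset.card_union_of_disjoint, Finset.filter_eq', Finset.filter_eq']
  · split <;> split <;> simp
  · rw [Finset.disjoint_left]
    intro x hx hx'
    rw [Finset.mem_filter] at hx hx'
    exact hab (hx.2 ▸ hx'.2 ▸ rfl)

lemma tS_inside {q : Sym2 V} (hq : ¬ q.IsDiag) (S : Finset V) :
    inside q S ↔ tS S q = 2 := by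
  induction q using Sym2.inductionOn with
  | hf a b =>
    have hab : a ≠ b := by simpa [Sym2.mk_isDiag_iff] using hq
    rw [tS_pair hab]
    constructor
    · intro h
      have ha : a ∈ S := h a (by simp)
      have hb : b ∈ S := h b (by simp)
      simp [ha, hb]
    · intro h
      have : a ∈ S ∧ b ∈ S := by
        by_contra hc
        rw [not_and_or] at hc
        rcases hc with hc | hc <;> simp [hc] at h <;> split at h <;> omega
      intro x hx
      rw [Sym2.mem_iff] at hx
      rcases hx with rfl | rfl
      · exact this.1
      · exact this.2

lemma tS_le_two {q : Sym2 V} (hq : ¬ q.IsDiag) (S : Finset V) : tS S q ≤ 2 := by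
  induction q using Sym2.inductionOn with
  | hf a b =>
    have hab : a ≠ b := by simpa [Sym2.mk_isDiag_iff] using hq
    rw [tS_pair hab]
    split <;> split <;> omega

variable (F : SimpleGraph V)

open scoped Classical in
/-- degree sum over `S` counts inside edges twice and crossing edges once -/
lemma degree_sum_eq (S : Finset V) :
    ∑ x ∈ S, F.degree x
      = 2 * #(F.edgeFinset.filter (fun q => inside q S))
        + #(F.edgeFinset.filter (fun q => tS S q = 1)) := by
  classical
  have hdeg : ∀ x : V, F.degree x = #(F.edgeFinset.filter (fun q => x ∈ q)) := by
    intro x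
    rw [← SimpleGraph.card_incidenceFinset_eq_degree]
    congr 1
    ext q
    rw [SimpleGraph.mem_incidenceFinset, Finset.mem_filter, SimpleGraph.mem_edgeFinset]
    exact Iff.rfl
  have hswap : ∑ x ∈ S, F.degree x = ∑ q ∈ F.edgeFinset, tS S q := by
    calc ∑ x ∈ S, F.degree x
        = ∑ x ∈ S, ∑ q ∈ F.edgeFinset, (if x ∈ q then 1 else 0) := by
          apply Finset.sum_congr rfl
          intro x _
          rw [hdeg x, Finset.card_filter]
      _ = ∑ q ∈ F.edgeFinset, ∑ x ∈ S, (if x ∈ q then 1 else 0) := Finset.sum_comm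
      _ = ∑ q ∈ F.edgeFinset, tS S q := by
          apply Finset.sum_congr rfl
          intro q _
          rw [tS, Finset.card_filter]
  rw [hswap]
  have hnd : ∀ q ∈ F.edgeFinset, ¬ q.IsDiag := by
    intro q hq
    exact F.not_isDiag_of_mem_edgeSet (SimpleGraph.mem_edgeFinset.1 hq)
  -- split the sum by the value of tS
  rw [← Finset.sum_filter_add_sum_filter_not F.edgeFinset (fun q => tS S q = 2)]
  have h2 : ∑ q ∈ F.edgeFinset.filter (fun q => tS S q = 2), tS S q
      = 2 * #(F.edgeFinset.filter (fun q => tS S q = 2)) := by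
    rw [Finset.sum_congr rfl (fun q hq => (Finset.mem_filter.1 hq).2), Finset.sum_const]
    ring
  have h1 : ∑ q ∈ F.edgeFinset.filter (fun q => ¬ tS S q = 2), tS S q
      = #(F.edgeFinset.filter (fun q => tS S q = 1)) := by
    rw [← Finset.sum_filter_add_sum_filter_not
      (F.edgeFinset.filter (fun q => ¬ tS S q = 2)) (fun q => tS S q = 1)]
    have ha : ∑ q ∈ (F.edgeFinset.filter (fun q => ¬ tS S q = 2)).filter
        (fun q => tS S q = 1), tS S q
        = #((F.edgeFinset.filter (fun q => ¬ tS S q = 2)).filter (fun q => tS S q = 1)) := by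
      rw [Finset.sum_congr rfl (fun q hq => (Finset.mem_filter.1 hq).2), Finset.sum_const]
      ring
    have hb : ∑ q ∈ (F.edgeFinset.filter (fun q => ¬ tS S q = 2)).filter
        (fun q => ¬ tS S q = 1), tS S q = 0 := by
      apply Finset.sum_eq_zero
      intro q hq
      rw [Finset.mem_filter, Finset.mem_filter] at hq
      have := tS_le_two (hnd q hq.1.1) S
      omega
    have hc : (F.edgeFinset.filter (fun q => ¬ tS S q = 2)).filter (fun q => tS S q = 1)
        = F.edgeFinset.filter (fun q => tS S q = 1) := by
      rw [Finset.filter_filter]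
      apply Finset.filter_congr
      intro q _
      constructor
      · exact fun h => h.2
      · intro h; exact ⟨by omega, h⟩
    rw [ha, hb, hc, Nat.add_zero]
  have hinside : F.edgeFinset.filter (fun q => inside q S)
      = F.edgeFinset.filter (fun q => tS S q = 2) := by
    apply Finset.filter_congr
    intro q hq
    simpa using tS_inside (hnd q hq) S
  rw [h2, h1, hinside]

/-- crossing existence from a walk -/
lemma walk_cross {G : SimpleGraph V} {S : Finset V} {x y : V} (w : G.Walk x y)
    (hx : x ∈ S) (hy : y ∉ S) : ∃ a b, G.Adj a b ∧ a ∈ S ∧ b ∉ S := by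
  induction w with
  | nil => exact absurd hx hy
  | @cons u z r h p ih =>
    by_cases hz : z ∈ S
    · exact ih hz hy
    · exact ⟨u, z, h, hx, hz⟩

open scoped Classical in
lemma cross_one (hc : F.Connected) {S : Finset V} (hS : S.Nonempty) (hS' : S ≠ Finset.univ) :
    1 ≤ #(F.edgeFinset.filter (fun q => tS S q = 1)) := by
  classical
  obtain ⟨x, hx⟩ := hS
  obtain ⟨y, hy⟩ : ∃ y, y ∉ S := by
    by_contra h
    push_neg at h
    exact hS' (Finset.eq_univ_iff_forall.2 h)
  obtain ⟨a, b, hab, ha, hb⟩ := walk_cross (hc x y).some hx hy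
  have hne : a ≠ b := hab.ne
  have hmem : s(a, b) ∈ F.edgeFinset.filter (fun q => tS S q = 1) := by
    rw [Finset.mem_filter, SimpleGraph.mem_edgeFinset]
    refine ⟨hab, ?_⟩
    rw [tS_pair hne]
    simp [ha, hb]
  exact Finset.card_pos.2 ⟨_, hmem⟩

open scoped Classical in
lemma cross_two (h2ec : TwoEdgeConnected F) {S : Finset V} (hS : S.Nonempty)
    (hS' : S ≠ Finset.univ) :
    2 ≤ #(F.edgeFinset.filter (fun q => tS S q = 1)) := by
  classical
  by_contra h
  push_neg at h
  set cr := F.edgeFinset.filter (fun q => tS S q = 1) with hcr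
  have hcard : (↑cr : Set (Sym2 V)).ncard ≤ 1 := by
    rw [Set.ncard_coe_finset]
    omega
  have hconn := h2ec ↑cr hcard
  obtain ⟨x, hx⟩ := hS
  obtain ⟨y, hy⟩ : ∃ y, y ∉ S := by
    by_contra hcon
    push_neg at hcon
    exact hS' (Finset.eq_univ_iff_forall.2 hcon)
  obtain ⟨a, b, hab, ha, hb⟩ := walk_cross (hconn x y).some hx hy
  rw [SimpleGraph.deleteEdges_adj] at hab
  apply hab.2
  rw [Finset.mem_coe, hcr, Finset.mem_filter, SimpleGraph.mem_edgeFinset]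
  refine ⟨hab.1, ?_⟩
  rw [tS_pair hab.1.ne]
  simp [ha, hb]


open scoped Classical in
/-- The key sparsity property of a copy of `F` minus an edge. -/
lemma key_sparsity (δ σ ℓ : ℕ) (hδ : 2 ≤ δ)
    (hmindeg : ∀ x : V, δ ≤ F.degree x)
    (hℓ : ℓ = #F.edgeFinset)
    (hσ : δ * Fintype.card V + σ = 2 * ℓ)
    (hcase : (Even δ ∧ F.Connected) ∨ TwoEdgeConnected F)
    {e₀ : Sym2 V} (he₀ : e₀ ∈ F.edgeFinset)
    (S : Finset V) (hS2 : 2 ≤ S.card) :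
    2 * #((F.edgeFinset.erase e₀).filter (fun q => inside q S)) + 2 ≤ δ * S.card + σ := by
  classical
  set E := F.edgeFinset with hE
  set IN := #(E.filter (fun q => inside q S)) with hIN
  set CR := #(E.filter (fun q => tS S q = 1)) with hCR
  set A := ∑ x ∈ S, F.degree x with hA
  have hid : A = 2 * IN + CR := degree_sum_eq F S
  -- the erased filter
  have herase : (E.erase e₀).filter (fun q => inside q S)
      = (E.filter (fun q => inside q S)).erase e₀ := by
    ext q
    simp only [Finset.mem_filter, Finset.mem_erase]
    tauto
  -- total degree bound
  have hAle : A ≤ δ * S.card + σ := by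
    have hsplit : ∑ x ∈ Finset.univ, F.degree x
        = A + ∑ x ∈ Finset.univ \ S, F.degree x := by
      rw [hA, ← Finset.sum_sdiff (Finset.subset_univ S)]
      ring
    have htot : ∑ x ∈ Finset.univ, F.degree x = 2 * ℓ := by
      rw [hℓ]
      exact F.sum_degrees_eq_twice_card_edges
    have hlow : δ * (Finset.univ \ S).card ≤ ∑ x ∈ Finset.univ \ S, F.degree x := by
      calc δ * (Finset.univ \ S).card = ∑ _x ∈ Finset.univ \ S, δ := by
            rw [Finset.sum_const]; ring
        _ ≤ ∑ x ∈ Finset.univ \ S, F.degree x := Finset.sum_le_sum (fun x _ => hmindeg x)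
    have hcards : (Finset.univ \ S).card + S.card = Fintype.card V := by
      rw [Finset.card_sdiff_of_subset (Finset.subset_univ S), Finset.card_univ]
      have := Finset.card_le_univ S
      omega
    have hprod : δ * (Finset.univ \ S).card + δ * S.card = δ * Fintype.card V := by
      rw [← Nat.mul_add, hcards]
    omega
  by_cases hSu : S = Finset.univ
  · -- S is everything
    have hcard : #((E.erase e₀).filter (fun q => inside q S)) ≤ ℓ - 1 := by
      calc #((E.erase e₀).filter (fun q => inside q S)) ≤ #(E.erase e₀) :=
            Finset.card_filter_le _ _
        _ = ℓ - 1 := by rw [Finset.card_erase_of_mem he₀, hℓ]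
    have hl1 : 1 ≤ ℓ := by
      rw [hℓ]
      exact Finset.card_pos.2 ⟨e₀, he₀⟩
    have hSv : S.card = Fintype.card V := by rw [hSu, Finset.card_univ]
    rw [hSv]
    omega
  · -- S is a proper subset
    have hSne : S.Nonempty := Finset.card_pos.1 (by omega)
    -- the count after erasing
    have hIN' : #((E.erase e₀).filter (fun q => inside q S))
        = IN - (if inside e₀ S then 1 else 0) := by
      rw [herase]
      by_cases hin : inside e₀ S
      · rw [if_pos hin, Finset.card_erase_of_mem (Finset.mem_filter.2 ⟨he₀, hin⟩)]
      · rw [if_neg hin, Nat.sub_zero, hIN]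
        congr 1
        exact Finset.erase_eq_of_notMem (fun hmem => hin (Finset.mem_filter.1 hmem).2)
    rcases hcase with ⟨heven, hconn⟩ | h2ec
    · -- even degree and connected: parity argument
      have hCR1 : 1 ≤ CR := cross_one F hconn hSne hSu
      obtain ⟨k, hk⟩ := heven
      have hpar1 : δ * S.card = 2 * (k * S.card) := by rw [hk]; ring
      have hpar2 : δ * Fintype.card V = 2 * (k * Fintype.card V) := by rw [hk]; ring
      rw [hIN']
      split <;> omega
    · -- two-edge-connected: at least two crossing edges
      have hCR2 : 2 ≤ CR := cross_two F h2ec hSne hSu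
      rw [hIN']
      split <;> omega

end GraphSide

/-! ### Doubled edge sets of graphs and the bootstrap step -/

section Boot

variable {β : Type*} [Fintype β] [DecidableEq β]

noncomputable def Dbl (G : SimpleGraph β) : Finset (Sym2 β × Bool) :=
  Finset.univ.filter (fun g => g.1 ∈ G.edgeSet)

lemma mem_Dbl {G : SimpleGraph β} {g : Sym2 β × Bool} :
    g ∈ Dbl G ↔ g.1 ∈ G.edgeSet := by simp [Dbl]

lemma Dbl_nondiag {G : SimpleGraph β} : ∀ g ∈ Dbl G, ¬ (g.1 : Sym2 β).IsDiag :=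
  fun g hg => G.not_isDiag_of_mem_edgeSet (mem_Dbl.1 hg)

open scoped Classical in
lemma card_Dbl (G : SimpleGraph β) : #(Dbl G) = 2 * #G.edgeFinset := by
  classical
  have : Dbl G = G.edgeFinset ×ˢ (Finset.univ : Finset Bool) := by
    ext g
    simp [mem_Dbl, Finset.mem_product, SimpleGraph.mem_edgeFinset]
  rw [this, Finset.card_product]
  simp [Nat.mul_comm]

lemma Dbl_top : Dbl (⊤ : SimpleGraph β) = fullSlots β := by
  ext g
  rw [mem_Dbl, mem_fullSlots, SimpleGraph.edgeSet_top]
  exact Iff.rfl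

/-- product with `Bool` doubles counts -/
lemma cnt_product (s : Finset (Sym2 β)) (X : Finset β) :
    cnt (s ×ˢ (Finset.univ : Finset Bool)) X = 2 * #(s.filter (fun p => inside p X)) := by
  classical
  have : (s ×ˢ (Finset.univ : Finset Bool)).filter (fun g => inside g.1 X)
      = (s.filter (fun p => inside p X)) ×ˢ (Finset.univ : Finset Bool) := by
    ext g
    simp only [Finset.mem_filter, Finset.mem_product]
    tauto
  rw [cnt, this, Finset.card_product]
  simp [Nat.mul_comm]

open scoped Classical in
lemma rk_boot {α : Type*} [Fintype α] (F : SimpleGraph α)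
    (δ σ ℓ : ℕ) (hδ : 2 ≤ δ)
    (hmindeg : ∀ x : α, δ ≤ F.degree x)
    (hℓ : ℓ = #F.edgeFinset)
    (hσ : δ * Fintype.card α + σ = 2 * ℓ)
    (hcase : (Even δ ∧ F.Connected) ∨ TwoEdgeConnected F)
    {G G' : SimpleGraph β} (hb : BootStep F G G') :
    rk δ σ (Dbl G') ≤ rk δ σ (Dbl G) := by
  classical
  obtain ⟨x, y, hxy, hnadj, heq, φ, hinj, u, w, huw, hphiu, hphiw⟩ := hb
  set e : Sym2 β := s(x, y) with he
  have hed : ¬ e.IsDiag := by simp [he, Sym2.mk_isDiag_iff, hxy]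
  -- the new ground set
  have hDbl' : Dbl G' = Dbl G ∪ {(e, false), (e, true)} := by
    ext g
    rw [Finset.mem_union, mem_Dbl, mem_Dbl, heq, SimpleGraph.edgeSet_sup,
      SimpleGraph.edgeSet_fromEdgeSet]
    constructor
    · rintro (h | h)
      · exact Or.inl h
      · right
        have hg1 : g.1 = e := h.1
        have hgeq : g = (e, g.2) := Prod.ext hg1 rfl
        rw [hgeq]
        rcases Bool.eq_false_or_eq_true g.2 with h2 | h2 <;> rw [h2] <;> simp
    · rintro (h | h)
      · exact Or.inl h
      · rcases Finset.mem_insert.1 h with h | h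
        · right
          rw [h]
          exact ⟨rfl, hed⟩
        · right
          rw [Finset.mem_singleton.1 h]
          exact ⟨rfl, hed⟩
  -- copy data
  set e₀ : Sym2 α := s(u, w) with he₀
  have he₀m : e₀ ∈ F.edgeFinset := SimpleGraph.mem_edgeFinset.2 huw
  set XC : Finset β := Finset.univ.image φ with hXC
  set KE : Finset (Sym2 β) := (F.edgeFinset.erase e₀).image (Sym2.map φ) with hKE
  set K : Finset (Sym2 β × Bool) := KE ×ˢ (Finset.univ : Finset Bool) with hK
  have hmapinj : Function.Injective (Sym2.map φ) := Sym2.map.injective hinj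
  have hmape₀ : Sym2.map φ e₀ = e := by
    rw [he₀, he, Sym2.map_pair_eq, hphiu, hphiw]
  -- K lives inside Dbl G
  have hKS : K ⊆ Dbl G := by
    intro g hg
    rw [hK, Finset.mem_product] at hg
    obtain ⟨q, hq, hqe⟩ := Finset.mem_image.1 hg.1
    rw [Finset.mem_erase, SimpleGraph.mem_edgeFinset] at hq
    have hmem' : g.1 ∈ G'.edgeSet := by
      rw [← hqe]
      exact SimpleGraph.Hom.map_mem_edgeSet φ hq.2
    rw [mem_Dbl]
    rw [heq, SimpleGraph.edgeSet_sup] at hmem'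
    rcases hmem' with h | h
    · exact h
    · exfalso
      rw [SimpleGraph.edgeSet_fromEdgeSet] at h
      have : g.1 = e := h.1
      rw [← hqe, ← hmape₀] at this
      exact hq.1 (hmapinj this)
  -- K slots are inside XC
  have hKin : ∀ g ∈ K, inside (g.1 : Sym2 β) XC := by
    intro g hg
    rw [hK, Finset.mem_product] at hg
    obtain ⟨q, _, hqe⟩ := Finset.mem_image.1 hg.1
    intro a ha
    rw [← hqe] at ha
    obtain ⟨c, _, hc⟩ := Sym2.mem_map.1 ha
    rw [hXC]
    exact Finset.mem_image.2 ⟨c, Finset.mem_univ c, hc⟩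
  -- counting K
  have hKEcard : #KE = ℓ - 1 := by
    rw [hKE, Finset.card_image_of_injective _ hmapinj,
      Finset.card_erase_of_mem he₀m, hℓ]
  have hXCcard : #XC = Fintype.card α := by
    rw [hXC, Finset.card_image_of_injective _ hinj, Finset.card_univ]
  have hl1 : 1 ≤ ℓ := by
    rw [hℓ]
    exact Finset.card_pos.2 ⟨e₀, he₀m⟩
  have hKcard : #K = 2 * (ℓ - 1) := by
    rw [hK, Finset.card_product, hKEcard]
    simp [Nat.mul_comm]
  have hKcap : δ * XC.card + σ = #K + 2 := by
    rw [hXCcard, hKcard]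
    omega
  -- independence of K
  have hKind : Ind δ σ K := by
    constructor
    · intro g hg
      exact Dbl_nondiag g (hKS hg)
    · intro X hX2
      have hcnt : cnt K X = 2 * #(KE.filter (fun p => inside p X)) := cnt_product KE X
      -- transfer to α
      set S : Finset α := Finset.univ.filter (fun a => φ a ∈ X) with hS
      have hfilter : KE.filter (fun p => inside p X)
          = ((F.edgeFinset.erase e₀).filter (fun q => inside q S)).image (Sym2.map φ) := by
        rw [hKE, Finset.filter_image]
        congr 1
        apply Finset.filter_congr
        intro q _
        show inside (Sym2.map φ q) X ↔ inside q S
        constructor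
        · intro h a ha
          rw [hS, Finset.mem_filter]
          exact ⟨Finset.mem_univ a, h (φ a) (Sym2.mem_map.2 ⟨a, ha, rfl⟩)⟩
        · intro h b hb
          obtain ⟨c, hc, rfl⟩ := Sym2.mem_map.1 hb
          have := h c hc
          rw [hS, Finset.mem_filter] at this
          exact this.2
      have hcard2 : #(KE.filter (fun p => inside p X))
          = #((F.edgeFinset.erase e₀).filter (fun q => inside q S)) := by
        rw [hfilter, Finset.card_image_of_injective _ hmapinj]
      have hScard : S.card ≤ X.card := by
        have : S.image φ ⊆ X := by
          intro b hb
          obtain ⟨a, ha, rfl⟩ := Finset.mem_image.1 hb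
          rw [hS, Finset.mem_filter] at ha
          exact ha.2
        calc S.card = #(S.image φ) := (Finset.card_image_of_injective _ hinj).symm
          _ ≤ X.card := Finset.card_le_card this
      rcases Nat.lt_or_ge S.card 2 with hSlt | hSge
      · -- small S: no edges inside
        have hzero : #((F.edgeFinset.erase e₀).filter (fun q => inside q S)) = 0 := by
          rw [Finset.card_eq_zero, Finset.filter_eq_empty_iff]
          intro q hq hins
          have hqnd : ¬ q.IsDiag := F.not_isDiag_of_mem_edgeSet
            (SimpleGraph.mem_edgeFinset.1 (Finset.mem_of_mem_erase hq))
          exact absurd (two_le_card_of_inside hqnd hins) (by omega)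
        rw [hcnt, hcard2, hzero]
        have : 2 * 2 ≤ δ * X.card := Nat.mul_le_mul hδ hX2
        omega
      · have hkey := key_sparsity F δ σ ℓ hδ hmindeg hℓ hσ hcase he₀m S hSge
        rw [hcnt, hcard2]
        have hmono : δ * S.card ≤ δ * X.card := Nat.mul_le_mul_left δ hScard
        omega
  -- apply the step lemma
  have hXC2 : 2 ≤ XC.card := by
    have hx' : x ∈ XC := by
      rw [hXC, ← hphiu]
      exact Finset.mem_image.2 ⟨u, Finset.mem_univ u, rfl⟩
    have hy' : y ∈ XC := by
      rw [hXC, ← hphiw]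
      exact Finset.mem_image.2 ⟨w, Finset.mem_univ w, rfl⟩
    exact Finset.one_lt_card.2 ⟨x, hx', y, hy', hxy⟩
  have hein : inside e XC := by
    intro a ha
    rw [he, Sym2.mem_iff] at ha
    rcases ha with rfl | rfl
    · rw [hXC, ← hphiu]
      exact Finset.mem_image.2 ⟨u, Finset.mem_univ u, rfl⟩
    · rw [hXC, ← hphiw]
      exact Finset.mem_image.2 ⟨w, Finset.mem_univ w, rfl⟩
  rw [hDbl']
  exact rk_step δ σ hδ Dbl_nondiag hKS hKind hXC2 hKin hKcap hein

end Boot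

/-! ### Main chain -/

open scoped Classical in
theorem main_ineq {α : Type*} [Fintype α] (F : SimpleGraph α)
    (δ ℓ : ℕ) (hδ : 2 ≤ δ)
    (hmindeg : ∀ x : α, δ ≤ F.degree x)
    (hmineq : ∃ x : α, F.degree x = δ)
    (hℓ : ℓ = #F.edgeFinset)
    (hcase : (Even δ ∧ F.Connected) ∨ TwoEdgeConnected F)
    (n : ℕ) (hn : Fintype.card α ≤ n)
    {H : SimpleGraph (Fin n)} (hws : WeaklySat F H) :
    δ * n + (2 * ℓ - δ * Fintype.card α) ≤ 2 * #H.edgeFinset + 2 := by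
  classical
  set v := Fintype.card α with hv
  -- δ v ≤ 2 ℓ
  have hsum : ∑ x : α, F.degree x = 2 * ℓ := by
    rw [hℓ]
    exact F.sum_degrees_eq_twice_card_edges
  have hδv : δ * v ≤ 2 * ℓ := by
    rw [← hsum, hv, ← Finset.card_univ]
    calc δ * #(Finset.univ : Finset α) = ∑ _x : α, δ := by rw [Finset.sum_const]; ring
      _ ≤ ∑ x : α, F.degree x := Finset.sum_le_sum (fun x _ => hmindeg x)
  set σ := 2 * ℓ - δ * v with hσdef
  have hσ : δ * v + σ = 2 * ℓ := by omega
  -- v ≥ δ + 1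
  have hvδ : δ + 1 ≤ v := by
    obtain ⟨x₀, hx₀⟩ := hmineq
    have := F.degree_lt_card_verts x₀
    omega
  -- 2ℓ ≤ v (v-1)
  have h2ℓ : 2 * ℓ ≤ v * (v - 1) := by
    have h1 : #(Dbl F) = 2 * ℓ := by rw [card_Dbl, hℓ]
    have h2 : Dbl F ⊆ fullSlots α := by
      intro g hg
      exact mem_fullSlots.2 (Dbl_nondiag g hg)
    have h3 := Finset.card_le_card h2
    rw [h1, card_fullSlots] at h3
    exact h3
  -- the process: rank of Dbl ⊤ is at most rank of Dbl H
  have hproc : rk δ σ (Dbl (⊤ : SimpleGraph (Fin n))) ≤ rk δ σ (Dbl H) := by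
    unfold WeaklySat at hws
    induction hws using Relation.ReflTransGen.head_induction_on with
    | refl => exact le_refl _
    | head hstep _ ih =>
      exact le_trans ih (rk_boot F δ σ ℓ hδ hmindeg hℓ (by rw [← hv]; exact hσ) hcase hstep)
  -- the base bound
  have hnn : δ + 1 ≤ Fintype.card (Fin n) := by
    rw [Fintype.card_fin]
    omega
  have hψ : (δ:ℤ) * Fintype.card (Fin n) + σ
      ≤ (Fintype.card (Fin n) : ℤ) * ((Fintype.card (Fin n) : ℤ) - 1) + 2 := by
    rw [Fintype.card_fin]
    have hc1 : (δ:ℤ) + 1 ≤ (v:ℤ) := by exact_mod_cast hvδ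
    have hc2 : (v:ℤ) ≤ (n:ℤ) := by exact_mod_cast hn
    have hc3 : (σ:ℤ) = 2 * (ℓ:ℤ) - (δ:ℤ) * (v:ℤ) := by
      have : ((δ * v + σ : ℕ) : ℤ) = ((2 * ℓ : ℕ) : ℤ) := by rw [hσ]
      push_cast at this
      linarith
    have hc4 : 2 * (ℓ:ℤ) ≤ (v:ℤ) * ((v:ℤ) - 1) := by
      have hv1 : 1 ≤ v := by omega
      have : ((2 * ℓ : ℕ) : ℤ) ≤ ((v * (v - 1) : ℕ) : ℤ) := by exact_mod_cast h2ℓ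
      push_cast [hv1] at this
      linarith
    nlinarith
  have hbase := rk_fullSlots_ge (β := Fin n) δ σ hδ hnn hψ
  rw [← Dbl_top] at hbase
  -- conclude
  have hchain : rk δ σ (Dbl H) ≤ 2 * #H.edgeFinset := by
    rw [← card_Dbl]
    exact rk_le_card δ σ (Dbl H)
  rw [Fintype.card_fin] at hbase
  omega

end WS2

open SimpleGraph


open SimpleGraph

/-- For a graph `F` without isolated vertices, with `v` vertices, `ℓ` edges
and minimum degree `δ ≥ 2`, such that either `δ` is even and `F` is connected, or `F` is
2-edge-connected, for every `n ≥ v`, `wsat(n,F) ≥ (δ/2)·(n − v) + ℓ − 1`. -/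
theorem wsat_lower_bound_even_or_two_edge_connected {α : Type*} [Fintype α]
    (F : SimpleGraph α)
    (v ℓ δ : ℕ) (hv : v = Fintype.card α) (hℓ : ℓ = F.edgeSet.ncard)
    (hiso : ∀ x : α, ∃ y, F.Adj x y)
    (hδ2 : 2 ≤ δ)
    (hmindeg : ∀ x : α, δ ≤ (F.neighborSet x).ncard)
    (hmineq : ∃ x : α, (F.neighborSet x).ncard = δ)
    (hcase : (Even δ ∧ F.Connected) ∨ TwoEdgeConnected F)
    (n : ℕ) (hn : v ≤ n) :
    ((δ : ℝ) / 2) * ((n : ℝ) - (v : ℝ)) + (ℓ : ℝ) - 1 ≤ (wsat F n : ℝ) := by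
  classical
  -- degree conversions
  have hdeg : ∀ x : α, (F.neighborSet x).ncard = F.degree x := by
    intro x
    rw [← SimpleGraph.card_neighborFinset_eq_degree, ← Set.ncard_coe_finset]
    congr 1
    ext w
    rw [Finset.mem_coe, SimpleGraph.mem_neighborFinset]
    exact Iff.rfl
  have hmindeg' : ∀ x : α, δ ≤ F.degree x := fun x => hdeg x ▸ hmindeg x
  have hmineq' : ∃ x : α, F.degree x = δ := by
    obtain ⟨x, hx⟩ := hmineq
    exact ⟨x, by rw [← hdeg x]; exact hx⟩
  have hedgecard : ∀ (m : ℕ) (G : SimpleGraph (Fin m)), G.edgeSet.ncard = #G.edgeFinset := by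
    intro m G
    rw [← Set.ncard_coe_finset]
    congr 1
    exact (SimpleGraph.coe_edgeFinset G).symm
  have hℓ' : ℓ = #F.edgeFinset := by
    rw [hℓ, ← Set.ncard_coe_finset]
    congr 1
    exact (SimpleGraph.coe_edgeFinset F).symm
  -- minimizing weakly saturated graph
  have hne : {m | ∃ H : SimpleGraph (Fin n), WeaklySat F H ∧ H.edgeSet.ncard = m}.Nonempty :=
    ⟨(⊤ : SimpleGraph (Fin n)).edgeSet.ncard, ⊤, Relation.ReflTransGen.refl, rfl⟩
  obtain ⟨H, hws, hHcard⟩ := Nat.sInf_mem hne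
  have hwsat : wsat F n = #H.edgeFinset := by
    rw [wsat, hHcard.symm]
    exact hedgecard n H
  -- main inequality
  have hmain := WS2.main_ineq F δ ℓ hδ2 hmindeg' hmineq' hℓ' hcase n (hv ▸ hn) hws
  -- δ v ≤ 2 ℓ  (for the cast)
  have hsum : ∑ x : α, F.degree x = 2 * ℓ := by
    rw [hℓ']
    exact F.sum_degrees_eq_twice_card_edges
  have hδv : δ * Fintype.card α ≤ 2 * ℓ := by
    rw [← hsum, ← Finset.card_univ]
    calc δ * #(Finset.univ : Finset α) = ∑ _x : α, δ := by rw [Finset.sum_const]; ring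
      _ ≤ ∑ x : α, F.degree x := Finset.sum_le_sum (fun x _ => hmindeg' x)
  -- cast to ℝ
  have hmainR : (δ:ℝ) * n + (2 * ℓ - δ * v) ≤ 2 * (#H.edgeFinset : ℝ) + 2 := by
    have h1 : ((δ * n + (2 * ℓ - δ * Fintype.card α) : ℕ) : ℝ)
        ≤ ((2 * #H.edgeFinset + 2 : ℕ) : ℝ) := by exact_mod_cast hmain
    rw [hv]
    push_cast [Nat.cast_sub hδv] at h1 ⊢
    linarith
  rw [hwsat]
  have hvr : ((δ:ℝ) * v ≤ 2 * ℓ) := by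
    rw [hv]
    exact_mod_cast hδv
  linarith
end

section
/- Let F be a graph without isolated vertices with v ≥ 2 vertices and minimum degree δ ≥ 2, and let γ := min_{1 ≤ i ≤ v−1} e_i / i. Then: (1) γ ≥ δ/2 − 1/(δ+1); (2) if δ is even and F is connected, or if F is 2-edge-connected, then γ ≥ δ/2; (3) if δ is odd and F is connected, then γ ≥ δ/2 − 1/(2(δ+2)). -/
open SimpleGraph

/-! Let `T` be an `i`-set minimising the number of edges meeting it, so `e_i + 1 = |E(T)|`.
Counting incidences, `∑_{x ∈ T} deg x + |∂T| = 2 |E(T)|`, where `∂T` is the set of edges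
leaving `T`; hence `δ i + |∂T| ≤ 2 e_i + 2`. For proper nonempty `T`, connectivity gives
`|∂T| ≥ 1` and 2-edge-connectivity `|∂T| ≥ 2`; when `δ i` is even, `2 e_i ≥ δ i - 1` rounds up
to `2 e_i ≥ δ i`. For `i ≤ δ` at most `C(i, 2)` edges lie inside `T`, which again gives
`2 e_i ≥ δ i`. In the remaining cases the loss is at most `1 / i` (resp. `1 / (2 i)`), and
`i ≥ δ + 1` (resp. `i ≥ δ + 2`, as `i` and `δ` are both odd). -/

open Finset

lemma Finset.exists_mem_notMem_of_card_pos_of_card_lt {α : Type*} [Fintype α] {T : Finset α}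
    (hT : 0 < #T) (hTu : #T < Fintype.card α) : ∃ a b, a ∈ T ∧ b ∉ T := by
  obtain ⟨a, ha⟩ := card_pos.1 hT
  obtain ⟨b, -, hb⟩ := exists_mem_notMem_of_card_lt_card (t := univ) (by simpa using hTu)
  exact ⟨a, b, ha, hb⟩

lemma Even.le_two_mul_of_le_two_mul_add_one {n e : ℕ} (hn : Even n) (h : n ≤ 2 * e + 1) :
    n ≤ 2 * e := by
  obtain ⟨k, rfl⟩ := hn
  omega

namespace SimpleGraph

lemma ncard_neighborSet_eq_degree {V : Type*} (H : SimpleGraph V) (x : V)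
    [Fintype (H.neighborSet x)] : (H.neighborSet x).ncard = H.degree x := by
  rw [← card_neighborSet_eq_degree, ← Nat.card_eq_fintype_card, Nat.card_coe_set_eq]

lemma Connected.exists_adj_of_mem_of_notMem {V : Type*} {H : SimpleGraph V} (hH : H.Connected)
    {S : Set V} {a b : V} (ha : a ∈ S) (hb : b ∉ S) : ∃ x ∈ S, ∃ y ∉ S, H.Adj x y := by
  obtain ⟨⟨⟨x, y⟩, hxy⟩, -, hx, hy⟩ := (hH.preconnected a b).some.exists_boundary_dart S ha hb
  exact ⟨x, hx, y, hy, hxy⟩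

variable {α : Type*} [Fintype α] [DecidableEq α] (G : SimpleGraph α) [DecidableRel G.Adj]

def incidentEdgeFinset (T : Finset α) : Finset (Sym2 α) := {e ∈ G.edgeFinset | ∃ x ∈ T, x ∈ e}

def boundaryEdgeFinset (T : Finset α) : Finset (Sym2 α) :=
  {e ∈ G.incidentEdgeFinset T | ∃ y ∈ e, y ∉ T}

variable {G}

lemma card_filter_mem_add_ite_eq_two {T : Finset α} {e : Sym2 α}
    (he : e ∈ G.incidentEdgeFinset T) :
    #{x ∈ T | x ∈ e} + (if ∃ y ∈ e, y ∉ T then 1 else 0) = 2 := by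
  induction e with
  | _ a b =>
    simp only [incidentEdgeFinset, mem_filter, mem_edgeFinset, mem_edgeSet] at he
    have hab := he.1.ne
    have hfilter : {x ∈ T | x ∈ s(a, b)} = ({a, b} : Finset α).filter (· ∈ T) := by
      ext x; simp only [mem_filter, Sym2.mem_iff, mem_insert, mem_singleton]; tauto
    rw [hfilter]
    obtain ⟨-, x, hx, hxe⟩ := he
    rcases Sym2.mem_iff.1 hxe with rfl | rfl
    · by_cases hb : b ∈ T <;> simp [filter_insert, filter_singleton, hx, hb, hab]
    · by_cases ha : a ∈ T <;> simp [filter_insert, filter_singleton, hx, ha, hab]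

lemma sum_degree_add_card_boundaryEdgeFinset (T : Finset α) :
    ∑ x ∈ T, G.degree x + #(G.boundaryEdgeFinset T) = 2 * #(G.incidentEdgeFinset T) := by
  have hdeg : ∑ x ∈ T, G.degree x = ∑ e ∈ G.incidentEdgeFinset T, #{x ∈ T | x ∈ e} := by
    refine .trans (sum_congr rfl fun x hx => ?_)
      (sum_card_bipartiteAbove_eq_sum_card_bipartiteBelow (r := fun x e => x ∈ e))
    rw [← card_incidenceFinset_eq_degree, incidenceFinset_eq_filter]
    congr 1
    ext e
    simp only [bipartiteAbove, incidentEdgeFinset, mem_filter]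
    exact ⟨fun h => ⟨⟨h.1, x, hx, h.2⟩, h.2⟩, fun h => ⟨h.1.1, h.2⟩⟩
  rw [hdeg, boundaryEdgeFinset, card_filter, ← sum_add_distrib, mul_comm, ← smul_eq_mul,
    ← sum_const]
  exact sum_congr rfl fun e he => card_filter_mem_add_ite_eq_two he

lemma card_incidentEdgeFinset_le (T : Finset α) :
    #(G.incidentEdgeFinset T) ≤ #(G.boundaryEdgeFinset T) + (#T).choose 2 := by
  rw [boundaryEdgeFinset, ← card_filter_add_card_filter_not (fun e => ∃ y ∈ e, y ∉ T),
    ← Sym2.card_image_offDiag]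
  gcongr
  intro e he
  induction e with
  | _ a b =>
    simp only [incidentEdgeFinset, mem_filter, mem_edgeFinset, mem_edgeSet, not_exists, not_and,
      not_not, Sym2.mem_iff] at he
    exact mem_image.2
      ⟨(a, b), mem_offDiag.2 ⟨he.2 a (.inl rfl), he.2 b (.inr rfl), he.1.1.ne⟩, rfl⟩

lemma mem_boundaryEdgeFinset_of_adj {T : Finset α} {x y : α} (hxy : G.Adj x y) (hx : x ∈ T)
    (hy : y ∉ T) : s(x, y) ∈ G.boundaryEdgeFinset T := by
  simp only [boundaryEdgeFinset, incidentEdgeFinset, mem_filter, mem_edgeFinset, mem_edgeSet,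
    Sym2.mem_iff]
  exact ⟨⟨hxy, x, hx, .inl rfl⟩, y, .inr rfl, hy⟩

lemma Connected.boundaryEdgeFinset_nonempty (hG : G.Connected) {T : Finset α}
    {a b : α} (ha : a ∈ T) (hb : b ∉ T) : (G.boundaryEdgeFinset T).Nonempty := by
  obtain ⟨x, hx, y, hy, hxy⟩ := hG.exists_adj_of_mem_of_notMem (S := T) ha hb
  exact ⟨_, mem_boundaryEdgeFinset_of_adj hxy hx hy⟩

end SimpleGraph

open SimpleGraph

lemma TwoEdgeConnected.one_lt_card_boundaryEdgeFinset {α : Type*} [Fintype α] [DecidableEq α]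
    {G : SimpleGraph α} [DecidableRel G.Adj] (hG : TwoEdgeConnected G) {T : Finset α}
    {a b : α} (ha : a ∈ T) (hb : b ∉ T) : 1 < #(G.boundaryEdgeFinset T) := by
  have hconn : G.Connected := by simpa using hG ∅ (by simp)
  obtain ⟨x, hx, y, hy, hxy⟩ := hconn.exists_adj_of_mem_of_notMem (S := T) ha hb
  obtain ⟨x', hx', y', hy', hxy'⟩ :=
    (hG {s(x, y)} (by simp)).exists_adj_of_mem_of_notMem (S := T) ha hb
  rw [deleteEdges_adj, Set.mem_singleton_iff] at hxy'
  exact one_lt_card.2 ⟨_, mem_boundaryEdgeFinset_of_adj hxy hx hy,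
    _, mem_boundaryEdgeFinset_of_adj hxy'.1 hx' hy', Ne.symm hxy'.2⟩

lemma exists_finset_eMin_eq {α : Type*} [Fintype α] [DecidableEq α] (G : SimpleGraph α)
    [DecidableRel G.Adj] {i : ℕ} (hi : i ≤ Fintype.card α) :
    ∃ T : Finset α, #T = i ∧ eMin G i = #(G.incidentEdgeFinset T) - 1 := by
  rcases Nat.eq_zero_or_pos i with rfl | hi0
  · exact ⟨∅, card_empty, by simp [eMin, incidentEdgeFinset]⟩
  rw [eMin, if_neg hi0.ne']
  have hne : {m | ∃ S : Set α, S.ncard = i ∧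
      {e ∈ G.edgeSet | ∃ x ∈ S, x ∈ e}.ncard = m}.Nonempty := by
    obtain ⟨T, -, hT⟩ := exists_subset_card_eq (s := univ) (by simpa using hi)
    exact ⟨_, T, by simpa using hT, rfl⟩
  obtain ⟨S, hS, hSm⟩ := Nat.sInf_mem hne
  refine ⟨S.toFinite.toFinset, by rw [← Set.ncard_eq_toFinset_card, hS], ?_⟩
  rw [← hSm, ← Set.ncard_coe_finset]
  congr 2
  ext e
  simp [incidentEdgeFinset]

lemma Nat.mul_le_two_mul_of_le_add_choose {d e i : ℕ} (hd : 2 ≤ d) (hi : 1 ≤ i) (hid : i ≤ d)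
    (h : d * i ≤ e + 1 + i.choose 2) : d * i ≤ 2 * e := by
  obtain ⟨j, rfl⟩ := Nat.exists_eq_add_of_le' hi
  obtain ⟨k, rfl⟩ := Nat.exists_eq_add_of_le hid
  have hchoose : (j + 1).choose 2 * 2 = (j + 1) * j := by
    rw [Nat.choose_two_right, Nat.div_two_mul_two_of_even (Nat.even_mul_pred_self _)]; rfl
  -- with `i = j + 1` and `d = i + k` the claim reduces to `j + k + j * k ≥ 1`
  nlinarith

section MinDegree

variable {α : Type*} [Fintype α] [DecidableEq α] {G : SimpleGraph α} [DecidableRel G.Adj]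
  {δ i : ℕ}

lemma mul_card_add_card_boundaryEdgeFinset_le (hδ : ∀ x, δ ≤ G.degree x) (T : Finset α) :
    δ * #T + #(G.boundaryEdgeFinset T) ≤ 2 * #(G.incidentEdgeFinset T) := by
  rw [← sum_degree_add_card_boundaryEdgeFinset, mul_comm, ← smul_eq_mul]
  gcongr
  exact card_nsmul_le_sum _ _ _ fun x _ => hδ x

lemma mul_le_two_mul_eMin_add_two (hδ : ∀ x, δ ≤ G.degree x) (hi : i ≤ Fintype.card α) :
    δ * i ≤ 2 * eMin G i + 2 := by
  obtain ⟨T, rfl, he⟩ := exists_finset_eMin_eq G hi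
  have := mul_card_add_card_boundaryEdgeFinset_le hδ T
  omega

lemma mul_le_two_mul_eMin_of_le (hδ : ∀ x, δ ≤ G.degree x) (hδ2 : 2 ≤ δ) (hi1 : 1 ≤ i)
    (hiδ : i ≤ δ) (hi : i ≤ Fintype.card α) : δ * i ≤ 2 * eMin G i := by
  obtain ⟨T, rfl, he⟩ := exists_finset_eMin_eq G hi
  have hdeg := mul_card_add_card_boundaryEdgeFinset_le hδ T
  have hinside := card_incidentEdgeFinset_le (G := G) T
  exact Nat.mul_le_two_mul_of_le_add_choose hδ2 hi1 hiδ (by omega)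

lemma SimpleGraph.Connected.mul_le_two_mul_eMin_add_one (hG : G.Connected)
    (hδ : ∀ x, δ ≤ G.degree x) (hi1 : 1 ≤ i) (hi : i < Fintype.card α) :
    δ * i ≤ 2 * eMin G i + 1 := by
  obtain ⟨T, rfl, he⟩ := exists_finset_eMin_eq G hi.le
  obtain ⟨a, b, ha, hb⟩ := Finset.exists_mem_notMem_of_card_pos_of_card_lt hi1 hi
  have hdeg := mul_card_add_card_boundaryEdgeFinset_le hδ T
  have hbdry := (hG.boundaryEdgeFinset_nonempty ha hb).card_pos
  omega

lemma TwoEdgeConnected.mul_le_two_mul_eMin (hG : TwoEdgeConnected G)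
    (hδ : ∀ x, δ ≤ G.degree x) (hi1 : 1 ≤ i) (hi : i < Fintype.card α) :
    δ * i ≤ 2 * eMin G i := by
  obtain ⟨T, rfl, he⟩ := exists_finset_eMin_eq G hi.le
  obtain ⟨a, b, ha, hb⟩ := Finset.exists_mem_notMem_of_card_pos_of_card_lt hi1 hi
  have hdeg := mul_card_add_card_boundaryEdgeFinset_le hδ T
  have hbdry := hG.one_lt_card_boundaryEdgeFinset ha hb
  omega

end MinDegree

lemma half_le_div_of_mul_le {d e i : ℕ} (hi : 0 < i) (h : d * i ≤ 2 * e) :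
    (d : ℝ) / 2 ≤ e / i := by
  rw [div_le_div_iff₀ two_pos (by exact_mod_cast hi)]
  exact_mod_cast (by linarith : d * i ≤ e * 2)

lemma half_sub_div_le_div_of_mul_le {d e i m c : ℕ} (hm : 0 < m) (hmi : m ≤ i)
    (h : d * i ≤ 2 * e + c) : (d : ℝ) / 2 - c / (2 * m) ≤ e / i := by
  have hm' : (0 : ℝ) < m := by exact_mod_cast hm
  have hi : (0 : ℝ) < i := by exact_mod_cast hm.trans_le hmi
  have h' : (d : ℝ) * i ≤ 2 * e + c := by exact_mod_cast h
  calc (d : ℝ) / 2 - c / (2 * m) ≤ d / 2 - c / (2 * i) := by gcongr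
    _ = (d * i - c) / (2 * i) := by field_simp
    _ ≤ e / i := by rw [div_le_div_iff₀ (by positivity) hi]; nlinarith

theorem gamma_lower_bounds_general {α : Type*} [Fintype α] (F : SimpleGraph α)
    (v δ : ℕ) (hv : v = Fintype.card α)
    (hδ2 : 2 ≤ δ)
    (hmindeg : ∀ x : α, δ ≤ (F.neighborSet x).ncard)
    (γ : ℝ)
    (hγ : IsLeast {x : ℝ | ∃ i : ℕ, 1 ≤ i ∧ i ≤ v - 1 ∧ x = (eMin F i : ℝ) / (i : ℝ)} γ) :
    ((δ : ℝ) / 2 - 1 / ((δ : ℝ) + 1) ≤ γ) ∧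
    (((Even δ ∧ F.Connected) ∨ TwoEdgeConnected F) → (δ : ℝ) / 2 ≤ γ) ∧
    ((Odd δ ∧ F.Connected) → (δ : ℝ) / 2 - 1 / (2 * ((δ : ℝ) + 2)) ≤ γ) := by
  classical
  obtain ⟨⟨i, hi1, hiv, rfl⟩, -⟩ := hγ
  have hδ : ∀ x, δ ≤ F.degree x := fun x => F.ncard_neighborSet_eq_degree x ▸ hmindeg x
  have hi : i < Fintype.card α := by omega
  have hsmall : i ≤ δ → (δ : ℝ) / 2 ≤ eMin F i / i := fun hiδ =>
    half_le_div_of_mul_le hi1 (mul_le_two_mul_eMin_of_le hδ hδ2 hi1 hiδ hi.le)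
  refine ⟨?_, ?_, ?_⟩
  · rcases le_or_gt i δ with hiδ | hδi
    · have : (0 : ℝ) < 1 / (δ + 1) := by positivity
      linarith [hsmall hiδ]
    · have := half_sub_div_le_div_of_mul_le (c := 2) δ.succ_pos hδi
        (mul_le_two_mul_eMin_add_two hδ hi.le)
      push_cast at this
      rwa [div_mul_cancel_left₀ two_ne_zero, ← one_div] at this
  · rintro (⟨hδ_even, hF⟩ | hF)
    · exact half_le_div_of_mul_le hi1 ((hδ_even.mul_right i).le_two_mul_of_le_two_mul_add_one
        (hF.mul_le_two_mul_eMin_add_one hδ hi1 hi))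
    · exact half_le_div_of_mul_le hi1 (hF.mul_le_two_mul_eMin hδ hi1 hi)
  · rintro ⟨hδ_odd, hF⟩
    have hconn := hF.mul_le_two_mul_eMin_add_one hδ hi1 hi
    have : (0 : ℝ) < 1 / (2 * (δ + 2)) := by positivity
    rcases Nat.even_or_odd i with hi_even | hi_odd
    · linarith [half_le_div_of_mul_le hi1
        ((hi_even.mul_left δ).le_two_mul_of_le_two_mul_add_one hconn)]
    rcases le_or_gt i δ with hiδ | hδi
    · linarith [hsmall hiδ]
    have hδi2 : δ + 2 ≤ i := by
      obtain ⟨a, rfl⟩ := hδ_odd; obtain ⟨b, rfl⟩ := hi_odd; omega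
    exact_mod_cast half_sub_div_le_div_of_mul_le (m := δ + 2) (c := 1) (by omega) hδi2 hconn

/-- For a graph `F` without isolated vertices with `v ≥ 2` vertices and
minimum degree `δ ≥ 2`, let `γ := min_{1 ≤ i ≤ v−1} e_i / i`. Then
(1) `γ ≥ δ/2 − 1/(δ+1)`;
(2) if `δ` even and `F` connected, or `F` 2-edge-connected, then `γ ≥ δ/2`;
(3) if `δ` odd and `F` connected, then `γ ≥ δ/2 − 1/(2(δ+2))`. -/
theorem gamma_lower_bounds {α : Type*} [Fintype α] (F : SimpleGraph α)
    (v δ : ℕ) (hv : v = Fintype.card α) (hv2 : 2 ≤ v)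
    (hiso : ∀ x : α, ∃ y, F.Adj x y)
    (hδ2 : 2 ≤ δ)
    (hmindeg : ∀ x : α, δ ≤ (F.neighborSet x).ncard)
    (hmineq : ∃ x : α, (F.neighborSet x).ncard = δ)
    (γ : ℝ)
    (hγ : IsLeast {x : ℝ | ∃ i : ℕ, 1 ≤ i ∧ i ≤ v - 1 ∧ x = (eMin F i : ℝ) / (i : ℝ)} γ) :
    ((δ : ℝ) / 2 - 1 / ((δ : ℝ) + 1) ≤ γ) ∧
    (((Even δ ∧ F.Connected) ∨ TwoEdgeConnected F) → (δ : ℝ) / 2 ≤ γ) ∧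
    ((Odd δ ∧ F.Connected) → (δ : ℝ) / 2 - 1 / (2 * ((δ : ℝ) + 2)) ≤ γ) :=
  gamma_lower_bounds_general F v δ hv hδ2 hmindeg γ hγ
end

section
/- For every integer δ ≥ 2 and every integer x ≥ 0, there exists a 2-edge-connected graph F with minimum degree δ and at least x vertices, and a constant C > 0, such that wsat(n,F) ≤ (δ/2)·n + C for all integers n ≥ |V(F)|. -/
open SimpleGraph

namespace WS

def fadj (δ i j : ℕ) : Prop :=
  i ≠ j ∧ ((i ≤ δ ∧ j ≤ δ ∧ ¬(i = 0 ∧ j = δ) ∧ ¬(j = 0 ∧ i = δ))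
    ∨ (δ+1 ≤ i ∧ δ+1 ≤ j)
    ∨ (i = 0 ∧ j = δ+1) ∨ (j = 0 ∧ i = δ+1)
    ∨ (i = δ ∧ j = δ+2) ∨ (j = δ ∧ i = δ+2))

lemma fadj_def (δ i j : ℕ) : fadj δ i j ↔ i ≠ j ∧ ((i ≤ δ ∧ j ≤ δ ∧ ¬(i = 0 ∧ j = δ) ∧ ¬(j = 0 ∧ i = δ))
    ∨ (δ+1 ≤ i ∧ δ+1 ≤ j)
    ∨ (i = 0 ∧ j = δ+1) ∨ (j = 0 ∧ i = δ+1)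
    ∨ (i = δ ∧ j = δ+2) ∨ (j = δ ∧ i = δ+2)) := Iff.rfl

def bRel (δ : ℕ) {M : ℕ} (u v : Fin M) : Prop :=
  (u.val ≤ δ ∧ v.val ≤ δ ∧ ¬(u.val = 0 ∧ v.val = δ) ∧ ¬(v.val = 0 ∧ u.val = δ))
  ∨ (δ+1 ≤ u.val ∧ δ+1 ≤ v.val)
  ∨ (u.val = 0 ∧ v.val = δ+1)
  ∨ (u.val = δ ∧ v.val = δ+2)

def FG (δ p : ℕ) : SimpleGraph (Fin (δ+1+p)) := SimpleGraph.fromRel (bRel δ)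

lemma FG_adj {δ p : ℕ} {u v : Fin (δ+1+p)} :
    (FG δ p).Adj u v ↔ fadj δ u.val v.val := by
  simp only [FG, fromRel_adj, bRel, fadj, Ne, Fin.ext_iff]
  omega

section
variable {δ p n : ℕ}

lemma FG_conn_del_single (hδ : 2 ≤ δ) (hp : δ + 2 ≤ p) (e₀ : Sym2 (Fin (δ+1+p))) :
    ((FG δ p).deleteEdges {e₀}).Connected := by
  have adj' : ∀ u v : Fin (δ+1+p), fadj δ u.val v.val → s(u,v) ≠ e₀ →
      ((FG δ p).deleteEdges {e₀}).Adj u v := by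
    intro u v h hne
    rw [deleteEdges_adj]
    exact ⟨FG_adj.2 h, by simpa using hne⟩
  have hub : ∀ v : Fin (δ+1+p), ((FG δ p).deleteEdges {e₀}).Reachable v ⟨δ+1, by omega⟩ := by
    intro v
    let X : Fin (δ+1+p) := ⟨δ+1, by omega⟩
    let Y : Fin (δ+1+p) := ⟨δ+2, by omega⟩
    let Z : Fin (δ+1+p) := ⟨0, by omega⟩
    let O : Fin (δ+1+p) := ⟨1, by omega⟩
    let D : Fin (δ+1+p) := ⟨δ, by omega⟩
    show ((FG δ p).deleteEdges {e₀}).Reachable v X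
    rcases Nat.lt_or_ge v.val (δ+1) with hv | hv
    · rcases Nat.eq_zero_or_pos v.val with hv0 | hvpos
      · have hvZ : v = Z := Fin.ext hv0
        subst hvZ
        by_cases h1 : s(Z, X) = e₀
        · have e1 : ((FG δ p).deleteEdges {e₀}).Adj Z O := by
            apply adj'
            · simp [fadj, Z, O] <;> omega
            · rw [← h1]; simp [Sym2.eq_iff, Z, O, X, Fin.ext_iff] <;> omega
          have e2 : ((FG δ p).deleteEdges {e₀}).Adj O D := by
            apply adj'
            · simp [fadj, O, D] <;> omega
            · rw [← h1]; simp [Sym2.eq_iff, Z, O, X, D, Fin.ext_iff] <;> omega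
          have e3 : ((FG δ p).deleteEdges {e₀}).Adj D Y := by
            apply adj'
            · simp [fadj, D, Y] <;> omega
            · rw [← h1]; simp [Sym2.eq_iff, Z, Y, X, D, Fin.ext_iff] <;> omega
          have e4 : ((FG δ p).deleteEdges {e₀}).Adj Y X := by
            apply adj'
            · simp [fadj, Y, X] <;> omega
            · rw [← h1]; simp [Sym2.eq_iff, Z, Y, X, Fin.ext_iff] <;> omega
          exact (((e1.reachable.trans e2.reachable).trans e3.reachable).trans e4.reachable)
        · exact (adj' _ _ (by simp [fadj, Z, X] <;> omega) h1).reachable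
      · rcases Nat.lt_or_ge v.val δ with hvd | hvd
        · by_cases h1 : s(v, Z) = e₀
          · have e1 : ((FG δ p).deleteEdges {e₀}).Adj v D := by
              apply adj'
              · simp only [fadj, D]; omega
              · rw [← h1]; simp only [ne_eq, Sym2.eq_iff, Z, D, Fin.ext_iff]; omega
            have e2 : ((FG δ p).deleteEdges {e₀}).Adj D Y := by
              apply adj'
              · simp [fadj, D, Y] <;> omega
              · rw [← h1]; simp [Sym2.eq_iff, Z, Y, D, Fin.ext_iff] <;> omega
            have e3 : ((FG δ p).deleteEdges {e₀}).Adj Y X := by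
              apply adj'
              · simp [fadj, Y, X] <;> omega
              · rw [← h1]; simp [Sym2.eq_iff, Z, Y, X, Fin.ext_iff] <;> omega
            exact (e1.reachable.trans e2.reachable).trans e3.reachable
          · by_cases h2 : s(Z, X) = e₀
            · have e1 : ((FG δ p).deleteEdges {e₀}).Adj v D := by
                apply adj'
                · simp only [fadj, D]; omega
                · rw [← h2]; simp only [ne_eq, Sym2.eq_iff, Z, D, X, Fin.ext_iff]; omega
              have e2 : ((FG δ p).deleteEdges {e₀}).Adj D Y := by
                apply adj'
                · simp [fadj, D, Y] <;> omega
                · rw [← h2]; simp [Sym2.eq_iff, Z, Y, D, X, Fin.ext_iff] <;> omega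
              have e3 : ((FG δ p).deleteEdges {e₀}).Adj Y X := by
                apply adj'
                · simp [fadj, Y, X] <;> omega
                · rw [← h2]; simp [Sym2.eq_iff, Z, Y, X, Fin.ext_iff] <;> omega
              exact (e1.reachable.trans e2.reachable).trans e3.reachable
            · have e1 : ((FG δ p).deleteEdges {e₀}).Adj v Z := adj' _ _ (by simp only [fadj, Z]; omega) h1
              have e2 : ((FG δ p).deleteEdges {e₀}).Adj Z X := adj' _ _ (by simp [fadj, Z, X] <;> omega) h2
              exact e1.reachable.trans e2.reachable
        · have hvD : v = D := Fin.ext (by simp [D] <;> omega)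
          subst hvD
          by_cases h1 : s(D, Y) = e₀
          · have e1 : ((FG δ p).deleteEdges {e₀}).Adj D O := by
              apply adj'
              · simp [fadj, D, O] <;> omega
              · rw [← h1]; simp [Sym2.eq_iff, O, Y, D, Fin.ext_iff] <;> omega
            have e2 : ((FG δ p).deleteEdges {e₀}).Adj O Z := by
              apply adj'
              · simp [fadj, O, Z] <;> omega
              · rw [← h1]; simp [Sym2.eq_iff, O, Z, Y, D, Fin.ext_iff] <;> omega
            have e3 : ((FG δ p).deleteEdges {e₀}).Adj Z X := by
              apply adj'
              · simp [fadj, Z, X] <;> omega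
              · rw [← h1]; simp [Sym2.eq_iff, Z, X, Y, D, Fin.ext_iff] <;> omega
            exact (e1.reachable.trans e2.reachable).trans e3.reachable
          · by_cases h2 : s(Y, X) = e₀
            · have e1 : ((FG δ p).deleteEdges {e₀}).Adj D O := by
                apply adj'
                · simp [fadj, D, O] <;> omega
                · rw [← h2]; simp [Sym2.eq_iff, O, Y, X, D, Fin.ext_iff] <;> omega
              have e2 : ((FG δ p).deleteEdges {e₀}).Adj O Z := by
                apply adj'
                · simp [fadj, O, Z] <;> omega
                · rw [← h2]; simp [Sym2.eq_iff, O, Z, Y, X, Fin.ext_iff] <;> omega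
              have e3 : ((FG δ p).deleteEdges {e₀}).Adj Z X := by
                apply adj'
                · simp [fadj, Z, X] <;> omega
                · rw [← h2]; simp [Sym2.eq_iff, Z, X, Y, Fin.ext_iff] <;> omega
              exact (e1.reachable.trans e2.reachable).trans e3.reachable
            · have e1 : ((FG δ p).deleteEdges {e₀}).Adj D Y := adj' _ _ (by simp [fadj, D, Y] <;> omega) h1
              have e2 : ((FG δ p).deleteEdges {e₀}).Adj Y X := adj' _ _ (by simp [fadj, Y, X] <;> omega) h2
              exact e1.reachable.trans e2.reachable
    · rcases Nat.eq_or_lt_of_le hv with hv1 | hv1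
      · have : v = X := Fin.ext (by simp [X] <;> omega)
        rw [this]
      · by_cases h1 : s(v, X) = e₀
        · have hne : ∃ rv : ℕ, rv = δ+3 ∨ rv = δ+2 := ⟨δ+3, Or.inl rfl⟩
          set r : Fin (δ+1+p) := if v.val = δ+2 then ⟨δ+3, by omega⟩ else ⟨δ+2, by omega⟩ with hr
          have hrval : r.val = δ+3 ∧ v.val = δ+2 ∨ r.val = δ+2 ∧ v.val ≠ δ+2 := by
            rw [hr]; split <;> simp_all
          have e1 : ((FG δ p).deleteEdges {e₀}).Adj v r := by
            apply adj'
            · simp [fadj] <;> omega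
            · rw [← h1]; simp [Sym2.eq_iff, X, Fin.ext_iff] <;> omega
          have e2 : ((FG δ p).deleteEdges {e₀}).Adj r X := by
            apply adj'
            · simp [fadj, X] <;> omega
            · rw [← h1]; simp [Sym2.eq_iff, X, Fin.ext_iff] <;> omega
          exact e1.reachable.trans e2.reachable
        · exact (adj' _ _ (by simp [fadj, X] <;> omega) h1).reachable
  have : Nonempty (Fin (δ+1+p)) := ⟨⟨0, by omega⟩⟩
  exact SimpleGraph.Connected.mk (fun u v => (hub u).trans (hub v).symm)

lemma FG_two_edge_connected (hδ : 2 ≤ δ) (hp : δ + 2 ≤ p) :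
    TwoEdgeConnected (FG δ p) := by
  intro s hs
  obtain ⟨e₀, hsub⟩ : ∃ e₀, s ⊆ {e₀} := by
    rcases Set.eq_empty_or_nonempty s with h | h
    · exact ⟨s(⟨0, by omega⟩, ⟨0, by omega⟩), by simp [h]⟩
    · obtain ⟨a, ha⟩ := h
      refine ⟨a, fun b hb => ?_⟩
      by_contra hne
      have : 1 < s.ncard := (Set.one_lt_ncard_iff (Set.toFinite s)).2 ⟨b, a, hb, ha, hne⟩
      omega
  exact (FG_conn_del_single hδ hp e₀).mono (deleteEdges_anti hsub)


lemma le_ncard_of_inj {k M : ℕ} {G : SimpleGraph (Fin M)} {a : Fin M}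
    (f : Fin k → Fin M) (hinj : Function.Injective f)
    (hmem : ∀ i, f i ∈ G.neighborSet a) : k ≤ (G.neighborSet a).ncard := by
  have h1 : Set.range f ⊆ G.neighborSet a := by rintro w ⟨i, rfl⟩; exact hmem i
  have h2 : (Set.range f).ncard = k := by
    rw [← Set.image_univ, Set.ncard_image_of_injective _ hinj, Set.ncard_univ,
      Nat.card_eq_fintype_card, Fintype.card_fin]
  calc k = (Set.range f).ncard := h2.symm
    _ ≤ _ := Set.ncard_le_ncard h1 (Set.toFinite _)

lemma FG_min_degree (hδ : 2 ≤ δ) (hp : δ + 2 ≤ p) :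
    ∀ a : Fin (δ+1+p), δ ≤ ((FG δ p).neighborSet a).ncard := by
  intro a
  rcases Nat.lt_or_ge a.val (δ+1) with ha | ha
  · rcases Nat.eq_zero_or_pos a.val with ha0 | hapos
    · refine le_ncard_of_inj
        (fun i => ⟨if i.val < δ - 1 then i.val + 1 else δ + 1, by split <;> omega⟩) ?_ ?_
      · intro i j hij
        simp only [Fin.mk.injEq] at hij
        apply Fin.ext
        rcases i with ⟨i, hi⟩; rcases j with ⟨j, hj⟩
        simp only at hij ⊢
        split at hij <;> split at hij <;> omega
      · intro i
        rcases i with ⟨i, hi⟩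
        rw [SimpleGraph.mem_neighborSet, FG_adj]
        show fadj δ (a.val) (if i < δ - 1 then i + 1 else δ + 1)
        rw [fadj_def, ha0]
        split <;> omega
    · rcases Nat.lt_or_ge a.val δ with had | had
      · refine le_ncard_of_inj
          (fun i => ⟨if i.val < a.val then i.val else i.val + 1, by split <;> omega⟩) ?_ ?_
        · intro i j hij
          simp only [Fin.mk.injEq] at hij
          apply Fin.ext
          rcases i with ⟨i, hi⟩; rcases j with ⟨j, hj⟩
          simp only at hij ⊢
          split at hij <;> split at hij <;> omega
        · intro i
          rcases i with ⟨i, hi⟩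
          rw [SimpleGraph.mem_neighborSet, FG_adj]
          show fadj δ (a.val) (if i < a.val then i else i + 1)
          rw [fadj_def]
          split <;> omega
      · -- a.val = δ
        refine le_ncard_of_inj
          (fun i => ⟨if i.val < δ - 1 then i.val + 1 else δ + 2, by split <;> omega⟩) ?_ ?_
        · intro i j hij
          simp only [Fin.mk.injEq] at hij
          apply Fin.ext
          rcases i with ⟨i, hi⟩; rcases j with ⟨j, hj⟩
          simp only at hij ⊢
          split at hij <;> split at hij <;> omega
        · intro i
          rcases i with ⟨i, hi⟩
          rw [SimpleGraph.mem_neighborSet, FG_adj]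
          show fadj δ (a.val) (if i < δ - 1 then i + 1 else δ + 2)
          rw [fadj_def]
          split <;> omega
  · refine le_ncard_of_inj
      (fun i => ⟨if δ + 1 + i.val < a.val then δ + 1 + i.val else δ + 2 + i.val,
        by split <;> omega⟩) ?_ ?_
    · intro i j hij
      simp only [Fin.mk.injEq] at hij
      apply Fin.ext
      rcases i with ⟨i, hi⟩; rcases j with ⟨j, hj⟩
      simp only at hij ⊢
      split at hij <;> split at hij <;> omega
    · intro i
      rcases i with ⟨i, hi⟩
      rw [SimpleGraph.mem_neighborSet, FG_adj]
      show fadj δ (a.val) (if δ + 1 + i < a.val then δ + 1 + i else δ + 2 + i)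
      rw [fadj_def]
      split <;> omega

lemma FG_exact_degree (hδ : 2 ≤ δ) (hp : δ + 2 ≤ p) (a : Fin (δ+1+p)) (ha : a.val = 1) :
    ((FG δ p).neighborSet a).ncard = δ := by
  have hbound : ∀ w ∈ (Finset.range (δ+1)).erase 1, w < δ+1+p := by
    intro w hw
    simp only [Finset.mem_erase, Finset.mem_range] at hw
    omega
  have hset : (FG δ p).neighborSet a =
      ((((Finset.range (δ+1)).erase 1).attachFin hbound : Finset (Fin (δ+1+p))) : Set (Fin (δ+1+p))) := by
    ext w
    rw [SimpleGraph.mem_neighborSet, FG_adj, fadj_def, ha]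
    simp only [Finset.mem_coe, Finset.mem_attachFin, Finset.mem_erase, Finset.mem_range]
    omega
  rw [hset, Set.ncard_coe_finset, Finset.card_attachFin, Finset.card_erase_of_mem (by
    simp only [Finset.mem_range]; omega), Finset.card_range]
  omega


lemma bootStep_mk {F : SimpleGraph (Fin (δ+1+p))} {G : SimpleGraph (Fin n)} {v t : Fin n}
    (hne : v ≠ t) (hnadj : ¬G.Adj v t) (φ : Fin (δ+1+p) → Fin n) (hinj : Function.Injective φ)
    (hhom : ∀ u w, F.Adj u w → (G ⊔ fromEdgeSet {s(v,t)}).Adj (φ u) (φ w))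
    (u w : Fin (δ+1+p)) (hadj : F.Adj u w) (hu : φ u = v) (hw : φ w = t) :
    BootStep F G (G ⊔ fromEdgeSet {s(v,t)}) :=
  ⟨v, t, hne, hnadj, rfl, ⟨φ, fun {a b} h => hhom a b h⟩, hinj, u, w, hadj, hu, hw⟩

lemma new_edge_adj {G : SimpleGraph (Fin n)} {v t : Fin n} (hne : v ≠ t) :
    (G ⊔ fromEdgeSet {s(v,t)}).Adj v t := by
  rw [sup_adj, fromEdgeSet_adj]
  exact Or.inr ⟨rfl, hne⟩

lemma joinAll {F : SimpleGraph (Fin (δ+1+p))} (G : SimpleGraph (Fin n)) (v : Fin n)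
    (S : Finset (Fin n))
    (hvt : ∀ t ∈ S, v ≠ t)
    (hstep : ∀ t ∈ S, ∀ Gc : SimpleGraph (Fin n), G ≤ Gc → ¬ Gc.Adj v t →
      BootStep F Gc (Gc ⊔ fromEdgeSet {s(v,t)})) :
    ∃ G', G ≤ G' ∧ Relation.ReflTransGen (BootStep F) G G' ∧ ∀ t ∈ S, G'.Adj v t := by
  classical
  revert hvt hstep
  induction S using Finset.induction_on with
  | empty => exact fun _ _ => ⟨G, le_rfl, Relation.ReflTransGen.refl, by simp⟩
  | @insert t S' htS ih =>
    intro hvt hstep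
    obtain ⟨G', h1, h2, h3⟩ := ih
      (fun t' ht' => hvt t' (Finset.mem_insert_of_mem ht'))
      (fun t' ht' => hstep t' (Finset.mem_insert_of_mem ht'))
    by_cases hadj : G'.Adj v t
    · refine ⟨G', h1, h2, ?_⟩
      intro t' ht'
      rcases Finset.mem_insert.1 ht' with rfl | ht'
      · exact hadj
      · exact h3 t' ht'
    · refine ⟨G' ⊔ fromEdgeSet {s(v,t)}, h1.trans le_sup_left,
        h2.tail (hstep t (Finset.mem_insert_self _ _) G' h1 hadj), ?_⟩
      intro t' ht'
      rcases Finset.mem_insert.1 ht' with rfl | ht'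
      · exact new_edge_adj (hvt t' (Finset.mem_insert_self _ _))
      · exact (sup_adj _ _ _ _).2 (Or.inl (h3 t' ht'))

lemma master_emb (hδ : 2 ≤ δ) (hp : δ+2 ≤ p)
    (G : SimpleGraph (Fin n)) (T : Finset (Fin n))
    (hT : ∀ ⦃u⦄, u ∈ T → ∀ ⦃w⦄, w ∈ T → u ≠ w → G.Adj u w)
    (hTcard : δ+1+p+2 ≤ T.card)
    (β : Fin (δ+1) → Fin n) (hβinj : Function.Injective β)
    (hβT : ∀ i, β i ∉ T)
    (hblock : ∀ i j : Fin (δ+1), i ≠ j → ¬(i.val = 0 ∧ j.val = δ) → ¬(j.val = 0 ∧ i.val = δ) →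
      G.Adj (β i) (β j))
    (a₀ : Fin n) (ha₀T : a₀ ∈ T) (ha₀ : G.Adj (β ⟨0, by omega⟩) a₀)
    (t : Fin n) (htT : t ∈ T) (hta : t ≠ a₀)
    (hnadj : ¬ G.Adj (β ⟨δ, by omega⟩) t) :
    BootStep (FG δ p) G (G ⊔ fromEdgeSet {s(β ⟨δ, by omega⟩, t)}) := by
  classical
  have hβδt : β ⟨δ, by omega⟩ ≠ t := fun h => hβT _ (h ▸ htT)
  have htQ : t ∈ T.erase a₀ := Finset.mem_erase.2 ⟨hta, htT⟩
  have hQ : p - 2 ≤ ((T.erase a₀).erase t).card := by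
    rw [Finset.card_erase_of_mem htQ, Finset.card_erase_of_mem ha₀T]
    omega
  set pool : Fin (p-2) ↪o Fin n := Finset.orderEmbOfCardLe _ hQ with hpool
  have hpoolmem : ∀ i, pool i ∈ (T.erase a₀).erase t :=
    fun i => Finset.orderEmbOfCardLe_mem _ hQ i
  have hpoolT : ∀ i, pool i ∈ T := fun i =>
    Finset.mem_of_mem_erase (Finset.mem_of_mem_erase (hpoolmem i))
  have hpoolinj : Function.Injective pool := pool.injective
  set φ : Fin (δ+1+p) → Fin n := fun u =>
    if h1 : u.val < δ+1 then β ⟨u.val, h1⟩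
    else if h2 : u.val = δ+1 then a₀
    else if h3 : u.val = δ+2 then t
    else pool ⟨u.val - (δ+3), by omega⟩ with hφ
  have hφD : ∀ (u : Fin (δ+1+p)) (h : u.val < δ+1), φ u = β ⟨u.val, h⟩ :=
    fun u h => dif_pos h
  have hφa : ∀ (u : Fin (δ+1+p)), u.val = δ+1 → φ u = a₀ := by
    intro u h
    rw [hφ]
    simp only
    rw [dif_neg (by omega), dif_pos h]
  have hφt : ∀ (u : Fin (δ+1+p)), u.val = δ+2 → φ u = t := by
    intro u h
    rw [hφ]
    simp only
    rw [dif_neg (by omega), dif_neg (by omega), dif_pos h]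
  have hφp : ∀ (u : Fin (δ+1+p)) (h : δ+3 ≤ u.val),
      φ u = pool ⟨u.val - (δ+3), by omega⟩ := by
    intro u h
    rw [hφ]
    simp only
    rw [dif_neg (by omega), dif_neg (by omega), dif_neg (by omega)]
  have himT : ∀ (u : Fin (δ+1+p)), δ+1 ≤ u.val → φ u ∈ T := by
    intro u h
    rcases Nat.lt_or_ge u.val (δ+2) with h2 | h2
    · rw [hφa u (by omega)]; exact ha₀T
    · rcases Nat.lt_or_ge u.val (δ+3) with h3 | h3
      · rw [hφt u (by omega)]; exact htT
      · rw [hφp u h3]; exact hpoolT _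
  -- injectivity
  have hinj : Function.Injective φ := by
    intro u w h
    rcases Nat.lt_or_ge u.val (δ+1) with hu | hu <;> rcases Nat.lt_or_ge w.val (δ+1) with hw | hw
    · rw [hφD u hu, hφD w hw] at h
      have := hβinj h
      apply Fin.ext
      simpa [Fin.ext_iff] using this
    · exfalso; apply hβT ⟨u.val, hu⟩; rw [← hφD u hu, h]; exact himT w hw
    · exfalso; apply hβT ⟨w.val, hw⟩; rw [← hφD w hw, ← h]; exact himT u hu
    · -- both in R region
      rcases Nat.lt_or_ge u.val (δ+2) with hu2 | hu2 <;> rcases Nat.lt_or_ge w.val (δ+2) with hw2 | hw2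
      · apply Fin.ext; omega
      · exfalso
        rw [hφa u (by omega)] at h
        rcases Nat.lt_or_ge w.val (δ+3) with hw3 | hw3
        · rw [hφt w (by omega)] at h; exact hta h.symm
        · rw [hφp w hw3] at h
          exact (Finset.mem_erase.1 (Finset.mem_of_mem_erase (hpoolmem _))).1 (by rw [← h])
      · exfalso
        rw [hφa w (by omega)] at h
        rcases Nat.lt_or_ge u.val (δ+3) with hu3 | hu3
        · rw [hφt u (by omega)] at h; exact hta h
        · rw [hφp u hu3] at h
          exact (Finset.mem_erase.1 (Finset.mem_of_mem_erase (hpoolmem _))).1 h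
      · rcases Nat.lt_or_ge u.val (δ+3) with hu3 | hu3 <;> rcases Nat.lt_or_ge w.val (δ+3) with hw3 | hw3
        · apply Fin.ext; omega
        · exfalso
          rw [hφt u (by omega), hφp w hw3] at h
          exact (Finset.mem_erase.1 (hpoolmem _)).1 h.symm
        · exfalso
          rw [hφt w (by omega), hφp u hu3] at h
          exact (Finset.mem_erase.1 (hpoolmem _)).1 h
        · rw [hφp u hu3, hφp w hw3] at h
          have := hpoolinj h
          apply Fin.ext
          simp only [Fin.mk.injEq] at this
          omega
  -- clique adjacency helper in G ⊔ e
  have hGle : ∀ {x y : Fin n}, G.Adj x y →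
      (G ⊔ fromEdgeSet {s(β ⟨δ, by omega⟩, t)}).Adj x y :=
    fun h => (sup_adj _ _ _ _).2 (Or.inl h)
  have hTadj : ∀ ⦃x y : Fin n⦄, x ∈ T → y ∈ T → x ≠ y →
      (G ⊔ fromEdgeSet {s(β ⟨δ, by omega⟩, t)}).Adj x y :=
    fun x y hx hy hne => hGle (hT hx hy hne)
  -- hom property
  have hhom : ∀ u w, (FG δ p).Adj u w →
      (G ⊔ fromEdgeSet {s(β ⟨δ, by omega⟩, t)}).Adj (φ u) (φ w) := by
    intro u w hadj
    rw [FG_adj, fadj_def] at hadj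
    obtain ⟨hne', hcase⟩ := hadj
    -- distinctness of images:
    have hfne : φ u ≠ φ w := fun h => hne' (by rw [hinj h])
    rcases hcase with ⟨h1, h2, h3, h4⟩ | ⟨h1, h2⟩ | ⟨h1, h2⟩ | ⟨h1, h2⟩ | ⟨h1, h2⟩ | ⟨h1, h2⟩
    · -- both in D
      rw [hφD u (by omega), hφD w (by omega)]
      refine hGle (hblock _ _ ?_ ?_ ?_)
      · simp only [Ne, Fin.ext_iff]; exact hne'
      · simpa using h3
      · simpa using h4
    · -- both in R: images in T
      exact hTadj (himT u h1) (himT w h2) hfne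
    · -- u = 0, w = δ+1
      rw [hφD u (by omega), hφa w h2]
      have : (⟨u.val, by omega⟩ : Fin (δ+1)) = ⟨0, by omega⟩ := by
        apply Fin.ext; simpa using h1
      rw [this]
      exact hGle ha₀
    · -- w = 0, u = δ+1
      rw [hφD w (by omega), hφa u h2]
      have : (⟨w.val, by omega⟩ : Fin (δ+1)) = ⟨0, by omega⟩ := by
        apply Fin.ext; simpa using h1
      rw [this]
      exact (hGle ha₀).symm
    · -- u = δ, w = δ+2 : the new edge
      rw [hφD u (by omega), hφt w h2]
      have : (⟨u.val, by omega⟩ : Fin (δ+1)) = ⟨δ, by omega⟩ := by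
        apply Fin.ext; simpa using h1
      rw [this]
      exact new_edge_adj hβδt
    · rw [hφD w (by omega), hφt u h2]
      have : (⟨w.val, by omega⟩ : Fin (δ+1)) = ⟨δ, by omega⟩ := by
        apply Fin.ext; simpa using h1
      rw [this]
      exact (new_edge_adj hβδt).symm
  refine bootStep_mk hβδt hnadj φ hinj hhom ⟨δ, by omega⟩ ⟨δ+2, by omega⟩ ?_ ?_ ?_
  · rw [FG_adj]
    show fadj δ δ (δ+2)
    rw [fadj_def]
    omega
  · exact hφD _ (by show δ < δ+1; omega)
  · exact hφt _ rfl

lemma adj_mono {n : ℕ} {G G' : SimpleGraph (Fin n)} (h : G ≤ G') {u v : Fin n}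
    (ha : G.Adj u v) : G'.Adj u v := h ha

lemma embPair (hδ : 2 ≤ δ) (hp : δ+2 ≤ p)
    (G : SimpleGraph (Fin n)) (T : Finset (Fin n))
    (hT : ∀ ⦃u⦄, u ∈ T → ∀ ⦃w⦄, w ∈ T → u ≠ w → G.Adj u w)
    (hTcard : δ+1+p ≤ T.card)
    (v₁ v₂ : Fin n) (h1T : v₁ ∉ T) (h2T : v₂ ∉ T)
    (hv₁ : ∀ τ ∈ T, G.Adj v₁ τ) (hv₂ : ∀ τ ∈ T, G.Adj v₂ τ)
    (hne : v₁ ≠ v₂) (hnadj : ¬ G.Adj v₁ v₂) :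
    BootStep (FG δ p) G (G ⊔ fromEdgeSet {s(v₁, v₂)}) := by
  classical
  have hQ : δ+1+p-2 ≤ T.card := by omega
  set pool : Fin (δ+1+p-2) ↪o Fin n := Finset.orderEmbOfCardLe _ hQ with hpool
  have hpoolT : ∀ i, pool i ∈ T := fun i => Finset.orderEmbOfCardLe_mem _ hQ i
  have hpoolinj : Function.Injective pool := pool.injective
  set φ : Fin (δ+1+p) → Fin n := fun u =>
    if h1 : u.val = δ+3 then v₁
    else if h2 : u.val = δ+4 then v₂
    else pool ⟨if u.val < δ+3 then u.val else u.val - 2, by split <;> omega⟩ with hφ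
  have hφ1 : ∀ u : Fin (δ+1+p), u.val = δ+3 → φ u = v₁ := fun u h => dif_pos h
  have hφ2 : ∀ u : Fin (δ+1+p), u.val = δ+4 → φ u = v₂ := by
    intro u h
    rw [hφ]
    simp only
    rw [dif_neg (by omega), dif_pos h]
  have hφp : ∀ u : Fin (δ+1+p), u.val ≠ δ+3 → u.val ≠ δ+4 →
      φ u = pool ⟨if u.val < δ+3 then u.val else u.val - 2, by split <;> omega⟩ := by
    intro u h1 h2
    rw [hφ]
    simp only
    rw [dif_neg h1, dif_neg h2]
  have hφpT : ∀ u : Fin (δ+1+p), u.val ≠ δ+3 → u.val ≠ δ+4 → φ u ∈ T := by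
    intro u h1 h2
    rw [hφp u h1 h2]
    exact hpoolT _
  have hinj : Function.Injective φ := by
    intro u w h
    by_cases hu1 : u.val = δ+3 <;> by_cases hw1 : w.val = δ+3
    · apply Fin.ext; omega
    · by_cases hw2 : w.val = δ+4
      · rw [hφ1 u hu1, hφ2 w hw2] at h; exact absurd h hne
      · rw [hφ1 u hu1] at h
        exact absurd (h ▸ hφpT w hw1 hw2) h1T
    · by_cases hu2 : u.val = δ+4
      · rw [hφ2 u hu2, hφ1 w hw1] at h; exact absurd h.symm hne
      · rw [hφ1 w hw1] at h
        exact absurd (h ▸ hφpT u hu1 hu2) h1T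
    · by_cases hu2 : u.val = δ+4 <;> by_cases hw2 : w.val = δ+4
      · apply Fin.ext; omega
      · rw [hφ2 u hu2] at h
        exact absurd (h ▸ hφpT w hw1 hw2) h2T
      · rw [hφ2 w hw2] at h
        exact absurd (h.symm ▸ hφpT u hu1 hu2) h2T
      · rw [hφp u hu1 hu2, hφp w hw1 hw2] at h
        have := hpoolinj h
        simp only [Fin.mk.injEq] at this
        apply Fin.ext
        rcases u with ⟨u, hu⟩; rcases w with ⟨w, hw⟩
        split at this <;> split at this <;> omega
  have hGle : ∀ {x y : Fin n}, G.Adj x y → (G ⊔ fromEdgeSet {s(v₁, v₂)}).Adj x y :=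
    fun h => (sup_adj _ _ _ _).2 (Or.inl h)
  have hhom : ∀ u w, (FG δ p).Adj u w →
      (G ⊔ fromEdgeSet {s(v₁, v₂)}).Adj (φ u) (φ w) := by
    intro u w hadj
    have hne' : u.val ≠ w.val := by
      rw [FG_adj, fadj_def] at hadj
      exact hadj.1
    have hfne : φ u ≠ φ w := fun h => hne' (by rw [hinj h])
    by_cases hu1 : u.val = δ+3 <;> by_cases hw1 : w.val = δ+3
    · omega
    · by_cases hw2 : w.val = δ+4
      · rw [hφ1 u hu1, hφ2 w hw2]; exact new_edge_adj hne
      · rw [hφ1 u hu1]; exact hGle (hv₁ _ (hφpT w hw1 hw2))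
    · by_cases hu2 : u.val = δ+4
      · rw [hφ2 u hu2, hφ1 w hw1]; exact (new_edge_adj hne).symm
      · rw [hφ1 w hw1]; exact hGle (hv₁ _ (hφpT u hu1 hu2)).symm
    · by_cases hu2 : u.val = δ+4 <;> by_cases hw2 : w.val = δ+4
      · omega
      · rw [hφ2 u hu2]; exact hGle (hv₂ _ (hφpT w hw1 hw2))
      · rw [hφ2 w hw2]; exact hGle (hv₂ _ (hφpT u hu1 hu2)).symm
      · exact hGle (hT (hφpT u hu1 hu2) (hφpT w hw1 hw2) hfne)
  refine bootStep_mk hne hnadj φ hinj hhom ⟨δ+3, by omega⟩ ⟨δ+4, by omega⟩ ?_ ?_ ?_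
  · rw [FG_adj]
    show fadj δ (δ+3) (δ+4)
    rw [fadj_def]
    omega
  · exact hφ1 _ rfl
  · exact hφ2 _ rfl

lemma erase2_nonempty {T : Finset (Fin n)} (h : 3 ≤ T.card) (a b : Fin n) :
    ((T.erase a).erase b).Nonempty := by
  apply Finset.card_pos.1
  have h1 : T.card - 1 ≤ (T.erase a).card := Finset.pred_card_le_card_erase
  have h2 : (T.erase a).card - 1 ≤ ((T.erase a).erase b).card := Finset.pred_card_le_card_erase
  omega

lemma blockChain (hδ : 2 ≤ δ) (hp : δ+2 ≤ p)
    (G : SimpleGraph (Fin n)) (T : Finset (Fin n))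
    (hT : ∀ ⦃u⦄, u ∈ T → ∀ ⦃w⦄, w ∈ T → u ≠ w → G.Adj u w)
    (hTcard : δ+1+p+2 ≤ T.card)
    (α₀ : Fin n) (hα₀ : α₀ ∈ T)
    (β : Fin (δ+1) → Fin n) (hβinj : Function.Injective β)
    (hβT : ∀ i, β i ∉ T)
    (hblock : ∀ i j : Fin (δ+1), i ≠ j → ¬(i.val = 0 ∧ j.val = δ) → ¬(j.val = 0 ∧ i.val = δ) →
      G.Adj (β i) (β j))
    (hatt : G.Adj (β ⟨0, by omega⟩) α₀) :
    ∃ G', G ≤ G' ∧ Relation.ReflTransGen (BootStep (FG δ p)) G G' ∧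
      (∀ i, ∀ τ ∈ T, G'.Adj (β i) τ) ∧ (∀ i j, i ≠ j → G'.Adj (β i) (β j)) := by
  classical
  set z : Fin (δ+1) := ⟨0, by omega⟩ with hz
  set d : Fin (δ+1) := ⟨δ, by omega⟩ with hd
  have hzval : z.val = 0 := rfl
  have hdval : d.val = δ := rfl
  have hzd : z ≠ d := by simp only [Ne, Fin.ext_iff, hzval, hdval]; omega
  have hβzd : β z ≠ β d := fun h => hzd (hβinj h)
  -- generic swap family
  have swpfam : ∀ i : Fin (δ+1), ∃ σ : Fin (δ+1) → Fin (δ+1),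
      Function.Injective σ ∧ σ d = i ∧
      (∀ k, (σ k).val = if k.val = i.val then δ else if k.val = δ then i.val else k.val) := by
    intro i
    set σ : Fin (δ+1) → Fin (δ+1) :=
      fun k => if k.val = i.val then d else if k.val = δ then i else k with hσdef
    have hval : ∀ k, (σ k).val = if k.val = i.val then δ else if k.val = δ then i.val else k.val := by
      intro k
      rw [hσdef]
      simp only
      rw [apply_ite Fin.val, apply_ite Fin.val, hdval]
    refine ⟨σ, ?_, ?_, hval⟩
    · intro a b hab
      have hv := congrArg Fin.val hab
      rw [hval a, hval b] at hv
      have hia := i.isLt; have haa := a.isLt; have hbb := b.isLt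
      apply Fin.ext
      split_ifs at hv <;> omega
    · have hia := i.isLt
      apply Fin.ext
      rw [hval d, hdval]
      split_ifs <;> omega
  -- Phase 1: join β d to T.erase α₀
  obtain ⟨G₁, hle₁, rtg₁, adj₁⟩ := joinAll (F := FG δ p) G (β d) (T.erase α₀)
    (fun t ht => fun h => hβT d (h ▸ Finset.mem_of_mem_erase ht))
    (by
      intro t ht Gc hle hnadj
      exact master_emb hδ hp Gc T
        (fun u hu w hw hne => adj_mono hle (hT hu hw hne)) hTcard β hβinj hβT
        (fun i j h1 h2 h3 => adj_mono hle (hblock i j h1 h2 h3))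
        α₀ hα₀ (adj_mono hle hatt)
        t (Finset.mem_of_mem_erase ht) (Finset.mem_erase.1 ht).1 hnadj)
  -- Phase 2: join β z to all of T
  obtain ⟨σ₂, hσ₂inj, hσ₂d, hσ₂val⟩ := swpfam z
  have hσ₂z : σ₂ z = d := by
    apply Fin.ext
    rw [hσ₂val z, hdval, if_pos rfl]
  obtain ⟨G₂, hle₂, rtg₂, adj₂⟩ := joinAll (F := FG δ p) G₁ (β z) T
    (fun t ht => fun h => hβT z (h ▸ ht))
    (by
      intro t ht Gc hle hnadj
      obtain ⟨τ, hτ⟩ := erase2_nonempty (by omega : 3 ≤ T.card) α₀ t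
      have hτt : τ ≠ t := (Finset.mem_erase.1 hτ).1
      have hτe : τ ∈ T.erase α₀ := Finset.mem_of_mem_erase hτ
      have hτT : τ ∈ T := Finset.mem_of_mem_erase hτe
      have hble : G₁ ≤ Gc := hle
      have hstep := master_emb hδ hp Gc T
        (fun u hu w hw hne' => adj_mono (hle₁.trans hle) (hT hu hw hne')) hTcard
        (fun k => β (σ₂ k)) (hβinj.comp hσ₂inj)
        (fun i => hβT (σ₂ i))
        (by
          intro i j h1 h2 h3
          refine adj_mono (hle₁.trans hle) (hblock (σ₂ i) (σ₂ j)
            (fun hh => h1 (hσ₂inj hh)) ?_ ?_)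
          · rw [hσ₂val i, hσ₂val j, hzval]
            have := i.isLt; have := j.isLt
            have h1' : i.val ≠ j.val := fun hh => h1 (Fin.ext hh)
            split_ifs <;> omega
          · rw [hσ₂val i, hσ₂val j, hzval]
            have := i.isLt; have := j.isLt
            have h1' : i.val ≠ j.val := fun hh => h1 (Fin.ext hh)
            split_ifs <;> omega)
        τ hτT
        (by
          show Gc.Adj (β (σ₂ ⟨0, by omega⟩)) τ
          have : σ₂ (⟨0, by omega⟩ : Fin (δ+1)) = d := hσ₂z
          rw [this]
          exact adj_mono hle (adj₁ τ hτe))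
        t ht hτt.symm
        (by
          show ¬ Gc.Adj (β (σ₂ ⟨δ, by omega⟩)) t
          have : σ₂ (⟨δ, by omega⟩ : Fin (δ+1)) = z := hσ₂d
          rw [this]
          exact hnadj)
      have hrw : β (σ₂ ⟨δ, by omega⟩) = β z := congrArg β hσ₂d
      rw [← hrw]
      exact hstep)
  -- Phase 2.5 : join β d to {α₀}
  obtain ⟨G₃, hle₃, rtg₃, adj₃⟩ := joinAll (F := FG δ p) G₂ (β d) {α₀}
    (by
      intro t ht h
      rw [Finset.mem_singleton] at ht
      exact hβT d (h ▸ (ht ▸ hα₀)))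
    (by
      intro t ht Gc hle hnadj
      rw [Finset.mem_singleton] at ht
      rw [ht] at hnadj ⊢
      obtain ⟨τ, hτ⟩ := erase2_nonempty (by omega : 3 ≤ T.card) α₀ α₀
      have hτα : τ ≠ α₀ := (Finset.mem_erase.1 (Finset.mem_of_mem_erase hτ)).1
      have hτT : τ ∈ T := Finset.mem_of_mem_erase (Finset.mem_of_mem_erase hτ)
      exact master_emb hδ hp Gc T
        (fun u hu w hw hne' => adj_mono (hle₁.trans (hle₂.trans hle)) (hT hu hw hne')) hTcard
        β hβinj hβT
        (fun i j h1 h2 h3 => adj_mono (hle₁.trans (hle₂.trans hle)) (hblock i j h1 h2 h3))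
        τ hτT (adj_mono hle (adj₂ τ hτT))
        α₀ hα₀ hτα.symm hnadj)
  have adjdα : G₃.Adj (β d) α₀ := adj₃ α₀ (Finset.mem_singleton_self _)
  have adjdT : ∀ τ ∈ T, G₃.Adj (β d) τ := by
    intro τ hτ
    by_cases h : τ = α₀
    · rw [h]; exact adjdα
    · exact adj_mono hle₃ (adj_mono hle₂ (adj₁ τ (Finset.mem_erase.2 ⟨h, hτ⟩)))
  have adjzT : ∀ τ ∈ T, G₃.Adj (β z) τ := fun τ hτ => adj_mono hle₃ (adj₂ τ hτ)
  -- Phase 3 : the edge (β z, β d)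
  obtain ⟨G₄, hle₄, rtg₄, adjzd⟩ : ∃ G₄, G₃ ≤ G₄ ∧
      Relation.ReflTransGen (BootStep (FG δ p)) G₃ G₄ ∧ G₄.Adj (β z) (β d) := by
    by_cases h : G₃.Adj (β z) (β d)
    · exact ⟨G₃, le_rfl, Relation.ReflTransGen.refl, h⟩
    · refine ⟨G₃ ⊔ fromEdgeSet {s(β z, β d)}, le_sup_left, Relation.ReflTransGen.single ?_,
        new_edge_adj hβzd⟩
      exact embPair hδ hp G₃ T
        (fun u hu w hw hne' => adj_mono (hle₁.trans (hle₂.trans hle₃)) (hT hu hw hne'))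
        (by omega) (β z) (β d) (hβT z) (hβT d) adjzT adjdT hβzd h
  have allPairs : ∀ a b : Fin (δ+1), a ≠ b → G₄.Adj (β a) (β b) := by
    intro a b hab
    by_cases h1 : a.val = 0 ∧ b.val = δ
    · have ha : a = z := Fin.ext (by rw [hzval]; exact h1.1)
      have hb : b = d := Fin.ext (by rw [hdval]; exact h1.2)
      rw [ha, hb]; exact adjzd
    · by_cases h2 : b.val = 0 ∧ a.val = δ
      · have ha : a = d := Fin.ext (by rw [hdval]; exact h2.2)
        have hb : b = z := Fin.ext (by rw [hzval]; exact h2.1)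
        rw [ha, hb]; exact adjzd.symm
      · exact adj_mono (hle₁.trans (hle₂.trans (hle₃.trans hle₄))) (hblock a b hab h1 h2)
  have adjzT4 : ∀ τ ∈ T, G₄.Adj (β z) τ := fun τ hτ => adj_mono hle₄ (adjzT τ hτ)
  have adjdT4 : ∀ τ ∈ T, G₄.Adj (β d) τ := fun τ hτ => adj_mono hle₄ (adjdT τ hτ)
  -- Phase 4 : join every β i to all of T
  have loop : ∀ J : Finset (Fin (δ+1)), ∃ G', G₄ ≤ G' ∧
      Relation.ReflTransGen (BootStep (FG δ p)) G₄ G' ∧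
      ∀ i ∈ J, ∀ τ ∈ T, G'.Adj (β i) τ := by
    intro J
    induction J using Finset.induction_on with
    | empty => exact ⟨G₄, le_rfl, Relation.ReflTransGen.refl, by simp⟩
    | @insert i J' hiJ ih =>
      obtain ⟨G', hle', rtg', hadj'⟩ := ih
      obtain ⟨σ, hσinj, hσd, hσval⟩ := swpfam i
      have hσz : (σ z).val = if i.val = 0 then δ else 0 := by
        rw [hσval z]
        have := i.isLt
        rw [hzval]
        split_ifs <;> omega
      obtain ⟨G'', hle'', rtg'', hadj''⟩ := joinAll (F := FG δ p) G' (β i) T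
        (fun t ht => fun h => hβT i (h ▸ ht))
        (by
          intro t ht Gc hle hnadj
          obtain ⟨τ, hτ⟩ := erase2_nonempty (by omega : 3 ≤ T.card) t t
          have hτt : τ ≠ t := (Finset.mem_erase.1 hτ).1
          have hτT : τ ∈ T := Finset.mem_of_mem_erase (Finset.mem_of_mem_erase hτ)
          have hGle : G₄ ≤ Gc := hle'.trans hle
          have hadjστ : Gc.Adj (β (σ z)) τ := by
            by_cases h0 : i.val = 0
            · have : σ z = d := Fin.ext (by rw [hσz, if_pos h0, hdval])
              rw [this]
              exact adj_mono hGle (adjdT4 τ hτT)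
            · have : σ z = z := Fin.ext (by rw [hσz, if_neg h0, hzval])
              rw [this]
              exact adj_mono hGle (adjzT4 τ hτT)
          have hstep := master_emb hδ hp Gc T
            (fun u hu w hw hne' =>
              adj_mono (((hle₁.trans (hle₂.trans (hle₃.trans hle₄))).trans hle').trans hle)
                (hT hu hw hne')) hTcard
            (fun k => β (σ k)) (hβinj.comp hσinj)
            (fun k => hβT (σ k))
            (fun k l h1 _ _ =>
              adj_mono hGle (allPairs (σ k) (σ l) (fun hh => h1 (hσinj hh))))
            τ hτT hadjστ
            t ht hτt.symm
            (by
              show ¬ Gc.Adj (β (σ ⟨δ, by omega⟩)) t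
              have : σ (⟨δ, by omega⟩ : Fin (δ+1)) = i := hσd
              rw [this]
              exact hnadj)
          have hrw : β (σ ⟨δ, by omega⟩) = β i := congrArg β hσd
          rw [← hrw]
          exact hstep)
      refine ⟨G'', hle'.trans hle'', rtg'.trans rtg'', ?_⟩
      intro i' hi' τ hτ
      rcases Finset.mem_insert.1 hi' with rfl | hi'
      · exact hadj'' τ hτ
      · exact adj_mono hle'' (hadj' i' hi' τ hτ)
  obtain ⟨G₅, hle₅, rtg₅, adj₅⟩ := loop Finset.univ
  refine ⟨G₅, ?_, ?_, ?_, ?_⟩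
  · exact hle₁.trans (hle₂.trans (hle₃.trans (hle₄.trans hle₅)))
  · exact rtg₁.trans (rtg₂.trans (rtg₃.trans (rtg₄.trans rtg₅)))
  · intro i τ hτ
    exact adj₅ i (Finset.mem_univ i) τ hτ
  · intro i j hij
    exact adj_mono hle₅ (allPairs i j hij)

lemma card_filter_val_lt (n c : ℕ) (h : c ≤ n) :
    ((Finset.univ : Finset (Fin n)).filter (fun v => v.val < c)).card = c := by
  have heq : (Finset.univ : Finset (Fin n)).filter (fun v => v.val < c) =
      (Finset.range c).attachFin (fun m hm => lt_of_lt_of_le (Finset.mem_range.1 hm) h) := by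
    ext v
    simp [Finset.mem_attachFin, Finset.mem_range, Finset.mem_filter]
  rw [heq, Finset.card_attachFin, Finset.card_range]

lemma wsat_main (hδ : 2 ≤ δ) (hp : δ+2 ≤ p) (hn : δ+p+3 ≤ n) :
    ∃ Hh : SimpleGraph (Fin n),
      Relation.ReflTransGen (BootStep (FG δ p)) Hh ⊤ ∧
      2 * Hh.edgeSet.ncard ≤ 2*(δ+p+3+δ)*(δ+p+3+δ) + δ * n := by
  classical
  set ab := δ+p+3 with hab
  set r := (n - ab) % (δ+1) with hr
  set a := ab + r with ha
  set N := (n - ab) / (δ+1) with hN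
  have har : r < δ+1 := Nat.mod_lt _ (by omega)
  have hna : a + N*(δ+1) = n := by
    have h1 := Nat.mod_add_div (n - ab) (δ+1)
    rw [← hN, ← hr] at h1
    have h2 : (δ+1) * N = N * (δ+1) := Nat.mul_comm _ _
    omega
  have han : a ≤ n := by omega
  have h0n : 0 < n := by omega
  -- block vertex map
  set βc : ℕ → Fin (δ+1) → Fin n :=
    fun b j => ⟨min (a + b*(δ+1) + j.val) (n-1), by omega⟩ with hβc
  have hmul : ∀ b, b < N → b*(δ+1) + (δ+1) ≤ N*(δ+1) := by
    intro b hb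
    have h1 : (b+1)*(δ+1) ≤ N*(δ+1) := Nat.mul_le_mul_right _ hb
    have h2 : (b+1)*(δ+1) = b*(δ+1) + (δ+1) := by ring
    omega
  have hβval : ∀ b (j : Fin (δ+1)), b < N → (βc b j).val = a + b*(δ+1) + j.val := by
    intro b j hb
    have h1 := hmul b hb
    have h2 := j.isLt
    show min (a + b*(δ+1) + j.val) (n-1) = _
    omega
  set zz : Fin (δ+1) := ⟨0, by omega⟩ with hzz
  set dd : Fin (δ+1) := ⟨δ, by omega⟩ with hdd
  set α₀ : Fin n := ⟨0, h0n⟩ with hα₀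
  set Av : Finset (Fin n) := Finset.univ.filter (fun v => v.val < a) with hAv
  set EA : Finset (Sym2 (Fin n)) := (Av ×ˢ Av).image (fun q => s(q.1, q.2)) with hEA
  set Eb : ℕ → Finset (Sym2 (Fin n)) := fun b =>
    (((⊤ : SimpleGraph (Fin (δ+1))).edgeFinset.erase s(zz, dd)).image (Sym2.map (βc b))) ∪
      {s(βc b zz, α₀)} with hEb
  set EH : Finset (Sym2 (Fin n)) := EA ∪ (Finset.range N).biUnion Eb with hEH
  set Hg : SimpleGraph (Fin n) := fromEdgeSet ↑EH with hHg
  -- basic adjacency facts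
  have hHadj : ∀ {u v : Fin n}, s(u,v) ∈ EH → u ≠ v → Hg.Adj u v := by
    intro u v hm hne
    rw [hHg, fromEdgeSet_adj]
    exact ⟨hm, hne⟩
  have hAclique : ∀ ⦃u : Fin n⦄, u ∈ Av → ∀ ⦃w : Fin n⦄, w ∈ Av → u ≠ w → Hg.Adj u w := by
    intro u hu w hw hne
    apply hHadj _ hne
    rw [hEH]
    apply Finset.mem_union_left
    rw [hEA]
    exact Finset.mem_image.2 ⟨(u, w), Finset.mem_product.2 ⟨hu, hw⟩, rfl⟩
  have hblockmem : ∀ b, b < N → ∀ i j : Fin (δ+1), i ≠ j →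
      ¬(i.val = 0 ∧ j.val = δ) → ¬(j.val = 0 ∧ i.val = δ) → Hg.Adj (βc b i) (βc b j) := by
    intro b hb i j hij h1 h2
    have hne : βc b i ≠ βc b j := by
      intro hh
      apply hij
      have := congrArg Fin.val hh
      rw [hβval b i hb, hβval b j hb] at this
      exact Fin.ext (by omega)
    apply hHadj _ hne
    rw [hEH]
    apply Finset.mem_union_right
    apply Finset.mem_biUnion.2 ⟨b, Finset.mem_range.2 hb, ?_⟩
    rw [hEb]
    apply Finset.mem_union_left
    apply Finset.mem_image.2 ⟨s(i,j), ?_, Sym2.map_pair_eq _ _ _⟩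
    apply Finset.mem_erase.2 ⟨?_, ?_⟩
    · intro heq
      rw [Sym2.eq_iff] at heq
      rcases heq with ⟨hiz, hjd⟩ | ⟨hid, hjz⟩
      · exact h1 ⟨by rw [hiz], by rw [hjd]⟩
      · exact h2 ⟨by rw [hjz], by rw [hid]⟩
    · rw [SimpleGraph.mem_edgeFinset, SimpleGraph.mem_edgeSet]
      exact hij
  have hattmem : ∀ b, b < N → Hg.Adj (βc b zz) α₀ := by
    intro b hb
    have hne : βc b zz ≠ α₀ := by
      intro hh
      have := congrArg Fin.val hh
      rw [hβval b zz hb] at this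
      rw [hα₀] at this
      simp only at this
      omega
    apply hHadj _ hne
    rw [hEH]
    apply Finset.mem_union_right
    apply Finset.mem_biUnion.2 ⟨b, Finset.mem_range.2 hb, ?_⟩
    rw [hEb]
    apply Finset.mem_union_right
    exact Finset.mem_singleton_self _
  -- the growing clique sets
  set Tset : ℕ → Finset (Fin n) :=
    fun k => Finset.univ.filter (fun v => v.val < a + k*(δ+1)) with hTset
  have hTcard : ∀ k, k ≤ N → (Tset k).card = a + k*(δ+1) := by
    intro k hk
    rw [hTset]
    apply card_filter_val_lt
    have h1 : k*(δ+1) ≤ N*(δ+1) := Nat.mul_le_mul_right _ hk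
    omega
  have hα₀T : ∀ k, α₀ ∈ Tset k := by
    intro k
    rw [hTset]; simp only [Finset.mem_filter, Finset.mem_univ, true_and, hα₀]
    omega
  -- outer induction
  have outer : ∀ k, k ≤ N → ∃ G', Hg ≤ G' ∧
      Relation.ReflTransGen (BootStep (FG δ p)) Hg G' ∧
      (∀ ⦃u⦄, u ∈ Tset k → ∀ ⦃w⦄, w ∈ Tset k → u ≠ w → G'.Adj u w) := by
    intro k
    induction k with
    | zero =>
      intro _
      refine ⟨Hg, le_rfl, Relation.ReflTransGen.refl, ?_⟩
      intro u hu w hw hne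
      apply hAclique _ _ hne
      · rw [hAv]
        rw [hTset] at hu
        simp only [Finset.mem_filter, Finset.mem_univ, true_and] at hu ⊢
        omega
      · rw [hAv]
        rw [hTset] at hw
        simp only [Finset.mem_filter, Finset.mem_univ, true_and] at hw ⊢
        omega
    | succ k ih =>
      intro hk1
      have hk : k < N := hk1
      obtain ⟨G', hle', rtg', hclique'⟩ := ih (by omega)
      have hcard' : δ+1+p+2 ≤ (Tset k).card := by
        rw [hTcard k (by omega)]
        omega
      have hmemT : ∀ v : Fin n, v ∈ Tset k ↔ v.val < a + k*(δ+1) := by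
        intro v
        rw [hTset]
        simp only [Finset.mem_filter, Finset.mem_univ, true_and]
      obtain ⟨G'', hle'', rtg'', hadjT, hadjB⟩ := blockChain hδ hp G' (Tset k)
        hclique' hcard' α₀ (hα₀T k) (βc k)
        (by
          intro i j hij
          have := congrArg Fin.val hij
          rw [hβval k i hk, hβval k j hk] at this
          exact Fin.ext (by omega))
        (by
          intro i
          rw [hmemT, hβval k i hk]
          omega)
        (fun i j h1 h2 h3 => adj_mono hle' (hblockmem k hk i j h1 h2 h3))
        (adj_mono hle' (hattmem k hk))
      refine ⟨G'', hle'.trans hle'', rtg'.trans rtg'', ?_⟩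
      have hsplit : ∀ v : Fin n, v ∈ Tset (k+1) →
          v ∈ Tset k ∨ ∃ j : Fin (δ+1), v = βc k j := by
        intro v hv
        rw [hTset] at hv
        simp only [Finset.mem_filter, Finset.mem_univ, true_and] at hv
        by_cases hc : v.val < a + k*(δ+1)
        · left; rw [hmemT]; exact hc
        · right
          have hkk : k*(δ+1) + (δ+1) = (k+1)*(δ+1) := by ring
          refine ⟨⟨v.val - (a + k*(δ+1)), by omega⟩, ?_⟩
          apply Fin.ext
          rw [hβval k _ hk]
          simp only
          omega
      intro u hu w hw hne
      rcases hsplit u hu with huT | ⟨ju, rfl⟩ <;> rcases hsplit w hw with hwT | ⟨jw, rfl⟩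
      · exact adj_mono hle'' (hclique' huT hwT hne)
      · exact (hadjT jw u huT).symm
      · exact hadjT ju w hwT
      · refine hadjB ju jw ?_
        intro hh
        exact hne (by rw [hh])
  -- conclusion: the full graph
  obtain ⟨Gf, hlef, rtgf, hcf⟩ := outer N le_rfl
  have hTN : ∀ v : Fin n, v ∈ Tset N := by
    intro v
    rw [hTset]
    simp only [Finset.mem_filter, Finset.mem_univ, true_and]
    have := v.isLt
    omega
  have hGf : Gf = ⊤ := by
    ext u v
    rw [SimpleGraph.top_adj]
    constructor
    · exact fun h => h.ne
    · exact fun h => hcf (hTN u) (hTN v) h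
  refine ⟨Hg, hGf ▸ rtgf, ?_⟩
  -- edge counting
  have hEAcard : EA.card ≤ a * a := by
    calc EA.card ≤ (Av ×ˢ Av).card := Finset.card_image_le
      _ = Av.card * Av.card := Finset.card_product _ _
      _ = a * a := by
          rw [hAv, card_filter_val_lt n a han]
  have hEbcard : ∀ b ∈ Finset.range N, (Eb b).card ≤ (δ+1).choose 2 := by
    intro b _
    rw [hEb]
    refine le_trans (Finset.card_union_le _ _) ?_
    have h1 : ((⊤ : SimpleGraph (Fin (δ+1))).edgeFinset.erase s(zz, dd)).card =
        (δ+1).choose 2 - 1 := by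
      rw [Finset.card_erase_of_mem, SimpleGraph.card_edgeFinset_top_eq_card_choose_two,
        Fintype.card_fin]
      rw [SimpleGraph.mem_edgeFinset, SimpleGraph.mem_edgeSet]
      show zz ≠ dd
      rw [hzz, hdd]
      simp only [Ne, Fin.ext_iff]
      omega
    have h2 : 1 ≤ (δ+1).choose 2 := Nat.choose_pos (by omega)
    calc _ ≤ ((δ+1).choose 2 - 1) + 1 := by
          refine Nat.add_le_add ?_ (by simp)
          refine le_trans Finset.card_image_le ?_
          rw [h1]
      _ ≤ _ := by omega
  have hEHcard : EH.card ≤ a*a + N * ((δ+1).choose 2) := by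
    rw [hEH]
    refine le_trans (Finset.card_union_le _ _) ?_
    have h2 := Finset.card_biUnion_le_card_mul (Finset.range N) Eb _ hEbcard
    rw [Finset.card_range] at h2
    omega
  have hnc : Hg.edgeSet.ncard ≤ EH.card := by
    rw [hHg, edgeSet_fromEdgeSet]
    calc (↑EH \ {e : Sym2 (Fin n) | e.IsDiag}).ncard ≤ (↑EH : Set (Sym2 (Fin n))).ncard :=
          Set.ncard_le_ncard Set.diff_subset (Set.toFinite _)
      _ = EH.card := Set.ncard_coe_finset _
  have hchoose2 : 2 * ((δ+1).choose 2) = (δ+1)*δ := by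
    rw [Nat.choose_two_right]
    simp only [Nat.add_sub_cancel]
    have he : Even ((δ+1)*δ) := by
      rcases Nat.even_or_odd δ with h | h
      · exact (Nat.even_mul).2 (Or.inr h)
      · exact (Nat.even_mul).2 (Or.inl (by
          rcases h with ⟨m, hm⟩
          exact ⟨m+1, by omega⟩))
    obtain ⟨m, hm⟩ := he
    rw [hm]
    omega
  have hbig : 2 * (N * ((δ+1).choose 2)) = (n - a) * δ := by
    have h1 : 2 * (N * ((δ+1).choose 2)) = N * (2 * ((δ+1).choose 2)) := by ring
    rw [h1, hchoose2]
    have h2 : N * ((δ+1)*δ) = (N*(δ+1))*δ := by ring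
    rw [h2]
    congr 1
    omega
  have haa : a ≤ ab + δ := by omega
  calc 2 * Hg.edgeSet.ncard ≤ 2 * (a*a + N * ((δ+1).choose 2)) := by
        have := le_trans hnc hEHcard
        omega
    _ = 2*(a*a) + 2*(N * ((δ+1).choose 2)) := by ring
    _ = 2*(a*a) + (n-a)*δ := by rw [hbig]
    _ ≤ 2*((ab+δ)*(ab+δ)) + n*δ := by
        have h1 : a*a ≤ (ab+δ)*(ab+δ) := Nat.mul_le_mul haa haa
        have h2 : (n-a)*δ ≤ n*δ := Nat.mul_le_mul_right _ (by omega)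
        omega
    _ = 2*(δ+p+3+δ)*(δ+p+3+δ) + δ * n := by rw [hab]; ring

lemma top_ncard_le (n : ℕ) : (⊤ : SimpleGraph (Fin n)).edgeSet.ncard ≤ n * n := by
  classical
  have h1 : (⊤ : SimpleGraph (Fin n)).edgeSet.ncard =
      (⊤ : SimpleGraph (Fin n)).edgeFinset.card := by
    rw [← SimpleGraph.coe_edgeFinset, Set.ncard_coe_finset]
  rw [h1]
  calc (⊤ : SimpleGraph (Fin n)).edgeFinset.card ≤ (Fintype.card (Fin n)).choose 2 :=
        SimpleGraph.card_edgeFinset_le_card_choose_two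
    _ = n.choose 2 := by rw [Fintype.card_fin]
    _ ≤ n * n := by
        rw [Nat.choose_two_right]
        calc n * (n-1) / 2 ≤ n * (n-1) := Nat.div_le_self _ _
          _ ≤ n * n := Nat.mul_le_mul_left _ (by omega)

lemma half_bound (w k c : ℕ) (h : 2*w ≤ k + 2*c) : (w:ℝ) ≤ (k:ℝ)/2 + (c:ℝ) := by
  have h2 := (Nat.cast_le (α := ℝ)).2 h
  push_cast at h2
  linarith

end
end WS

/-- For every `δ ≥ 2` and every `x`, there is a 2-edge-connected graph `F`
with minimum degree `δ` and at least `x` vertices, and `C > 0`, with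
`wsat(n,F) ≤ (δ/2)·n + C` for all `n ≥ |V(F)|`. -/
theorem wsat_upper_bound_optimal_two_edge_connected (δ x : ℕ) (hδ : 2 ≤ δ) :
    ∃ (m : ℕ) (F : SimpleGraph (Fin m)),
      TwoEdgeConnected F ∧
      (∀ a, δ ≤ (F.neighborSet a).ncard) ∧
      (∃ a, (F.neighborSet a).ncard = δ) ∧
      x ≤ m ∧
      ∃ C : ℝ, 0 < C ∧ ∀ n : ℕ, m ≤ n →
        (wsat F n : ℝ) ≤ ((δ : ℝ) / 2) * (n : ℝ) + C := by

  classical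
  set p := max x (δ+2) with hpdef
  have hp : δ+2 ≤ p := le_max_right _ _
  have hx : x ≤ p := le_max_left _ _
  refine ⟨δ+1+p, WS.FG δ p, WS.FG_two_edge_connected hδ hp, WS.FG_min_degree hδ hp,
    ⟨⟨1, by omega⟩, WS.FG_exact_degree hδ hp _ rfl⟩, by omega, ?_⟩
  set ab := δ+p+3 with hab
  set K := 2*((ab+δ)*(ab+δ)) + ab*ab + 1 with hK
  refine ⟨(K : ℝ), by
    have : (0:ℕ) < K := by rw [hK]; omega
    exact_mod_cast this, ?_⟩
  intro n hn
  by_cases hcase : ab ≤ n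
  · obtain ⟨Hh, hws, hcount⟩ := WS.wsat_main hδ hp hcase
    have h1 : wsat (WS.FG δ p) n ≤ Hh.edgeSet.ncard :=
      Nat.sInf_le ⟨Hh, hws, rfl⟩
    have hb : 2*(δ+p+3+δ)*(δ+p+3+δ) = 2*((ab+δ)*(ab+δ)) := by rw [hab]; ring
    have h2 : 2 * wsat (WS.FG δ p) n ≤ δ * n + 2 * K := by
      rw [hb] at hcount
      rw [hK]
      omega
    have h3 := WS.half_bound _ _ _ h2
    have h4 : ((δ * n : ℕ) : ℝ) / 2 = (δ:ℝ)/2 * (n:ℝ) := by push_cast; ring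
    rw [h4] at h3
    exact h3
  · have h1 : wsat (WS.FG δ p) n ≤ n * n := by
      refine le_trans (Nat.sInf_le ⟨⊤, Relation.ReflTransGen.refl, rfl⟩) ?_
      exact WS.top_ncard_le n
    have h2 : n * n ≤ K := by
      have hnn : n * n ≤ ab * ab := Nat.mul_le_mul (by omega) (by omega)
      rw [hK]
      omega
    have h4 : ((wsat (WS.FG δ p) n : ℕ) : ℝ) ≤ ((K : ℕ) : ℝ) := Nat.cast_le.2 (le_trans h1 h2)
    have h5 : (0:ℝ) ≤ (δ : ℝ) / 2 * (n : ℝ) := by positivity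
    linarith
end
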